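/- arXiv:1309.3916 — 11 statements merged into one kernel-verified Lean document; each statement's English description precedes it below -/
import Mathlib

section
/- Let ν : [0,∞)×[0,1] → [0,∞) be a jointly continuous redistribution density (so ∫₀¹ ν(s,ε) dε = 1 for every s ≥ 0), and let μ be a continuous, strictly positive probability density on [0,∞). If the product measure μ(x)μ(y)dxdy on [0,∞)² is invariant for the one-step redistribution operator P, then for every s > 0 and every a ∈ [0,1] one has ν(s,a) = μ(as)μ((1-a)s) / ∫₀¹ μ(αs)μ((1-α)s) dα. -/
open MeasureTheory Set intervalIntegral

namespace RedistAux

lemma ind_abs_le (S : Set ℝ) (x : ℝ) : |S.indicator (fun _ => (1:ℝ)) x| ≤ 1 := by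
  by_cases h : x ∈ S <;> simp [h]

lemma ind_mul_fun (S : Set ℝ) (g : ℝ → ℝ) (x : ℝ) :
    S.indicator (fun _ => (1:ℝ)) x * g x = S.indicator g x := by
  by_cases h : x ∈ S <;> simp [h]

lemma nonpos_of_intervalIntegral_zero {F : ℝ → ℝ} (hF : Continuous F) {c d : ℝ} (hcd : c < d)
    (h : ∀ u v, c ≤ u → u ≤ v → v ≤ d → ∫ x in u..v, F x = 0) :
    ∀ e ∈ Icc c d, F e ≤ 0 := by
  intro e he
  by_contra hpos
  push_neg at hpos
  obtain ⟨ε, hε, hball⟩ := Metric.isOpen_iff.1 (isOpen_Ioi.preimage hF) e hpos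
  set u := max c (e - ε/2) with hudef
  set v := min d (e + ε/2) with hvdef
  have hcu : c ≤ u := le_max_left _ _
  have hvd : v ≤ d := min_le_left _ _
  have hue : u ≤ e := max_le he.1 (by linarith)
  have hev : e ≤ v := le_min he.2 (by linarith)
  have huv : u < v := by
    rcases lt_or_eq_of_le he.2 with h1 | h1
    · exact lt_of_le_of_lt hue (lt_min h1 (by linarith))
    · have : u < e := max_lt (h1 ▸ hcd) (by linarith)
      exact this.trans_le hev
  have hposOn : ∀ x ∈ Ioo u v, 0 < F x := by
    intro x hx
    have h1 : e - ε/2 ≤ u := le_max_right _ _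
    have h2 : v ≤ e + ε/2 := min_le_right _ _
    have : x ∈ Metric.ball e ε := by
      rw [Real.ball_eq_Ioo]
      exact ⟨by linarith [hx.1], by linarith [hx.2]⟩
    exact hball this
  have hgt := intervalIntegral_pos_of_pos_on (hF.intervalIntegrable u v) hposOn huv
  rw [h u v hcu huv.le hvd] at hgt
  exact lt_irrefl 0 hgt

lemma eq_zero_of_intervalIntegral_zero {F : ℝ → ℝ} (hF : Continuous F) {c d : ℝ} (hcd : c < d)
    (h : ∀ u v, c ≤ u → u ≤ v → v ≤ d → ∫ x in u..v, F x = 0) :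
    ∀ e ∈ Icc c d, F e = 0 := by
  intro e he
  have h1 := nonpos_of_intervalIntegral_zero hF hcd h e he
  have h2 := nonpos_of_intervalIntegral_zero hF.neg hcd (fun u v hu huv hv => by
    simp only [Pi.neg_apply]; rw [intervalIntegral.integral_neg, h u v hu huv hv, neg_zero]) e he
  simp only [Pi.neg_apply, neg_nonpos] at h2
  exact le_antisymm h1 h2

/-- The shear `(x, y) ↦ (x, x + y)` as a measurable equiv. -/
def shearAdd : ℝ × ℝ ≃ᵐ ℝ × ℝ where
  toEquiv :=
    { toFun := fun p => (p.1, p.1 + p.2)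
      invFun := fun p => (p.1, p.2 - p.1)
      left_inv := fun p => by simp
      right_inv := fun p => by simp }
  measurable_toFun := measurable_fst.prodMk (measurable_fst.add measurable_snd)
  measurable_invFun := measurable_fst.prodMk (measurable_snd.sub measurable_fst)

lemma shearAdd_mp : MeasurePreserving shearAdd
    ((volume : Measure ℝ).prod (volume : Measure ℝ)) ((volume : Measure ℝ).prod volume) :=
  measurePreserving_prod_add volume volume

lemma intervalIntegral_indicator_one (g : ℝ → ℝ) {u v : ℝ} (hu : 0 ≤ u) (huv : u ≤ v)
    (hv : v ≤ 1) :
    ∫ e in (0:ℝ)..1, (Ioc u v).indicator (fun _ => (1:ℝ)) e * g e = ∫ e in u..v, g e := by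
  simp only [ind_mul_fun]
  rw [intervalIntegral.integral_of_le zero_le_one, intervalIntegral.integral_of_le huv,
    ← MeasureTheory.integral_indicator measurableSet_Ioc,
    ← MeasureTheory.integral_indicator measurableSet_Ioc (s := Ioc u v),
    Set.indicator_indicator, Set.inter_eq_self_of_subset_right (Ioc_subset_Ioc hu hv)]

lemma conv2 {M : ℝ → ℝ} (hM : Measurable M) (hMi : Integrable M)
    {g : ℝ → ℝ → ℝ} (hg : Measurable fun p : ℝ × ℝ => g p.1 p.2)
    {C : ℝ} (hgb : ∀ s x, |g s x| ≤ C) :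
    ∫ q : ℝ × ℝ, g (q.1 + q.2) q.1 * (M q.1 * M q.2)
      = ∫ s : ℝ, ∫ x : ℝ, g s x * (M x * M (s - x)) := by
  have hvol : (volume : Measure (ℝ × ℝ)) = (volume : Measure ℝ).prod volume :=
    Measure.volume_eq_prod ℝ ℝ
  set F : ℝ × ℝ → ℝ := fun p => g p.2 p.1 * (M p.1 * M (p.2 - p.1)) with hFdef
  have hker : Integrable (fun p : ℝ × ℝ => M p.1 * M (p.2 - p.1))
      ((volume : Measure ℝ).prod volume) := by
    have hbase : Integrable (fun p : ℝ × ℝ => M p.1 * M p.2)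
        ((volume : Measure ℝ).prod volume) := hMi.mul_prod hMi
    have hsymm : MeasurePreserving shearAdd.symm
        ((volume : Measure ℝ).prod volume) ((volume : Measure ℝ).prod volume) :=
      shearAdd_mp.symm shearAdd
    exact (hsymm.integrable_comp_emb shearAdd.symm.measurableEmbedding).2 hbase
  have hFmeas : Measurable F :=
    (hg.comp (measurable_snd.prodMk measurable_fst)).mul
      ((hM.comp measurable_fst).mul (hM.comp (measurable_snd.sub measurable_fst)))
  have hF : Integrable F ((volume : Measure ℝ).prod volume) :=
    hker.bdd_mul (c := |C|) ((hg.comp (measurable_snd.prodMk measurable_fst)).aestronglyMeasurable)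
      (Filter.Eventually.of_forall fun p => by
        simpa [Real.norm_eq_abs] using (hgb p.2 p.1).trans (le_abs_self C))
  calc ∫ q : ℝ × ℝ, g (q.1 + q.2) q.1 * (M q.1 * M q.2)
      = ∫ q : ℝ × ℝ, F (shearAdd q) ∂((volume : Measure ℝ).prod volume) := by
        rw [hvol]
        congr 1
        funext q
        simp [F, shearAdd]
    _ = ∫ p, F p ∂((volume : Measure ℝ).prod volume) :=
        shearAdd_mp.integral_comp shearAdd.measurableEmbedding F
    _ = ∫ x : ℝ, ∫ s : ℝ, F (x, s) := MeasureTheory.integral_prod F hF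
    _ = ∫ s : ℝ, ∫ x : ℝ, g s x * (M x * M (s - x)) := by
        exact MeasureTheory.integral_integral_swap (f := fun x s => g s x * (M x * M (s - x))) hF


end RedistAux


/-- If the product measure `μ(x)μ(y)dxdy` on `[0,∞)²` is invariant for the
one-step redistribution operator `P` of the energy redistribution model with jointly
continuous redistribution density `ν`, then `ν(s,a)` is given by the explicit formula
`μ(as)μ((1-a)s) / ∫₀¹ μ(αs)μ((1-α)s) dα` for every `s > 0` and `a ∈ [0,1]`. -/
theorem product_invariant_implies_redistribution_formula
    (ν : ℝ → ℝ → ℝ) (μ : ℝ → ℝ)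
    (hνcont : ContinuousOn (fun q : ℝ × ℝ => ν q.1 q.2) (Ici 0 ×ˢ Icc 0 1))
    (hνnonneg : ∀ s ∈ Ici (0:ℝ), ∀ a ∈ Icc (0:ℝ) 1, 0 ≤ ν s a)
    (hνprob : ∀ s ∈ Ici (0:ℝ), ∫ e in (0:ℝ)..1, ν s e = 1)
    (hμcont : ContinuousOn μ (Ici 0))
    (hμpos : ∀ x ∈ Ici (0:ℝ), 0 < μ x)
    (hμprob : ∫ x in Ici (0:ℝ), μ x = 1)
    (hinv : ∀ f : ℝ × ℝ → ℝ, Measurable f → (∃ C, ∀ q, |f q| ≤ C) →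
      ∫ q in Ici (0:ℝ) ×ˢ Ici (0:ℝ),
          (∫ e in (0:ℝ)..1,
            f (e * (q.1 + q.2), (1 - e) * (q.1 + q.2)) * ν (q.1 + q.2) e)
            * (μ q.1 * μ q.2)
        = ∫ q in Ici (0:ℝ) ×ˢ Ici (0:ℝ), f q * (μ q.1 * μ q.2)) :
    ∀ s > (0:ℝ), ∀ a ∈ Icc (0:ℝ) 1,
      ν s a = μ (a * s) * μ ((1 - a) * s)
        / ∫ α in (0:ℝ)..1, μ (α * s) * μ ((1 - α) * s) := by
  classical
  open RedistAux in
  -- globalized versions of μ and ν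
  set μ' : ℝ → ℝ := fun x => μ (max x 0) with hμ'def
  have hμ'cont : Continuous μ' :=
    hμcont.comp_continuous (continuous_id.max continuous_const) (fun x => le_max_right x 0)
  have hμ'pos : ∀ x, 0 < μ' x := fun x => hμpos _ (le_max_right x 0)
  have hμ'eq : ∀ x, 0 ≤ x → μ' x = μ x := fun x hx => by
    simp only [hμ'def, max_eq_left hx]
  set ν' : ℝ → ℝ → ℝ := fun s a => ν (max s 0) (max (min a 1) 0) with hν'def
  have hν'cont : Continuous (fun p : ℝ × ℝ => ν' p.1 p.2) := by
    refine hνcont.comp_continuous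
      (((continuous_fst.max continuous_const)).prodMk
        ((continuous_snd.min continuous_const).max continuous_const)) (fun p => ?_)
    exact ⟨(le_max_right _ _ : (0:ℝ) ≤ max p.1 0), (le_max_right _ _ : (0:ℝ) ≤ max (min p.2 1) 0),
      (max_le (min_le_right _ _) zero_le_one : max (min p.2 1) 0 ≤ 1)⟩
  have hν'eq : ∀ s a, 0 ≤ s → a ∈ Icc (0:ℝ) 1 → ν' s a = ν s a := by
    intro s a hs ha
    simp only [hν'def, max_eq_left hs, min_eq_left ha.2, max_eq_left ha.1]
  -- the truncated density M
  set M : ℝ → ℝ := (Ici (0:ℝ)).indicator μ' with hMdef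
  have hM : Measurable M := hμ'cont.measurable.indicator measurableSet_Ici
  have hMeq : ∀ x, 0 ≤ x → M x = μ' x := fun x hx => Set.indicator_of_mem hx _
  have hMz : ∀ x, x < 0 → M x = 0 := fun x hx => Set.indicator_of_notMem (not_le.2 hx) _
  have hMi : Integrable M := by
    have h1 : IntegrableOn μ (Ici (0:ℝ)) := by
      by_contra h
      rw [MeasureTheory.integral_undef h] at hμprob
      norm_num at hμprob
    have h2 : IntegrableOn μ' (Ici (0:ℝ)) :=
      (integrableOn_congr_fun (fun x hx => (hμ'eq x hx)) measurableSet_Ici).2 h1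
    exact (integrable_indicator_iff measurableSet_Ici).2 h2
  -- the normalization function G'
  set G' : ℝ → ℝ := fun s => ∫ a in (0:ℝ)..1, μ' (a * s) * μ' ((1 - a) * s) with hG'def
  have hG'aux : Continuous (fun p : ℝ × ℝ => μ' (p.2 * p.1) * μ' ((1 - p.2) * p.1)) := by
    fun_prop
  have hG'cont : Continuous G' := by
    exact intervalIntegral.continuous_parametric_intervalIntegral_of_continuous'
      (f := fun s a => μ' (a * s) * μ' ((1 - a) * s)) (μ := volume) hG'aux 0 1
  have hG'pos : ∀ s, 0 < G' s := by
    intro s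
    refine intervalIntegral_pos_of_pos ((Continuous.intervalIntegrable (by fun_prop) 0 1)) ?_ one_pos
    exact fun a => mul_pos (hμ'pos _) (hμ'pos _)
  -- scaling substitution
  have hscale : ∀ s : ℝ, 0 < s → ∀ h : ℝ → ℝ, ∫ x, h x = s * ∫ a, h (s * a) := by
    intro s hs h
    rw [MeasureTheory.Measure.integral_comp_mul_left h s, abs_of_pos (inv_pos.2 hs), smul_eq_mul]
    field_simp
  -- the convolution kernel evaluation
  have hK : ∀ s : ℝ, 0 < s → (∫ x : ℝ, M x * M (s - x)) = s * G' s := by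
    intro s hs
    rw [hscale s hs (fun x => M x * M (s - x))]
    congr 1
    have hptw : ∀ a : ℝ, M (s * a) * M (s - s * a)
        = (Icc (0:ℝ) 1).indicator (fun a => μ' (a * s) * μ' ((1 - a) * s)) a := by
      intro a
      by_cases ha : a ∈ Icc (0:ℝ) 1
      · rw [Set.indicator_of_mem ha, hMeq _ (mul_nonneg hs.le ha.1),
          hMeq _ (by nlinarith [ha.1, ha.2] : (0:ℝ) ≤ s - s * a),
          show s - s * a = (1 - a) * s by ring, mul_comm s a]
      · rw [Set.indicator_of_notMem ha]
        rw [Set.mem_Icc, not_and_or] at ha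
        rcases ha with h | h
        · push_neg at h
          rw [hMz (s * a) (mul_neg_of_pos_of_neg hs h), zero_mul]
        · push_neg at h
          rw [hMz (s - s * a) (by nlinarith), mul_zero]
    simp only [hptw]
    rw [MeasureTheory.integral_indicator measurableSet_Icc,
      MeasureTheory.integral_Icc_eq_integral_Ioc,
      ← intervalIntegral.integral_of_le zero_le_one]
  -- the key identity
  have key : ∀ u v : ℝ, 0 ≤ u → u ≤ v → v ≤ 1 → ∀ s : ℝ, 0 < s →
      G' s * (∫ e in u..v, ν' s e) = ∫ e in u..v, μ' (e * s) * μ' ((1 - e) * s) := by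
    intro u v hu huv hv
    set n : ℝ → ℝ := fun s => ∫ e in u..v, ν' s e with hndef
    set m : ℝ → ℝ := fun s => ∫ e in u..v, μ' (e * s) * μ' ((1 - e) * s) with hmdef
    have hncont : Continuous n :=
      intervalIntegral.continuous_parametric_intervalIntegral_of_continuous'
        (f := fun s e => ν' s e) (μ := volume) hν'cont u v
    have hmcont : Continuous m :=
      intervalIntegral.continuous_parametric_intervalIntegral_of_continuous'
        (f := fun s e => μ' (e * s) * μ' ((1 - e) * s)) (μ := volume) (by fun_prop) u v
    have hpq : ∀ p pq : ℝ, 0 < p → p ≤ pq →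
        ∫ x in p..pq, (x * (n x * G' x) - x * m x) = 0 := by
      intro p pq hp hppq
      set f : ℝ × ℝ → ℝ := fun q =>
        (Ioc p pq).indicator (fun _ => (1:ℝ)) (q.1 + q.2) *
          (Ioc u v).indicator (fun _ => (1:ℝ)) (q.1 / (q.1 + q.2)) with hfdef
      have hfm : Measurable f :=
        ((measurable_const.indicator measurableSet_Ioc).comp
            (measurable_fst.add measurable_snd)).mul
          ((measurable_const.indicator measurableSet_Ioc).comp
            (measurable_fst.div (measurable_fst.add measurable_snd)))
      have hfb : ∃ C, ∀ q, |f q| ≤ C := by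
        refine ⟨1, fun q => ?_⟩
        simp only [hfdef]
        exact (abs_mul _ _).le.trans
          (mul_le_one₀ (RedistAux.ind_abs_le _ _) (abs_nonneg _) (RedistAux.ind_abs_le _ _))
      have H := hinv f hfm hfb
      -- Step A : compute the inner interval integral
      have hA : (∫ q in Ici (0:ℝ) ×ˢ Ici (0:ℝ),
            (∫ e in (0:ℝ)..1, f (e * (q.1 + q.2), (1 - e) * (q.1 + q.2)) * ν (q.1 + q.2) e)
              * (μ q.1 * μ q.2))
          = ∫ q in Ici (0:ℝ) ×ˢ Ici (0:ℝ),
            ((Ioc p pq).indicator (fun _ => (1:ℝ)) (q.1 + q.2) * n (q.1 + q.2))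
              * (μ q.1 * μ q.2) := by
        refine MeasureTheory.setIntegral_congr_fun
          (measurableSet_Ici.prod measurableSet_Ici) ?_
        rintro ⟨x, y⟩ ⟨hx, hy⟩
        dsimp only
        congr 1
        by_cases hI : x + y ∈ Ioc p pq
        · have hxy0 : 0 < x + y := hp.trans hI.1
          have h1 : EqOn (fun e => f (e * (x + y), (1 - e) * (x + y)) * ν (x + y) e)
              (fun e => (Ioc u v).indicator (fun _ => (1:ℝ)) e * ν' (x + y) e)
              (uIcc (0:ℝ) 1) := by
            intro e he
            rw [uIcc_of_le zero_le_one] at he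
            simp only [hfdef]
            rw [show e * (x + y) + (1 - e) * (x + y) = x + y by ring,
              show e * (x + y) / (x + y) = e by
                rw [mul_div_assoc, div_self hxy0.ne', mul_one],
              Set.indicator_of_mem hI, one_mul, ← hν'eq _ _ hxy0.le ⟨he.1, he.2⟩]
          rw [intervalIntegral.integral_congr h1,
            RedistAux.intervalIntegral_indicator_one _ hu huv hv,
            Set.indicator_of_mem hI, one_mul, hndef]
        · have h1 : EqOn (fun e => f (e * (x + y), (1 - e) * (x + y)) * ν (x + y) e)
              (fun _ => (0:ℝ)) (uIcc (0:ℝ) 1) := by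
            intro e _
            simp only [hfdef]
            rw [show e * (x + y) + (1 - e) * (x + y) = x + y by ring,
              Set.indicator_of_notMem hI, zero_mul, zero_mul]
          rw [intervalIntegral.integral_congr h1, Set.indicator_of_notMem hI, zero_mul,
            intervalIntegral.integral_zero]
      -- Step B : replace set integrals by integrals against M
      have hB : ∀ g : ℝ × ℝ → ℝ,
          (∫ q in Ici (0:ℝ) ×ˢ Ici (0:ℝ), g q * (μ q.1 * μ q.2))
            = ∫ q : ℝ × ℝ, g q * (M q.1 * M q.2) := by
        intro g
        rw [← MeasureTheory.integral_indicator (measurableSet_Ici.prod measurableSet_Ici)]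
        congr 1
        funext q
        by_cases hq : q ∈ Ici (0:ℝ) ×ˢ Ici (0:ℝ)
        · rw [Set.indicator_of_mem hq, hMeq _ hq.1, hMeq _ hq.2, hμ'eq _ hq.1, hμ'eq _ hq.2]
        · rw [Set.indicator_of_notMem hq]
          rw [Set.mem_prod, not_and_or] at hq
          rcases hq with h | h
          · rw [hMdef, Set.indicator_of_notMem h, zero_mul, mul_zero]
          · rw [hMdef, Set.indicator_of_notMem h, mul_zero, mul_zero]
      -- Step C : Fubini / convolution on both sides
      obtain ⟨Cn, hCn⟩ :=
        (isCompact_Icc (a := p) (b := pq)).exists_bound_of_continuousOn hncont.continuousOn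
      have hg1b : ∀ s x : ℝ, |(Ioc p pq).indicator (fun _ => (1:ℝ)) s * n s| ≤ max Cn 0 := by
        intro s _
        by_cases hsI : s ∈ Ioc p pq
        · rw [Set.indicator_of_mem hsI, one_mul]
          exact le_trans (by simpa [Real.norm_eq_abs] using hCn s ⟨hsI.1.le, hsI.2⟩)
            (le_max_left _ _)
        · rw [Set.indicator_of_notMem hsI, zero_mul, abs_zero]
          exact le_max_right _ _
      have hC1 := RedistAux.conv2 (M := M) hM hMi
        (g := fun s _ => (Ioc p pq).indicator (fun _ => (1:ℝ)) s * n s)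
        (((measurable_const.indicator measurableSet_Ioc).mul hncont.measurable).comp
          measurable_fst)
        (C := max Cn 0) hg1b
      have hC2 := RedistAux.conv2 (M := M) hM hMi
        (g := fun s x => (Ioc p pq).indicator (fun _ => (1:ℝ)) s *
          (Ioc u v).indicator (fun _ => (1:ℝ)) (x / s))
        ((((measurable_const.indicator measurableSet_Ioc)).comp measurable_fst).mul
          (((measurable_const.indicator measurableSet_Ioc)).comp
            (measurable_snd.div measurable_fst)))
        (C := 1)
        (fun s x => (abs_mul _ _).le.trans
          (mul_le_one₀ (RedistAux.ind_abs_le _ _) (abs_nonneg _) (RedistAux.ind_abs_le _ _)))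
      -- Step D : evaluate the inner x-integrals
      have hL : ∀ s : ℝ,
          (∫ x : ℝ, ((Ioc p pq).indicator (fun _ => (1:ℝ)) s * n s) * (M x * M (s - x)))
            = (Ioc p pq).indicator (fun s => s * (n s * G' s)) s := by
        intro s
        rw [MeasureTheory.integral_const_mul]
        by_cases hsI : s ∈ Ioc p pq
        · have hs0 : 0 < s := hp.trans hsI.1
          rw [Set.indicator_of_mem hsI, Set.indicator_of_mem hsI, one_mul, hK s hs0]
          ring
        · rw [Set.indicator_of_notMem hsI, Set.indicator_of_notMem hsI, zero_mul, zero_mul]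
      have hR : ∀ s : ℝ,
          (∫ x : ℝ, ((Ioc p pq).indicator (fun _ => (1:ℝ)) s *
              (Ioc u v).indicator (fun _ => (1:ℝ)) (x / s)) * (M x * M (s - x)))
            = (Ioc p pq).indicator (fun s => s * m s) s := by
        intro s
        by_cases hsI : s ∈ Ioc p pq
        · have hs0 : 0 < s := hp.trans hsI.1
          rw [Set.indicator_of_mem hsI, Set.indicator_of_mem hsI]
          simp only [one_mul]
          rw [hscale s hs0
            (fun x => (Ioc u v).indicator (fun _ => (1:ℝ)) (x / s) * (M x * M (s - x)))]
          congr 1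
          have hptw : ∀ a : ℝ,
              (Ioc u v).indicator (fun _ => (1:ℝ)) ((s * a) / s) * (M (s * a) * M (s - s * a))
                = (Ioc u v).indicator (fun a => μ' (a * s) * μ' ((1 - a) * s)) a := by
            intro a
            rw [mul_div_cancel_left₀ a hs0.ne']
            by_cases ha : a ∈ Ioc u v
            · have h0a : 0 ≤ a := hu.trans ha.1.le
              have ha1 : a ≤ 1 := le_trans ha.2 hv
              rw [Set.indicator_of_mem ha, Set.indicator_of_mem ha, one_mul,
                hMeq _ (mul_nonneg hs0.le h0a),
                hMeq _ (by nlinarith : (0:ℝ) ≤ s - s * a),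
                show s - s * a = (1 - a) * s by ring, mul_comm s a]
            · rw [Set.indicator_of_notMem ha, Set.indicator_of_notMem ha, zero_mul]
          simp only [hptw]
          rw [MeasureTheory.integral_indicator measurableSet_Ioc,
            ← intervalIntegral.integral_of_le huv, hmdef]
        · rw [Set.indicator_of_notMem hsI, Set.indicator_of_notMem hsI]
          simp
      -- Step E : assemble
      have hfinal : (∫ x : ℝ, (Ioc p pq).indicator (fun s => s * (n s * G' s)) x)
          = ∫ x : ℝ, (Ioc p pq).indicator (fun s => s * m s) x := by
        calc (∫ x : ℝ, (Ioc p pq).indicator (fun s => s * (n s * G' s)) x)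
            = ∫ s : ℝ, ∫ x : ℝ,
                ((Ioc p pq).indicator (fun _ => (1:ℝ)) s * n s) * (M x * M (s - x)) := by
              congr 1; funext s; exact (hL s).symm
          _ = ∫ q : ℝ × ℝ,
                ((Ioc p pq).indicator (fun _ => (1:ℝ)) (q.1 + q.2) * n (q.1 + q.2))
                  * (M q.1 * M q.2) := hC1.symm
          _ = ∫ q in Ici (0:ℝ) ×ˢ Ici (0:ℝ),
                ((Ioc p pq).indicator (fun _ => (1:ℝ)) (q.1 + q.2) * n (q.1 + q.2))
                  * (μ q.1 * μ q.2) := (hB _).symm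
          _ = ∫ q in Ici (0:ℝ) ×ˢ Ici (0:ℝ),
                (∫ e in (0:ℝ)..1, f (e * (q.1 + q.2), (1 - e) * (q.1 + q.2))
                  * ν (q.1 + q.2) e) * (μ q.1 * μ q.2) := hA.symm
          _ = ∫ q in Ici (0:ℝ) ×ˢ Ici (0:ℝ), f q * (μ q.1 * μ q.2) := H
          _ = ∫ q : ℝ × ℝ, f q * (M q.1 * M q.2) := hB f
          _ = ∫ s : ℝ, ∫ x : ℝ,
                ((Ioc p pq).indicator (fun _ => (1:ℝ)) s *
                  (Ioc u v).indicator (fun _ => (1:ℝ)) (x / s)) * (M x * M (s - x)) := hC2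
          _ = ∫ x : ℝ, (Ioc p pq).indicator (fun s => s * m s) x := by
              congr 1; funext s; exact hR s
      rw [MeasureTheory.integral_indicator measurableSet_Ioc,
        MeasureTheory.integral_indicator measurableSet_Ioc,
        ← intervalIntegral.integral_of_le hppq, ← intervalIntegral.integral_of_le hppq]
        at hfinal
      rw [intervalIntegral.integral_sub (f := fun x => x * (n x * G' x)) (g := fun x => x * m x)
        ((continuous_id'.mul (hncont.mul hG'cont)).intervalIntegrable p pq)
        ((continuous_id'.mul hmcont).intervalIntegrable p pq), hfinal, sub_self]
    intro s hs
    have hcont : Continuous fun x : ℝ => x * (n x * G' x) - x * m x :=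
      (continuous_id'.mul (hncont.mul hG'cont)).sub (continuous_id'.mul hmcont)
    have hz := RedistAux.eq_zero_of_intervalIntegral_zero hcont
      (show s / 2 < s + 1 by linarith)
      (fun u' v' hu' hu'v' _ => hpq u' v' (by linarith) hu'v') s ⟨by linarith, by linarith⟩
    have h3 := mul_left_cancel₀ hs.ne' (sub_eq_zero.1 hz)
    rw [mul_comm] at h3
    exact h3
  -- conclude
  intro s hs a ha
  have hνe : Continuous fun e : ℝ => ν' s e := hν'cont.comp (Continuous.prodMk_right s)
  have hμe : Continuous fun e : ℝ => μ' (e * s) * μ' ((1 - e) * s) := by fun_prop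
  have hψcont : Continuous fun e : ℝ => G' s * ν' s e - μ' (e * s) * μ' ((1 - e) * s) :=
    (continuous_const.mul hνe).sub hμe
  have hψ : ∀ u v : ℝ, 0 ≤ u → u ≤ v → v ≤ 1 →
      ∫ e in u..v, (G' s * ν' s e - μ' (e * s) * μ' ((1 - e) * s)) = 0 := by
    intro u v hu huv hv
    rw [intervalIntegral.integral_sub (f := fun e => G' s * ν' s e)
      (g := fun e => μ' (e * s) * μ' ((1 - e) * s)) ((continuous_const.mul hνe).intervalIntegrable u v)
      (hμe.intervalIntegrable u v), intervalIntegral.integral_const_mul,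
      key u v hu huv hv s hs, sub_self]
  have hzero := RedistAux.eq_zero_of_intervalIntegral_zero hψcont zero_lt_one hψ a ha
  have h1 := sub_eq_zero.1 hzero
  rw [hν'eq s a hs.le ha, hμ'eq _ (mul_nonneg ha.1 hs.le),
    hμ'eq _ (mul_nonneg (by linarith [ha.2]) hs.le)] at h1
  have hden : (∫ α in (0:ℝ)..1, μ (α * s) * μ ((1 - α) * s)) = G' s := by
    simp only [hG'def]
    refine intervalIntegral.integral_congr ?_
    intro α hα
    rw [uIcc_of_le zero_le_one] at hα
    dsimp only
    rw [hμ'eq _ (mul_nonneg hα.1 hs.le), hμ'eq _ (mul_nonneg (by linarith [hα.2]) hs.le)]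
  rw [hden, eq_div_iff (hG'pos s).ne']
  linear_combination h1
end

section
/- Let μ be a continuous, strictly positive probability density on [0,∞) such that 0 < ∫₀¹ μ(αs)μ((1-α)s) dα < ∞ for every s > 0, and define ν(s,a) = μ(as)μ((1-a)s) / ∫₀¹ μ(αs)μ((1-α)s) dα. Then the product measure μ(x)μ(y)dxdy is reversible for the one-step redistribution operator P, i.e. ∫∫ Pf(x,y) g(x,y) μ(x)μ(y) dx dy = ∫∫ f(x,y) Pg(x,y) μ(x)μ(y) dx dy for all bounded measurable f, g : [0,∞)² → ℝ; in particular (taking g ≡ 1) μ(x)μ(y)dxdy is invariant for P. -/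
open MeasureTheory Set

noncomputable def nuF (μ : ℝ → ℝ) (s a : ℝ) : ℝ :=
  μ (a * s) * μ ((1 - a) * s) / ∫ α in (0:ℝ)..1, μ (α * s) * μ ((1 - α) * s)

section aux
variable {μ : ℝ → ℝ}

/-- the shear `(x,y) ↦ (x, x+y)` as a measurable equiv -/
def shearEquiv : (ℝ × ℝ) ≃ᵐ (ℝ × ℝ) where
  toFun z := (z.1, z.1 + z.2)
  invFun z := (z.1, z.2 - z.1)
  left_inv z := by simp
  right_inv z := by simp
  measurable_toFun := (measurable_fst.prodMk (measurable_fst.add measurable_snd))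
  measurable_invFun := (measurable_fst.prodMk (measurable_snd.sub measurable_fst))

lemma wedge_integral_eq (F : ℝ × ℝ → ℝ) (hFm : Measurable F)
    (hFi : IntegrableOn F (Ici 0 ×ˢ Ici 0)) :
    ∫ q in Ici (0:ℝ) ×ˢ Ici (0:ℝ), F q
      = ∫ s in Ioi (0:ℝ), s * ∫ u in (0:ℝ)..1, F (u * s, (1 - u) * s) := by
  have hset : MeasurableSet (Ici (0:ℝ) ×ˢ Ici (0:ℝ)) :=
    measurableSet_Ici.prod measurableSet_Ici
  set G : ℝ × ℝ → ℝ := (Ici (0:ℝ) ×ˢ Ici (0:ℝ)).indicator F with hG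
  have hGm : Measurable G := hFm.indicator hset
  have hGi : Integrable G := (integrable_indicator_iff hset).2 hFi
  set φ : ℝ × ℝ → ℝ := fun p => G (p.1, p.2 - p.1) with hφ
  have hmp : MeasurePreserving (fun z : ℝ × ℝ => (z.1, z.1 + z.2))
      ((volume : Measure ℝ).prod volume) ((volume : Measure ℝ).prod volume) :=
    measurePreserving_prod_add volume volume
  have hemb : MeasurableEmbedding (fun z : ℝ × ℝ => (z.1, z.1 + z.2)) :=
    shearEquiv.measurableEmbedding
  have hcomp : (φ ∘ fun z : ℝ × ℝ => (z.1, z.1 + z.2)) = G := by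
    funext z; simp [hφ]
  have hφi : Integrable φ ((volume : Measure ℝ).prod volume) := by
    rw [← hmp.integrable_comp_emb hemb, hcomp]
    rwa [← Measure.volume_eq_prod]
  have h1 : ∫ q in Ici (0:ℝ) ×ˢ Ici (0:ℝ), F q = ∫ p, G p := (integral_indicator hset).symm
  have h2 : ∫ p, G p = ∫ p, φ p ∂((volume : Measure ℝ).prod volume) := by
    rw [Measure.volume_eq_prod, ← hmp.integral_comp hemb φ]
    congr 1; funext z; simp [hφ]
  have h3 : ∫ p, φ p ∂((volume : Measure ℝ).prod volume)
      = ∫ s, ∫ x, φ (x, s) := integral_prod_symm φ hφi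
  -- inner integral
  have h4 : ∀ s : ℝ, (∫ x, φ (x, s)) = ∫ x in Icc 0 s, F (x, s - x) := by
    intro s
    have : (fun x => φ (x, s)) = (Icc 0 s).indicator (fun x => F (x, s - x)) := by
      funext x
      simp only [hφ, hG, Set.indicator_apply, mem_prod, mem_Ici, mem_Icc, sub_nonneg]
    rw [this, integral_indicator measurableSet_Icc]
  have h5 : ∀ s : ℝ, s ∉ Ioi (0:ℝ) → (∫ x in Icc 0 s, F (x, s - x)) = 0 := by
    intro s hs
    have hs' : s ≤ 0 := by simpa using hs
    rcases lt_or_eq_of_le hs' with h | h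
    · rw [Icc_eq_empty (by linarith), Measure.restrict_empty, integral_zero_measure]
    · rw [← h, show Icc s s = {s} by simp, Measure.restrict_eq_zero.2 (by simp),
        integral_zero_measure]
      exact h.symm
  have h6 : (∫ s, ∫ x in Icc 0 s, F (x, s - x))
      = ∫ s in Ioi (0:ℝ), ∫ x in Icc 0 s, F (x, s - x) :=
    (setIntegral_eq_integral_of_forall_compl_eq_zero (fun s hs => h5 s hs)).symm
  have h7 : ∀ s ∈ Ioi (0:ℝ), (∫ x in Icc 0 s, F (x, s - x))
      = s * ∫ u in (0:ℝ)..1, F (u * s, (1 - u) * s) := by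
    intro s hs
    rw [mem_Ioi] at hs
    have e1 : (∫ x in Icc (0:ℝ) s, F (x, s - x)) = ∫ x in (0:ℝ)..s, F (x, s - x) := by
      rw [intervalIntegral.integral_of_le hs.le, integral_Icc_eq_integral_Ioc]
    have e2 : (∫ u in (0:ℝ)..1, F (u * s, (1 - u) * s))
        = ∫ u in (0:ℝ)..1, (fun x => F (x, s - x)) (u * s) := by
      apply intervalIntegral.integral_congr
      intro u _
      simp only
      congr 1
      ring_nf
    rw [e1, e2, intervalIntegral.integral_comp_mul_right (fun x => F (x, s - x)) hs.ne']
    simp only [zero_mul, one_mul, smul_eq_mul]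
    field_simp
  rw [h1, h2, h3]
  simp_rw [h4]
  rw [h6]
  exact setIntegral_congr_fun measurableSet_Ioi h7



lemma Zfun_measurable (μ : ℝ → ℝ) (hμ : Continuous μ) :
    Measurable fun s => ∫ α in (0:ℝ)..1, μ (α * s) * μ ((1 - α) * s) := by
  have h : ∀ s : ℝ, (∫ α in (0:ℝ)..1, μ (α * s) * μ ((1 - α) * s))
      = ∫ α, μ (α * s) * μ ((1 - α) * s) ∂((volume : Measure ℝ).restrict (Ioc 0 1)) :=
    fun s => intervalIntegral.integral_of_le zero_le_one
  simp_rw [h]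
  have hk : StronglyMeasurable fun p : ℝ × ℝ => μ (p.2 * p.1) * μ ((1 - p.2) * p.1) := by
    apply Continuous.stronglyMeasurable
    fun_prop
  exact hk.integral_prod_right'.measurable

lemma P_measurable (μ : ℝ → ℝ) (hμ : Continuous μ) (f : ℝ × ℝ → ℝ) (hf : Measurable f) :
    Measurable fun s => ∫ e in (0:ℝ)..1, f (e * s, (1 - e) * s) * nuF μ s e := by
  have h : ∀ s : ℝ, (∫ e in (0:ℝ)..1, f (e * s, (1 - e) * s) * nuF μ s e)
      = ∫ e, f (e * s, (1 - e) * s) * nuF μ s e ∂((volume : Measure ℝ).restrict (Ioc 0 1)) :=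
    fun s => intervalIntegral.integral_of_le zero_le_one
  simp_rw [h]
  have hk : StronglyMeasurable fun p : ℝ × ℝ =>
      f (p.2 * p.1, (1 - p.2) * p.1) * nuF μ p.1 p.2 := by
    apply Measurable.stronglyMeasurable
    apply Measurable.mul
    · exact hf.comp ((measurable_snd.mul measurable_fst).prodMk
        ((measurable_const.sub measurable_snd).mul measurable_fst))
    · unfold nuF
      apply Measurable.div
      · exact ((hμ.measurable.comp (measurable_snd.mul measurable_fst)).mul
          (hμ.measurable.comp ((measurable_const.sub measurable_snd).mul measurable_fst)))
      · exact (Zfun_measurable μ hμ).comp measurable_fst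
  exact hk.integral_prod_right'.measurable



variable {μ : ℝ → ℝ}

lemma P_eq_div (f : ℝ × ℝ → ℝ) (s : ℝ) :
    (∫ e in (0:ℝ)..1, f (e * s, (1 - e) * s) * nuF μ s e)
      = (∫ e in (0:ℝ)..1, f (e * s, (1 - e) * s) * (μ (e * s) * μ ((1 - e) * s)))
        / ∫ α in (0:ℝ)..1, μ (α * s) * μ ((1 - α) * s) := by
  unfold nuF
  simp_rw [mul_div_assoc']
  rw [intervalIntegral.integral_div]

lemma nuF_intInt (hμpos : ∀ x, 0 < μ x)
    {s : ℝ} (hs : 0 < s)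
    (hIint : IntervalIntegrable (fun α => μ (α * s) * μ ((1 - α) * s)) volume 0 1)
    (hIpos : 0 < ∫ α in (0:ℝ)..1, μ (α * s) * μ ((1 - α) * s)) :
    IntervalIntegrable (fun e => nuF μ s e) volume 0 1 :=
  hIint.div_const _

lemma nuF_integral (hμpos : ∀ x, 0 < μ x) {s : ℝ}
    (hIpos : 0 < ∫ α in (0:ℝ)..1, μ (α * s) * μ ((1 - α) * s)) :
    (∫ e in (0:ℝ)..1, nuF μ s e) = 1 := by
  unfold nuF
  rw [intervalIntegral.integral_div, div_self hIpos.ne']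

lemma fP_intInt (hμ : Continuous μ) (hμpos : ∀ x, 0 < μ x) (f : ℝ × ℝ → ℝ) (hf : Measurable f)
    {Cf : ℝ} (hCf : ∀ q, |f q| ≤ Cf) {s : ℝ} (hs : 0 < s)
    (hIint : IntervalIntegrable (fun α => μ (α * s) * μ ((1 - α) * s)) volume 0 1)
    (hIpos : 0 < ∫ α in (0:ℝ)..1, μ (α * s) * μ ((1 - α) * s)) :
    IntervalIntegrable (fun e => f (e * s, (1 - e) * s) * nuF μ s e) volume 0 1 := by
  have hCf0 : 0 ≤ Cf := le_trans (abs_nonneg _) (hCf 0)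
  have hdom : IntervalIntegrable (fun e => Cf * nuF μ s e) volume 0 1 :=
    (nuF_intInt hμpos hs hIint hIpos).const_mul Cf
  rw [intervalIntegrable_iff_integrableOn_Ioc_of_le zero_le_one] at hdom ⊢
  apply hdom.mono'
  · apply Measurable.aestronglyMeasurable
    apply Measurable.mul
    · exact hf.comp ((measurable_id.mul measurable_const).prodMk
        ((measurable_const.sub measurable_id).mul measurable_const))
    · unfold nuF
      exact Measurable.div
        ((hμ.measurable.comp (measurable_id.mul measurable_const)).mul
          (hμ.measurable.comp ((measurable_const.sub measurable_id).mul measurable_const)))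
        measurable_const
  · apply Filter.Eventually.of_forall
    intro e
    have hν : 0 ≤ nuF μ s e := by
      unfold nuF
      exact div_nonneg (mul_nonneg (hμpos _).le (hμpos _).le) hIpos.le
    rw [norm_mul, Real.norm_eq_abs, Real.norm_eq_abs, abs_of_nonneg hν]
    exact mul_le_mul_of_nonneg_right (hCf _) hν

lemma P_bound (hμ : Continuous μ) (hμpos : ∀ x, 0 < μ x) (f : ℝ × ℝ → ℝ) (hf : Measurable f)
    {Cf : ℝ} (hCf : ∀ q, |f q| ≤ Cf)
    (hIint : ∀ s > (0:ℝ), IntervalIntegrable (fun α => μ (α * s) * μ ((1 - α) * s)) volume 0 1)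
    (hIpos : ∀ s > (0:ℝ), 0 < ∫ α in (0:ℝ)..1, μ (α * s) * μ ((1 - α) * s))
    {s : ℝ} (hs : 0 ≤ s) :
    |∫ e in (0:ℝ)..1, f (e * s, (1 - e) * s) * nuF μ s e| ≤ Cf := by
  rcases eq_or_lt_of_le hs with rfl | h
  · -- s = 0
    have h0 : ∀ e : ℝ, nuF μ 0 e = 1 := by
      intro e
      unfold nuF
      simp only [mul_zero, intervalIntegral.integral_const, smul_eq_mul, sub_zero, one_mul]
      exact div_self (mul_pos (hμpos 0) (hμpos 0)).ne'
    simp only [h0, mul_zero, mul_one, intervalIntegral.integral_const, smul_eq_mul,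
      sub_zero, one_mul]
    exact hCf _
  · -- s > 0
    have hint := fP_intInt hμ hμpos f hf hCf h (hIint s h) (hIpos s h)
    have hνint := (hIint s h).div_const (∫ α in (0:ℝ)..1, μ (α * s) * μ ((1 - α) * s))
    calc |∫ e in (0:ℝ)..1, f (e * s, (1 - e) * s) * nuF μ s e|
        ≤ ∫ e in (0:ℝ)..1, |f (e * s, (1 - e) * s) * nuF μ s e| :=
          intervalIntegral.abs_integral_le_integral_abs zero_le_one
      _ ≤ ∫ e in (0:ℝ)..1, Cf * nuF μ s e := by
          apply intervalIntegral.integral_mono_on zero_le_one hint.abs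
            (hνint.const_mul Cf)
          intro e _
          have hν : 0 ≤ nuF μ s e :=
            div_nonneg (mul_nonneg (hμpos _).le (hμpos _).le) (hIpos s h).le
          rw [abs_mul, abs_of_nonneg hν]
          exact mul_le_mul_of_nonneg_right (hCf _) hν
      _ = Cf := by
          rw [intervalIntegral.integral_const_mul,
            nuF_integral hμpos (hIpos s h), mul_one]

end aux

lemma main_cont (μ : ℝ → ℝ) (hμ : Continuous μ) (hμpos : ∀ x, 0 < μ x)
    (hμint : IntegrableOn μ (Ici 0))
    (hIint : ∀ s > (0:ℝ), IntervalIntegrable (fun α => μ (α * s) * μ ((1 - α) * s)) volume 0 1)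
    (hIpos : ∀ s > (0:ℝ), 0 < ∫ α in (0:ℝ)..1, μ (α * s) * μ ((1 - α) * s))
    (f g : ℝ × ℝ → ℝ) (hfm : Measurable f) (Cf : ℝ) (hCf : ∀ q, |f q| ≤ Cf)
    (hgm : Measurable g) (Cg : ℝ) (hCg : ∀ q, |g q| ≤ Cg) :
    ∫ q in Ici (0:ℝ) ×ˢ Ici (0:ℝ),
        (∫ e in (0:ℝ)..1,
          f (e * (q.1 + q.2), (1 - e) * (q.1 + q.2)) * nuF μ (q.1 + q.2) e)
          * g q * (μ q.1 * μ q.2)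
      = ∫ q in Ici (0:ℝ) ×ˢ Ici (0:ℝ),
          f q * (∫ e in (0:ℝ)..1,
            g (e * (q.1 + q.2), (1 - e) * (q.1 + q.2)) * nuF μ (q.1 + q.2) e)
            * (μ q.1 * μ q.2) := by
  have hCf0 : 0 ≤ Cf := le_trans (abs_nonneg _) (hCf 0)
  have hCg0 : 0 ≤ Cg := le_trans (abs_nonneg _) (hCg 0)
  have hquad : MeasurableSet (Ici (0:ℝ) ×ˢ Ici (0:ℝ)) :=
    measurableSet_Ici.prod measurableSet_Ici
  set F1 : ℝ × ℝ → ℝ := fun q =>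
    (∫ e in (0:ℝ)..1,
      f (e * (q.1 + q.2), (1 - e) * (q.1 + q.2)) * nuF μ (q.1 + q.2) e)
      * g q * (μ q.1 * μ q.2) with hF1def
  set F2 : ℝ × ℝ → ℝ := fun q =>
    f q * (∫ e in (0:ℝ)..1,
      g (e * (q.1 + q.2), (1 - e) * (q.1 + q.2)) * nuF μ (q.1 + q.2) e)
      * (μ q.1 * μ q.2) with hF2def
  have hPf := P_measurable μ hμ f hfm
  have hPg := P_measurable μ hμ g hgm
  have hμm := hμ.measurable
  have hF1m : Measurable F1 :=
    ((hPf.comp (measurable_fst.add measurable_snd)).mul hgm).mul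
      ((hμm.comp measurable_fst).mul (hμm.comp measurable_snd))
  have hF2m : Measurable F2 :=
    (hfm.mul (hPg.comp (measurable_fst.add measurable_snd))).mul
      ((hμm.comp measurable_fst).mul (hμm.comp measurable_snd))
  have hDint : IntegrableOn (fun q : ℝ × ℝ => Cf * Cg * (μ q.1 * μ q.2))
      (Ici (0:ℝ) ×ˢ Ici (0:ℝ)) := by
    apply Integrable.const_mul
    have h := hμint.mul_prod hμint
    rwa [Measure.prod_restrict, ← Measure.volume_eq_prod] at h
  have hF1b : ∀ q ∈ Ici (0:ℝ) ×ˢ Ici (0:ℝ), ‖F1 q‖ ≤ Cf * Cg * (μ q.1 * μ q.2) := by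
    rintro ⟨x, y⟩ ⟨hx, hy⟩
    have hs : (0:ℝ) ≤ x + y := add_nonneg hx hy
    have h1 := P_bound hμ hμpos f hfm hCf hIint hIpos hs
    have h2 := hCg (x, y)
    have hm1 : 0 ≤ μ x * μ y := (mul_pos (hμpos x) (hμpos y)).le
    simp only [hF1def, Real.norm_eq_abs]
    rw [abs_mul, abs_mul, abs_of_nonneg hm1]
    exact mul_le_mul_of_nonneg_right (mul_le_mul h1 h2 (abs_nonneg _) hCf0) hm1
  have hF2b : ∀ q ∈ Ici (0:ℝ) ×ˢ Ici (0:ℝ), ‖F2 q‖ ≤ Cf * Cg * (μ q.1 * μ q.2) := by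
    rintro ⟨x, y⟩ ⟨hx, hy⟩
    have hs : (0:ℝ) ≤ x + y := add_nonneg hx hy
    have h1 := P_bound hμ hμpos g hgm hCg hIint hIpos hs
    have h2 := hCf (x, y)
    have hm1 : 0 ≤ μ x * μ y := (mul_pos (hμpos x) (hμpos y)).le
    simp only [hF2def, Real.norm_eq_abs]
    rw [abs_mul, abs_mul, abs_of_nonneg hm1]
    exact mul_le_mul_of_nonneg_right (mul_le_mul h2 h1 (abs_nonneg _) hCf0) hm1
  have hF1i : IntegrableOn F1 (Ici (0:ℝ) ×ˢ Ici (0:ℝ)) :=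
    hDint.mono' hF1m.aestronglyMeasurable ((ae_restrict_mem hquad).mono hF1b)
  have hF2i : IntegrableOn F2 (Ici (0:ℝ) ×ˢ Ici (0:ℝ)) :=
    hDint.mono' hF2m.aestronglyMeasurable ((ae_restrict_mem hquad).mono hF2b)
  rw [wedge_integral_eq F1 hF1m hF1i, wedge_integral_eq F2 hF2m hF2i]
  apply setIntegral_congr_fun measurableSet_Ioi
  intro s hs
  rw [mem_Ioi] at hs
  dsimp only
  congr 1
  have e1 : ∀ u : ℝ, F1 (u * s, (1 - u) * s)
      = (∫ e in (0:ℝ)..1, f (e * s, (1 - e) * s) * nuF μ s e)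
        * (g (u * s, (1 - u) * s) * (μ (u * s) * μ ((1 - u) * s))) := by
    intro u
    simp only [hF1def]
    rw [show u * s + (1 - u) * s = s by ring]
    ring
  have e2 : ∀ u : ℝ, F2 (u * s, (1 - u) * s)
      = (∫ e in (0:ℝ)..1, g (e * s, (1 - e) * s) * nuF μ s e)
        * (f (u * s, (1 - u) * s) * (μ (u * s) * μ ((1 - u) * s))) := by
    intro u
    simp only [hF2def]
    rw [show u * s + (1 - u) * s = s by ring]
    ring
  have E1 : (∫ u in (0:ℝ)..1, F1 (u * s, (1 - u) * s))
      = ((∫ e in (0:ℝ)..1, f (e * s, (1 - e) * s) * (μ (e * s) * μ ((1 - e) * s)))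
          / ∫ α in (0:ℝ)..1, μ (α * s) * μ ((1 - α) * s))
        * ∫ u in (0:ℝ)..1, g (u * s, (1 - u) * s) * (μ (u * s) * μ ((1 - u) * s)) := by
    simp only [e1]
    rw [intervalIntegral.integral_const_mul, P_eq_div]
  have E2 : (∫ u in (0:ℝ)..1, F2 (u * s, (1 - u) * s))
      = ((∫ e in (0:ℝ)..1, g (e * s, (1 - e) * s) * (μ (e * s) * μ ((1 - e) * s)))
          / ∫ α in (0:ℝ)..1, μ (α * s) * μ ((1 - α) * s))
        * ∫ u in (0:ℝ)..1, f (u * s, (1 - u) * s) * (μ (u * s) * μ ((1 - u) * s)) := by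
    simp only [e2]
    rw [intervalIntegral.integral_const_mul, P_eq_div]
  rw [E1, E2]
  ring

/-- If `μ` is a continuous strictly positive probability density on `[0,∞)`
with `0 < ∫₀¹ μ(αs)μ((1-α)s) dα < ∞` for every `s > 0`, and the redistribution density is
defined by `ν(s,a) = μ(as)μ((1-a)s) / ∫₀¹ μ(αs)μ((1-α)s) dα`, then the product measure
`μ(x)μ(y)dxdy` is reversible for the one-step redistribution operator `P`
(and in particular invariant, taking `g ≡ 1`). -/
theorem redistribution_formula_implies_reversibility
    (μ : ℝ → ℝ)
    (hμcont : ContinuousOn μ (Ici 0))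
    (hμpos : ∀ x ∈ Ici (0:ℝ), 0 < μ x)
    (hμprob : ∫ x in Ici (0:ℝ), μ x = 1)
    (hIint : ∀ s > (0:ℝ),
      IntervalIntegrable (fun α => μ (α * s) * μ ((1 - α) * s)) volume 0 1)
    (hIpos : ∀ s > (0:ℝ), 0 < ∫ α in (0:ℝ)..1, μ (α * s) * μ ((1 - α) * s))
    (ν : ℝ → ℝ → ℝ)
    (hν : ∀ s a, ν s a = μ (a * s) * μ ((1 - a) * s)
        / ∫ α in (0:ℝ)..1, μ (α * s) * μ ((1 - α) * s)) :
    ∀ f g : ℝ × ℝ → ℝ, Measurable f → (∃ C, ∀ q, |f q| ≤ C) →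
      Measurable g → (∃ C, ∀ q, |g q| ≤ C) →
      ∫ q in Ici (0:ℝ) ×ˢ Ici (0:ℝ),
          (∫ e in (0:ℝ)..1,
            f (e * (q.1 + q.2), (1 - e) * (q.1 + q.2)) * ν (q.1 + q.2) e)
            * g q * (μ q.1 * μ q.2)
        = ∫ q in Ici (0:ℝ) ×ˢ Ici (0:ℝ),
            f q * (∫ e in (0:ℝ)..1,
              g (e * (q.1 + q.2), (1 - e) * (q.1 + q.2)) * ν (q.1 + q.2) e)
              * (μ q.1 * μ q.2) := by
  intro f g hfm hfb hgm hgb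
  obtain ⟨Cf, hCf⟩ := hfb
  obtain ⟨Cg, hCg⟩ := hgb
  set μ' : ℝ → ℝ := fun x => μ (max x 0) with hμ'def
  have hμ'cont : Continuous μ' :=
    hμcont.comp_continuous (continuous_id.max continuous_const) (fun x => le_max_right x 0)
  have hagree : ∀ x : ℝ, 0 ≤ x → μ' x = μ x := by
    intro x hx
    simp only [hμ'def]
    rw [max_eq_left hx]
  have hμ'pos : ∀ x, 0 < μ' x := fun x => hμpos _ (le_max_right x 0)
  have hμint : IntegrableOn μ (Ici 0) := by
    by_contra h
    rw [integral_undef h] at hμprob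
    norm_num at hμprob
  have hμ'int : IntegrableOn μ' (Ici 0) :=
    hμint.congr_fun (fun x hx => (hagree x hx).symm) measurableSet_Ici
  have hZeq : ∀ s : ℝ, 0 ≤ s →
      (∫ α in (0:ℝ)..1, μ' (α * s) * μ' ((1 - α) * s))
        = ∫ α in (0:ℝ)..1, μ (α * s) * μ ((1 - α) * s) := by
    intro s hs
    apply intervalIntegral.integral_congr
    intro α hα
    rw [uIcc_of_le zero_le_one, mem_Icc] at hα
    dsimp only
    rw [hagree _ (mul_nonneg hα.1 hs), hagree _ (mul_nonneg (by linarith [hα.2]) hs)]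
  have hI'int : ∀ s > (0:ℝ),
      IntervalIntegrable (fun α => μ' (α * s) * μ' ((1 - α) * s)) volume 0 1 := by
    intro s hs
    have h0 := (intervalIntegrable_iff_integrableOn_Ioc_of_le zero_le_one).1 (hIint s hs)
    refine (intervalIntegrable_iff_integrableOn_Ioc_of_le zero_le_one).2
      (h0.congr_fun ?_ measurableSet_Ioc)
    intro α hα
    rw [mem_Ioc] at hα
    dsimp only
    rw [hagree _ (mul_nonneg hα.1.le hs.le), hagree _ (mul_nonneg (by linarith [hα.2]) hs.le)]
  have hI'pos : ∀ s > (0:ℝ), 0 < ∫ α in (0:ℝ)..1, μ' (α * s) * μ' ((1 - α) * s) := by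
    intro s hs
    rw [hZeq s hs.le]
    exact hIpos s hs
  have key := main_cont μ' hμ'cont hμ'pos hμ'int hI'int hI'pos f g hfm Cf hCf hgm Cg hCg
  have hquad : MeasurableSet (Ici (0:ℝ) ×ˢ Ici (0:ℝ)) :=
    measurableSet_Ici.prod measurableSet_Ici
  have hνeq : ∀ s : ℝ, 0 ≤ s → ∀ h : ℝ × ℝ → ℝ,
      (∫ e in (0:ℝ)..1, h (e * s, (1 - e) * s) * ν s e)
        = ∫ e in (0:ℝ)..1, h (e * s, (1 - e) * s) * nuF μ' s e := by
    intro s hs h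
    apply intervalIntegral.integral_congr
    intro e he
    rw [uIcc_of_le zero_le_one, mem_Icc] at he
    dsimp only
    congr 1
    rw [hν]
    unfold nuF
    rw [hagree _ (mul_nonneg he.1 hs), hagree _ (mul_nonneg (by linarith [he.2]) hs),
      hZeq s hs]
  have hL : (∫ q in Ici (0:ℝ) ×ˢ Ici (0:ℝ),
        (∫ e in (0:ℝ)..1,
          f (e * (q.1 + q.2), (1 - e) * (q.1 + q.2)) * ν (q.1 + q.2) e)
          * g q * (μ q.1 * μ q.2))
      = ∫ q in Ici (0:ℝ) ×ˢ Ici (0:ℝ),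
        (∫ e in (0:ℝ)..1,
          f (e * (q.1 + q.2), (1 - e) * (q.1 + q.2)) * nuF μ' (q.1 + q.2) e)
          * g q * (μ' q.1 * μ' q.2) := by
    apply setIntegral_congr_fun hquad
    rintro ⟨x, y⟩ ⟨hx, hy⟩
    have hs : (0:ℝ) ≤ x + y := add_nonneg hx hy
    dsimp only
    rw [hagree x hx, hagree y hy, hνeq _ hs f]
  have hR : (∫ q in Ici (0:ℝ) ×ˢ Ici (0:ℝ),
        f q * (∫ e in (0:ℝ)..1,
          g (e * (q.1 + q.2), (1 - e) * (q.1 + q.2)) * ν (q.1 + q.2) e)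
          * (μ q.1 * μ q.2))
      = ∫ q in Ici (0:ℝ) ×ˢ Ici (0:ℝ),
        f q * (∫ e in (0:ℝ)..1,
          g (e * (q.1 + q.2), (1 - e) * (q.1 + q.2)) * nuF μ' (q.1 + q.2) e)
          * (μ' q.1 * μ' q.2) := by
    apply setIntegral_congr_fun hquad
    rintro ⟨x, y⟩ ⟨hx, hy⟩
    have hs : (0:ℝ) ≤ x + y := add_nonneg hx hy
    dsimp only
    rw [hagree x hx, hagree y hy, hνeq _ hs g]
  rw [hL, hR]
  exact key
end

section
/- Let ν : [0,∞)×[0,1] → [0,∞) be a jointly continuous redistribution density and let μ : [0,∞)² → (0,∞) be a continuous, strictly positive probability density. Then the measure μ(x,y)dxdy is invariant for the one-step redistribution operator P if and only if for every s > 0 and a ∈ [0,1] one has ν(s,a) = μ(as,(1-a)s) / ∫₀¹ μ(αs,(1-α)s) dα. -/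
open MeasureTheory Set

private def Phi (p : ℝ × ℝ) : ℝ × ℝ := (p.2 * p.1, (1 - p.2) * p.1)

private noncomputable def PhiD (p : ℝ × ℝ) : ℝ × ℝ →L[ℝ] ℝ × ℝ :=
  LinearMap.toContinuousLinearMap (Matrix.toLin (Module.Basis.finTwoProd ℝ) (Module.Basis.finTwoProd ℝ)
    !![p.2, p.1; 1 - p.2, -p.1])

private lemma hasFDerivAt_Phi (p : ℝ × ℝ) : HasFDerivAt Phi (PhiD p) p := by
  unfold Phi PhiD
  rw [Matrix.toLin_finTwoProd_toContinuousLinearMap]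
  have h1 : HasFDerivAt (fun q : ℝ × ℝ => q.2 * q.1)
      (p.2 • ContinuousLinearMap.fst ℝ ℝ ℝ + p.1 • ContinuousLinearMap.snd ℝ ℝ ℝ) p := by
    have := (hasFDerivAt_snd (𝕜 := ℝ) (E := ℝ) (F := ℝ) (p := p)).mul
      (hasFDerivAt_fst (𝕜 := ℝ) (E := ℝ) (F := ℝ) (p := p))
    exact this
  have h2 : HasFDerivAt (fun q : ℝ × ℝ => (1 - q.2) * q.1)
      ((1 - p.2) • ContinuousLinearMap.fst ℝ ℝ ℝ + (-p.1) • ContinuousLinearMap.snd ℝ ℝ ℝ) p := by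
    have hs : HasFDerivAt (fun q : ℝ × ℝ => 1 - q.2)
        (-ContinuousLinearMap.snd ℝ ℝ ℝ) p := by
      have := (hasFDerivAt_const (1:ℝ) p).sub (hasFDerivAt_snd (𝕜 := ℝ) (E := ℝ) (F := ℝ) (p := p))
      exact this.congr_fderiv (zero_sub _)
    have := hs.mul (hasFDerivAt_fst (𝕜 := ℝ) (E := ℝ) (F := ℝ) (p := p))
    refine this.congr_fderiv ?_
    ext <;> simp [mul_comm]
  exact HasFDerivAt.prodMk h1 h2

private lemma PhiD_det (p : ℝ × ℝ) : (PhiD p).det = -p.1 := by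
  unfold PhiD
  simp only [LinearMap.det_toContinuousLinearMap, LinearMap.det_toLin, Matrix.det_fin_two_of]
  ring

private def U : Set (ℝ × ℝ) := Ioi 0 ×ˢ Ioo 0 1
private def Qo : Set (ℝ × ℝ) := Ioi 0 ×ˢ Ioi 0

private lemma Phi_image : Phi '' U = Qo := by
  ext q
  obtain ⟨x, y⟩ := q
  simp only [Qo, mem_prod, mem_Ioi]
  constructor
  · rintro ⟨⟨s, a⟩, hp, h⟩
    obtain ⟨hs, ha⟩ : s ∈ Ioi (0:ℝ) ∧ a ∈ Ioo (0:ℝ) 1 := hp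
    have h1 : a * s = x := congrArg Prod.fst h
    have h2 : (1 - a) * s = y := congrArg Prod.snd h
    obtain ⟨ha1, ha2⟩ := ha
    constructor
    · rw [← h1]; exact mul_pos ha1 hs
    · rw [← h2]; exact mul_pos (by linarith) hs
  · rintro ⟨hx, hy⟩
    have hxy : (0:ℝ) < x + y := by linarith
    refine ⟨(x + y, x / (x + y)), ?_, ?_⟩
    · exact ⟨hxy, div_pos hx hxy, (div_lt_one hxy).mpr (by linarith)⟩
    · show (x / (x + y) * (x + y), (1 - x / (x + y)) * (x + y)) = (x, y)
      have h1 : x / (x + y) * (x + y) = x := div_mul_cancel₀ x hxy.ne'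
      refine Prod.ext h1 ?_
      field_simp
      ring

private lemma Phi_injOn : InjOn Phi U := by
  rintro ⟨s, a⟩ hp ⟨s', a'⟩ hp' h
  obtain ⟨hs, -⟩ : s ∈ Ioi (0:ℝ) ∧ a ∈ Ioo (0:ℝ) 1 := hp
  obtain ⟨hs', -⟩ : s' ∈ Ioi (0:ℝ) ∧ a' ∈ Ioo (0:ℝ) 1 := hp'
  simp only [Phi, Prod.mk.injEq] at h
  obtain ⟨h1, h2⟩ := h
  have hsum : s = s' := by nlinarith
  subst hsum
  have := mul_right_cancel₀ (ne_of_gt (show (0:ℝ) < s from hs)) h1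
  simp [this]

private lemma Q_ae_Qo : (Ici (0:ℝ) ×ˢ Ici (0:ℝ) : Set (ℝ×ℝ)) =ᵐ[volume] Qo := by
  rw [ae_eq_set]
  constructor
  · apply measure_mono_null (t := {p : ℝ × ℝ | p.1 = 0} ∪ {p : ℝ × ℝ | p.2 = 0})
    · rintro ⟨x, y⟩ ⟨⟨hx, hy⟩, h⟩
      simp only [Qo, mem_prod, mem_Ioi, not_and_or, not_lt] at h
      rcases h with h | h
      · exact Or.inl (le_antisymm h hx)
      · exact Or.inr (le_antisymm h hy)
    · apply measure_union_null
      · have h : {p : ℝ × ℝ | p.1 = 0} = ({0} : Set ℝ) ×ˢ (univ : Set ℝ) := by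
          ext p; simp only [mem_setOf_eq, mem_prod, mem_singleton_iff, mem_univ, and_true]
        rw [h, show (volume : Measure (ℝ×ℝ)) = (volume : Measure ℝ).prod volume from rfl,
          Measure.prod_prod]
        simp
      · have h : {p : ℝ × ℝ | p.2 = 0} = (univ : Set ℝ) ×ˢ ({0} : Set ℝ) := by
          ext p; simp only [mem_setOf_eq, mem_prod, mem_singleton_iff, mem_univ, true_and]
        rw [h, show (volume : Measure (ℝ×ℝ)) = (volume : Measure ℝ).prod volume from rfl,
          Measure.prod_prod]
        simp
  · have h : (Qo \ (Ici (0:ℝ) ×ˢ Ici (0:ℝ)) : Set (ℝ×ℝ)) = ∅ :=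
      diff_eq_empty.mpr (prod_mono Ioi_subset_Ici_self Ioi_subset_Ici_self)
    rw [h]; simp

private lemma cov (g : ℝ × ℝ → ℝ) (hg : IntegrableOn g Qo) :
    ∫ q in Ici (0:ℝ) ×ˢ Ici (0:ℝ), g q
      = ∫ s in Ioi (0:ℝ), ∫ a in Ioo (0:ℝ) 1, s * g (a * s, (1 - a) * s) := by
  have hU : MeasurableSet U := (measurableSet_Ioi.prod measurableSet_Ioo)
  have hder : ∀ p ∈ U, HasFDerivWithinAt Phi (PhiD p) U p :=
    fun p _ => (hasFDerivAt_Phi p).hasFDerivWithinAt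
  have key := integral_image_eq_integral_abs_det_fderiv_smul volume hU hder Phi_injOn g
  rw [Phi_image] at key
  have h1 : ∫ q in Ici (0:ℝ) ×ˢ Ici (0:ℝ), g q = ∫ q in Qo, g q :=
    setIntegral_congr_set Q_ae_Qo
  have heq : ∀ p ∈ U, |(PhiD p).det| • g (Phi p) = p.1 * g (Phi p) := by
    intro p hp
    have hp1 : (0:ℝ) < p.1 := hp.1
    rw [PhiD_det, abs_neg, abs_of_pos hp1, smul_eq_mul]
  have h2 : ∫ p in U, |(PhiD p).det| • g (Phi p) = ∫ p in U, p.1 * g (Phi p) :=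
    setIntegral_congr_fun hU heq
  have hint : IntegrableOn (fun p => p.1 * g (Phi p)) U := by
    have h := (integrableOn_image_iff_integrableOn_abs_det_fderiv_smul volume hU hder Phi_injOn g).mp
      (by rwa [Phi_image])
    exact h.congr_fun heq hU
  have h3 : ∫ p in U, p.1 * g (Phi p)
      = ∫ s in Ioi (0:ℝ), ∫ a in Ioo (0:ℝ) 1, s * g (a * s, (1 - a) * s) := by
    have h := setIntegral_prod (μ := (volume : Measure ℝ)) (ν := (volume : Measure ℝ))
      (f := fun p : ℝ × ℝ => p.1 * g (Phi p)) (s := Ioi (0:ℝ)) (t := Ioo (0:ℝ) 1) hint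
    simpa [Phi, U, Measure.volume_eq_prod] using h
  rw [h1, key, h2, h3]

private noncomputable def Iv (μ' : ℝ × ℝ → ℝ) (s : ℝ) : ℝ :=
  ∫ a in Ioc (0:ℝ) 1, μ' (a * s, (1 - a) * s)

private noncomputable def Gv (ν' : ℝ → ℝ → ℝ) (μ' : ℝ × ℝ → ℝ) (q : ℝ × ℝ) : ℝ :=
  ν' (q.1 + q.2) (q.1 / (q.1 + q.2)) * Iv μ' (q.1 + q.2)

private lemma Iv_intervalIntegral (μ' : ℝ × ℝ → ℝ) (s : ℝ) :
    Iv μ' s = ∫ a in (0:ℝ)..1, μ' (a * s, (1 - a) * s) := by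
  rw [intervalIntegral.integral_of_le zero_le_one]; rfl

private lemma Iv_continuous {μ' : ℝ × ℝ → ℝ} (hμ' : Continuous μ') : Continuous (Iv μ') := by
  have : Continuous fun s : ℝ => ∫ a in (0:ℝ)..1, μ' (a * s, (1 - a) * s) := by
    apply intervalIntegral.continuous_parametric_intervalIntegral_of_continuous
      (f := fun s t => μ' (t * s, (1 - t) * s)) _ continuous_const
    apply hμ'.comp
    exact (continuous_snd.mul continuous_fst).prodMk
      ((continuous_const.sub continuous_snd).mul continuous_fst)
  simpa [← Iv_intervalIntegral] using this

private lemma Iv_pos {μ' : ℝ × ℝ → ℝ} (hμ' : Continuous μ') (hpos : ∀ q, 0 < μ' q) (s : ℝ) :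
    0 < Iv μ' s := by
  rw [Iv_intervalIntegral]
  apply intervalIntegral.intervalIntegral_pos_of_pos_on
  · apply Continuous.intervalIntegrable
    apply hμ'.comp
    exact (continuous_id.mul continuous_const).prodMk
      ((continuous_const.sub continuous_id).mul continuous_const)
  · exact fun a _ => hpos _
  · exact zero_lt_one

private lemma main_L (ν' : ℝ → ℝ → ℝ) (μ' : ℝ × ℝ → ℝ)
    (hν'cont : Continuous fun p : ℝ × ℝ => ν' p.1 p.2)
    (hν'nonneg : ∀ s e, 0 ≤ ν' s e)
    (hν'prob : ∀ s, ∫ e in Ioc (0:ℝ) 1, ν' s e = 1)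
    (hμ'int : IntegrableOn μ' (Ici (0:ℝ) ×ˢ Ici (0:ℝ)))
    (f : ℝ × ℝ → ℝ) (hf : Measurable f) (C : ℝ) (hC : ∀ q, |f q| ≤ C)
    (hfG : IntegrableOn (fun q => f q * Gv ν' μ' q) Qo) :
    ∫ q in Ici (0:ℝ) ×ˢ Ici (0:ℝ),
        (∫ e in Ioc (0:ℝ) 1, f (e * (q.1 + q.2), (1 - e) * (q.1 + q.2)) * ν' (q.1 + q.2) e) * μ' q
      = ∫ q in Ici (0:ℝ) ×ˢ Ici (0:ℝ), f q * Gv ν' μ' q := by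
  have hC0 : 0 ≤ C := (abs_nonneg _).trans (hC 0)
  set F : ℝ → ℝ := fun s => ∫ e in Ioc (0:ℝ) 1, f (e * s, (1 - e) * s) * ν' s e with hFdef
  -- measurability of F
  have hFm : StronglyMeasurable F := by
    apply StronglyMeasurable.integral_prod_right (f := fun s e => f (e * s, (1 - e) * s) * ν' s e)
    apply Measurable.stronglyMeasurable
    apply Measurable.mul
    · exact hf.comp ((measurable_snd.mul measurable_fst).prodMk
        ((measurable_const.sub measurable_snd).mul measurable_fst))
    · exact hν'cont.measurable
  -- integrability of e ↦ f(es,(1-e)s) ν' s e on Ioc 0 1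
  have hint1 : ∀ s : ℝ, IntegrableOn (fun e => ν' s e) (Ioc (0:ℝ) 1) := by
    intro s
    apply (ContinuousOn.integrableOn_compact isCompact_Icc _).mono_set Ioc_subset_Icc_self
    exact ((hν'cont.comp (Continuous.prodMk continuous_const continuous_id)).continuousOn)
  have hint2 : ∀ s : ℝ, IntegrableOn (fun e => f (e * s, (1 - e) * s) * ν' s e) (Ioc (0:ℝ) 1) := by
    intro s
    apply Integrable.bdd_mul (hint1 s)
    · apply Measurable.aestronglyMeasurable
      exact hf.comp ((measurable_id.mul measurable_const).prodMk
        ((measurable_const.sub measurable_id).mul measurable_const))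
    · exact Filter.Eventually.of_forall fun e => (Real.norm_eq_abs _).le.trans (hC _)
  -- boundedness of F
  have hFbd : ∀ s, |F s| ≤ C := by
    intro s
    show |∫ e in Ioc (0:ℝ) 1, f (e * s, (1 - e) * s) * ν' s e| ≤ C
    calc |∫ e in Ioc (0:ℝ) 1, f (e * s, (1 - e) * s) * ν' s e|
        ≤ ∫ e in Ioc (0:ℝ) 1, |f (e * s, (1 - e) * s) * ν' s e| := by
          simpa only [Real.norm_eq_abs] using norm_integral_le_integral_norm
            (f := fun e => f (e * s, (1 - e) * s) * ν' s e)
            (μ := volume.restrict (Ioc (0:ℝ) 1))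
      _ ≤ ∫ e in Ioc (0:ℝ) 1, C * ν' s e := by
          apply setIntegral_mono_on ((hint2 s).abs) ((hint1 s).const_mul C) measurableSet_Ioc
          intro e _
          rw [abs_mul, abs_of_nonneg (hν'nonneg s e)]
          exact mul_le_mul_of_nonneg_right (hC _) (hν'nonneg s e)
      _ = C := by rw [integral_const_mul, hν'prob s, mul_one]
  -- integrability of the two integrands on Qo
  have hg1int : IntegrableOn (fun q : ℝ × ℝ => F (q.1 + q.2) * μ' q) Qo := by
    apply Integrable.bdd_mul (hμ'int.mono_set ?_)
    · exact (hFm.measurable.comp (measurable_fst.add measurable_snd)).aestronglyMeasurable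
    · exact Filter.Eventually.of_forall fun q => (Real.norm_eq_abs _).le.trans (hFbd _)
    · exact prod_mono Ioi_subset_Ici_self Ioi_subset_Ici_self
  -- apply change of variables to both sides
  have cov1 := cov (fun q : ℝ × ℝ => F (q.1 + q.2) * μ' q) hg1int
  have cov2 := cov (fun q : ℝ × ℝ => f q * Gv ν' μ' q) hfG
  -- LHS of goal equals LHS of cov1
  have lhs_eq : ∫ q in Ici (0:ℝ) ×ˢ Ici (0:ℝ),
      (∫ e in Ioc (0:ℝ) 1, f (e * (q.1 + q.2), (1 - e) * (q.1 + q.2)) * ν' (q.1 + q.2) e) * μ' q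
      = ∫ q in Ici (0:ℝ) ×ˢ Ici (0:ℝ), F (q.1 + q.2) * μ' q := rfl
  rw [lhs_eq, cov1, cov2]
  -- now compare the iterated integrals
  apply setIntegral_congr_fun measurableSet_Ioi
  intro s hs
  have hs0 : (0:ℝ) < s := hs
  have hsum : ∀ a : ℝ, a * s + (1 - a) * s = s := fun a => by ring
  dsimp only
  calc ∫ a in Ioo (0:ℝ) 1, s * (F (a * s + (1 - a) * s) * μ' (a * s, (1 - a) * s))
      = ∫ a in Ioo (0:ℝ) 1, (s * F s) * μ' (a * s, (1 - a) * s) := by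
        apply setIntegral_congr_fun measurableSet_Ioo
        intro a _
        simp only [hsum]
        ring
    _ = (s * F s) * ∫ a in Ioo (0:ℝ) 1, μ' (a * s, (1 - a) * s) := by
        rw [integral_const_mul]
    _ = (s * Iv μ' s) * F s := by
        have h2 : Iv μ' s = ∫ a in Ioo (0:ℝ) 1, μ' (a * s, (1 - a) * s) :=
          integral_Ioc_eq_integral_Ioo
        rw [← h2]; ring
    _ = (s * Iv μ' s) * ∫ e in Ioo (0:ℝ) 1, f (e * s, (1 - e) * s) * ν' s e := by
        have h3 : F s = ∫ e in Ioo (0:ℝ) 1, f (e * s, (1 - e) * s) * ν' s e :=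
          integral_Ioc_eq_integral_Ioo
        rw [h3]
    _ = ∫ e in Ioo (0:ℝ) 1, (s * Iv μ' s) * (f (e * s, (1 - e) * s) * ν' s e) := by
        rw [integral_const_mul]
    _ = ∫ a in Ioo (0:ℝ) 1, s * (f (a * s, (1 - a) * s) * Gv ν' μ' (a * s, (1 - a) * s)) := by
        apply setIntegral_congr_fun measurableSet_Ioo
        intro a _
        have hG : Gv ν' μ' (a * s, (1 - a) * s) = ν' s a * Iv μ' s := by
          rw [Gv]
          simp only [hsum a]
          rw [mul_div_cancel_right₀ a (ne_of_gt hs0)]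
        simp only [hG]
        ring

private lemma ball_pos_contradiction (d : ℝ × ℝ → ℝ) (q0 : ℝ × ℝ) (r : ℝ) (hr : 0 < r)
    (hcont : ContinuousOn d (Metric.closedBall q0 r))
    (c : ℝ) (hc : 0 < c) (hlb : ∀ q ∈ Metric.closedBall q0 r, c ≤ d q)
    (hzero : ∫ q in Metric.closedBall q0 r, d q = 0) : False := by
  have hBm : MeasurableSet (Metric.closedBall q0 r) := measurableSet_closedBall
  have hfin : volume (Metric.closedBall q0 r) ≠ ⊤ :=
    (isCompact_closedBall q0 r).measure_lt_top.ne
  have hint : IntegrableOn d (Metric.closedBall q0 r) :=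
    hcont.integrableOn_compact (isCompact_closedBall q0 r)
  have h1 : c * (volume (Metric.closedBall q0 r)).toReal ≤ ∫ q in Metric.closedBall q0 r, d q :=
    setIntegral_ge_of_const_le_real hBm hfin hlb hint
  rw [hzero] at h1
  have hpos : 0 < (volume (Metric.closedBall q0 r)).toReal := by
    apply ENNReal.toReal_pos _ hfin
    exact (Metric.measure_closedBall_pos volume q0 hr).ne'
  nlinarith

/-- For a jointly continuous redistribution density `ν` and a continuous,
strictly positive probability density `μ` on `[0,∞)²`, the measure `μ(x,y)dxdy` is
invariant for the one-step redistribution operator `P` if and only if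
`ν(s,a) = μ(as,(1-a)s) / ∫₀¹ μ(αs,(1-α)s) dα` for every `s > 0` and `a ∈ [0,1]`. -/
theorem invariance_iff_redistribution_formula
    (ν : ℝ → ℝ → ℝ) (μ : ℝ × ℝ → ℝ)
    (hνcont : ContinuousOn (fun q : ℝ × ℝ => ν q.1 q.2) (Ici 0 ×ˢ Icc 0 1))
    (hνnonneg : ∀ s ∈ Ici (0:ℝ), ∀ a ∈ Icc (0:ℝ) 1, 0 ≤ ν s a)
    (hνprob : ∀ s ∈ Ici (0:ℝ), ∫ e in (0:ℝ)..1, ν s e = 1)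
    (hμcont : ContinuousOn μ (Ici 0 ×ˢ Ici 0))
    (hμpos : ∀ q ∈ Ici (0:ℝ) ×ˢ Ici (0:ℝ), 0 < μ q)
    (hμprob : ∫ q in Ici (0:ℝ) ×ˢ Ici (0:ℝ), μ q = 1) :
    (∀ f : ℝ × ℝ → ℝ, Measurable f → (∃ C, ∀ q, |f q| ≤ C) →
      ∫ q in Ici (0:ℝ) ×ˢ Ici (0:ℝ),
          (∫ e in (0:ℝ)..1,
            f (e * (q.1 + q.2), (1 - e) * (q.1 + q.2)) * ν (q.1 + q.2) e) * μ q
        = ∫ q in Ici (0:ℝ) ×ˢ Ici (0:ℝ), f q * μ q)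
    ↔ (∀ s > (0:ℝ), ∀ a ∈ Icc (0:ℝ) 1,
        ν s a = μ (a * s, (1 - a) * s)
          / ∫ α in (0:ℝ)..1, μ (α * s, (1 - α) * s)) := by
  classical
  set ν' : ℝ → ℝ → ℝ := fun s e => ν (max s 0) (min (max e 0) 1) with hν'def
  set μ' : ℝ × ℝ → ℝ := fun q => μ (max q.1 0, max q.2 0) with hμ'def
  have hQm : MeasurableSet (Ici (0:ℝ) ×ˢ Ici (0:ℝ)) := measurableSet_Ici.prod measurableSet_Ici
  have hQom : MeasurableSet Qo := measurableSet_Ioi.prod measurableSet_Ioi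
  have hQosub : Qo ⊆ Ici (0:ℝ) ×ˢ Ici (0:ℝ) := prod_mono Ioi_subset_Ici_self Ioi_subset_Ici_self
  have hν'cont : Continuous fun p : ℝ × ℝ => ν' p.1 p.2 :=
    hνcont.comp_continuous
      ((continuous_fst.max continuous_const).prodMk
        ((continuous_snd.max continuous_const).min continuous_const))
      (fun p => ⟨le_max_right p.1 0, ⟨le_min (le_max_right p.2 0) zero_le_one, min_le_right (max p.2 0) 1⟩⟩)
  have hμ'cont : Continuous μ' :=
    hμcont.comp_continuous
      ((continuous_fst.max continuous_const).prodMk (continuous_snd.max continuous_const))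
      (fun q => ⟨le_max_right q.1 0, le_max_right q.2 0⟩)
  have hν'eq : ∀ s : ℝ, 0 ≤ s → ∀ e ∈ Icc (0:ℝ) 1, ν' s e = ν s e := by
    intro s hs e he
    rw [hν'def]
    simp only [max_eq_left hs, max_eq_left he.1, min_eq_left he.2]
  have hμ'eq : ∀ q ∈ Ici (0:ℝ) ×ˢ Ici (0:ℝ), μ' q = μ q := by
    rintro ⟨x, y⟩ ⟨hx, hy⟩
    rw [hμ'def]
    simp only [max_eq_left (show (0:ℝ) ≤ x from hx), max_eq_left (show (0:ℝ) ≤ y from hy)]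
  have hμ'pos : ∀ q, 0 < μ' q := fun q => hμpos _ ⟨le_max_right q.1 0, le_max_right q.2 0⟩
  have hν'nonneg : ∀ s e, 0 ≤ ν' s e :=
    fun s e => hνnonneg _ (le_max_right s 0) _
      ⟨le_min (le_max_right e 0) zero_le_one, min_le_right (max e 0) 1⟩
  have hν'prob : ∀ s, ∫ e in Ioc (0:ℝ) 1, ν' s e = 1 := by
    intro s
    have h1 : ∀ e ∈ Ioc (0:ℝ) 1, ν' s e = ν (max s 0) e := by
      intro e he
      show ν (max s 0) (min (max e 0) 1) = ν (max s 0) e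
      rw [max_eq_left he.1.le, min_eq_left he.2]
    rw [setIntegral_congr_fun measurableSet_Ioc h1,
      ← intervalIntegral.integral_of_le zero_le_one]
    exact hνprob _ (le_max_right s 0)
  have hμint : IntegrableOn μ (Ici (0:ℝ) ×ˢ Ici (0:ℝ)) := by
    by_contra hcon
    rw [integral_undef hcon] at hμprob
    exact one_ne_zero hμprob.symm
  have hμ'int : IntegrableOn μ' (Ici (0:ℝ) ×ˢ Ici (0:ℝ)) :=
    hμint.congr_fun (fun q hq => (hμ'eq q hq).symm) hQm
  -- the LHS rewritten in terms of the clamped functions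
  have hL : ∀ f : ℝ × ℝ → ℝ,
      (∫ q in Ici (0:ℝ) ×ˢ Ici (0:ℝ),
          (∫ e in (0:ℝ)..1,
            f (e * (q.1 + q.2), (1 - e) * (q.1 + q.2)) * ν (q.1 + q.2) e) * μ q)
      = ∫ q in Ici (0:ℝ) ×ˢ Ici (0:ℝ),
          (∫ e in Ioc (0:ℝ) 1,
            f (e * (q.1 + q.2), (1 - e) * (q.1 + q.2)) * ν' (q.1 + q.2) e) * μ' q := by
    intro f
    apply setIntegral_congr_fun hQm
    rintro ⟨x, y⟩ ⟨hx, hy⟩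
    have hxy : (0:ℝ) ≤ x + y := add_nonneg hx hy
    dsimp only
    rw [hμ'eq (x, y) ⟨hx, hy⟩, intervalIntegral.integral_of_le zero_le_one]
    congr 1
    apply setIntegral_congr_fun measurableSet_Ioc
    intro e he
    dsimp only
    rw [hν'eq _ hxy e ⟨he.1.le, he.2⟩]
  have hR : ∀ f : ℝ × ℝ → ℝ,
      (∫ q in Ici (0:ℝ) ×ˢ Ici (0:ℝ), f q * μ q)
      = ∫ q in Ici (0:ℝ) ×ˢ Ici (0:ℝ), f q * μ' q := by
    intro f
    apply setIntegral_congr_fun hQm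
    intro q hq
    dsimp only
    rw [hμ'eq q hq]
  -- relation between the interval integral of μ and Iv μ'
  have hIrel : ∀ s : ℝ, 0 < s → (∫ α in (0:ℝ)..1, μ (α * s, (1 - α) * s)) = Iv μ' s := by
    intro s hs
    rw [Iv, intervalIntegral.integral_of_le zero_le_one]
    apply setIntegral_congr_fun measurableSet_Ioc
    intro a ha
    have h1 : (0:ℝ) ≤ a * s := mul_nonneg ha.1.le hs.le
    have h2 : (0:ℝ) ≤ (1 - a) * s := mul_nonneg (by linarith [ha.2]) hs.le
    dsimp only
    exact (hμ'eq (a * s, (1 - a) * s) ⟨h1, h2⟩).symm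
  constructor
  · -- invariance implies the formula
    intro h s hs a ha
    have hQoopen : IsOpen Qo := isOpen_Ioi.prod isOpen_Ioi
    have hGcont : ContinuousOn (Gv ν' μ') Qo := by
      have pairc : ContinuousOn (fun q : ℝ × ℝ => (q.1 + q.2, q.1 / (q.1 + q.2))) Qo := by
        apply ContinuousOn.prodMk
        · exact (continuous_fst.add continuous_snd).continuousOn
        · apply ContinuousOn.div continuous_fst.continuousOn
            (continuous_fst.add continuous_snd).continuousOn
          rintro ⟨x, y⟩ ⟨hx, hy⟩
          have hx' : (0:ℝ) < x := hx
          have hy' : (0:ℝ) < y := hy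
          exact (add_pos hx' hy').ne'
      apply ContinuousOn.mul
      · exact hν'cont.comp_continuousOn pairc
      · exact ((Iv_continuous hμ'cont).comp (continuous_fst.add continuous_snd)).continuousOn
    -- pointwise identity on the open quadrant
    have key : ∀ q0 ∈ Qo, Gv ν' μ' q0 = μ' q0 := by
      intro q0 hq0
      by_contra hne
      set d : ℝ × ℝ → ℝ := fun q => Gv ν' μ' q - μ' q with hddef
      have hdne : d q0 ≠ 0 := sub_ne_zero_of_ne hne
      have hdcontAt : ContinuousAt d q0 :=
        ((hGcont.sub hμ'cont.continuousOn).continuousAt (hQoopen.mem_nhds hq0))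
      obtain ⟨δ1, hδ1, hδ1p⟩ := Metric.continuousAt_iff.mp hdcontAt (|d q0| / 2)
        (by positivity)
      obtain ⟨δ2, hδ2, hδ2sub⟩ := Metric.isOpen_iff.mp hQoopen q0 hq0
      set r : ℝ := min δ1 δ2 / 2 with hrdef
      have hr : 0 < r := by positivity
      set B : Set (ℝ × ℝ) := Metric.closedBall q0 r with hBdef
      have hBsub : B ⊆ Qo := fun q hq => hδ2sub
        (lt_of_le_of_lt (Metric.mem_closedBall.mp hq) (by
          rw [hrdef]
          have := min_le_right δ1 δ2
          linarith [lt_min_iff.mp (show min δ1 δ2 / 2 < min δ1 δ2 by linarith [lt_min hδ1 hδ2])]))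
      have hBclose : ∀ q ∈ B, |d q - d q0| < |d q0| / 2 := by
        intro q hq
        have hd : dist q q0 < δ1 := by
          have h1 : dist q q0 ≤ r := Metric.mem_closedBall.mp hq
          have : r < δ1 := by
            rw [hrdef]
            have := min_le_left δ1 δ2
            linarith [lt_min hδ1 hδ2]
          linarith
        have := hδ1p hd
        rwa [Real.dist_eq] at this
      have hBm : MeasurableSet B := measurableSet_closedBall
      set f : ℝ × ℝ → ℝ := B.indicator (fun _ => (1:ℝ)) with hfdef
      have hfm : Measurable f := measurable_const.indicator hBm
      have hfb : ∀ q, |f q| ≤ 1 := by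
        intro q
        rw [hfdef]
        by_cases hq : q ∈ B <;> simp [indicator, hq]
      have hfG_eq : (fun q => f q * Gv ν' μ' q) = B.indicator (Gv ν' μ') := by
        funext q
        by_cases hq : q ∈ B <;> simp [hfdef, indicator, hq]
      have hfμ_eq : (fun q => f q * μ' q) = B.indicator μ' := by
        funext q
        by_cases hq : q ∈ B <;> simp [hfdef, indicator, hq]
      have hGB : IntegrableOn (Gv ν' μ') B :=
        (hGcont.mono hBsub).integrableOn_compact (isCompact_closedBall q0 r)
      have hμB : IntegrableOn μ' B :=
        hμ'cont.continuousOn.integrableOn_compact (isCompact_closedBall q0 r)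
      have hfG : IntegrableOn (fun q => f q * Gv ν' μ' q) Qo := by
        rw [hfG_eq]
        exact (hGB.integrable_indicator hBm).integrableOn
      have hinv := h f hfm ⟨1, hfb⟩
      rw [hL f, hR f, main_L ν' μ' hν'cont hν'nonneg hν'prob hμ'int f hfm 1 hfb hfG] at hinv
      -- hinv : ∫_Q f • Gv = ∫_Q f • μ'
      rw [hfG_eq, hfμ_eq, setIntegral_indicator hBm, setIntegral_indicator hBm,
        inter_eq_self_of_subset_right (hBsub.trans hQosub)] at hinv
      have hdzero : ∫ q in B, d q = 0 := by
        rw [hddef]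
        rw [integral_sub hGB hμB, hinv, sub_self]
      have hdcont : ContinuousOn d B := (hGcont.sub hμ'cont.continuousOn).mono hBsub
      rcases lt_or_gt_of_ne hdne with hneg | hpos
      · -- d q0 < 0 : use -d
        refine ball_pos_contradiction (fun q => -d q) q0 r hr hdcont.neg (-d q0 / 2)
          (half_pos (neg_pos.mpr hneg)) ?_ (by rw [integral_neg, hdzero, neg_zero])
        intro q hq
        have := hBclose q hq
        rw [abs_of_neg hneg] at this
        cases' abs_lt.mp this with h1 h2
        linarith
      · -- d q0 > 0
        refine ball_pos_contradiction d q0 r hr hdcont (d q0 / 2) (half_pos hpos) ?_ hdzero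
        intro q hq
        have := hBclose q hq
        rw [abs_of_pos hpos] at this
        cases' abs_lt.mp this with h1 h2
        linarith
    -- from the pointwise identity, derive the formula
    have hIoo : ∀ b ∈ Ioo (0:ℝ) 1, ν' s b * Iv μ' s = μ' (b * s, (1 - b) * s) := by
      intro b hb
      have hq0 : (b * s, (1 - b) * s) ∈ Qo :=
        ⟨mul_pos hb.1 hs, mul_pos (by linarith [hb.2]) hs⟩
      have hk := key _ hq0
      rw [Gv] at hk
      have hsum : b * s + (1 - b) * s = s := by ring
      simp only [hsum] at hk
      rwa [mul_div_cancel_right₀ b (ne_of_gt hs)] at hk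
    have hIcc : ∀ b ∈ Icc (0:ℝ) 1, ν' s b * Iv μ' s = μ' (b * s, (1 - b) * s) := by
      have hEq : EqOn (fun b => ν' s b * Iv μ' s) (fun b => μ' (b * s, (1 - b) * s))
          (Ioo (0:ℝ) 1) := fun b hb => hIoo b hb
      have c1 : Continuous fun b : ℝ => ν' s b * Iv μ' s :=
        (hν'cont.comp (continuous_const.prodMk continuous_id)).mul continuous_const
      have c2 : Continuous fun b : ℝ => μ' (b * s, (1 - b) * s) :=
        hμ'cont.comp ((continuous_id.mul continuous_const).prodMk
          ((continuous_const.sub continuous_id).mul continuous_const))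
      have := hEq.closure c1 c2
      rw [closure_Ioo (zero_ne_one)] at this
      exact fun b hb => this hb
    have hmain := hIcc a ha
    have hmemQ : (a * s, (1 - a) * s) ∈ Ici (0:ℝ) ×ˢ Ici (0:ℝ) :=
      ⟨mul_nonneg ha.1 hs.le, mul_nonneg (by linarith [ha.2]) hs.le⟩
    rw [hμ'eq _ hmemQ, hν'eq s hs.le a ha] at hmain
    rw [hIrel s hs, eq_div_iff (Iv_pos hμ'cont hμ'pos s).ne']
    exact hmain
  · -- the formula implies invariance
    intro hform f hfm hfb
    obtain ⟨C, hC⟩ := hfb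
    have hGeq : EqOn (fun q => f q * Gv ν' μ' q) (fun q => f q * μ' q) Qo := by
      rintro ⟨x, y⟩ ⟨hx, hy⟩
      have hx' : (0:ℝ) < x := hx
      have hy' : (0:ℝ) < y := hy
      have hsxy : (0:ℝ) < x + y := by linarith
      set b : ℝ := x / (x + y) with hbdef
      have hb0 : 0 < b := div_pos hx' hsxy
      have hb1 : b < 1 := (div_lt_one hsxy).mpr (by linarith)
      have hf := hform (x + y) hsxy b ⟨hb0.le, hb1.le⟩
      have hbs : b * (x + y) = x := div_mul_cancel₀ x hsxy.ne'
      have hbs2 : (1 - b) * (x + y) = y := by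
        rw [hbdef]; field_simp; ring
      have hmemQ : (b * (x + y), (1 - b) * (x + y)) ∈ Ici (0:ℝ) ×ˢ Ici (0:ℝ) := by
        rw [hbs, hbs2]; exact ⟨hx'.le, hy'.le⟩
      rw [hIrel _ hsxy, ← hμ'eq _ hmemQ, ← hν'eq _ hsxy.le b ⟨hb0.le, hb1.le⟩,
        eq_div_iff (Iv_pos hμ'cont hμ'pos (x + y)).ne'] at hf
      dsimp only
      rw [Gv]
      dsimp only
      rw [← hbdef, hf, hbs, hbs2]
    have hfμ'int : IntegrableOn (fun q => f q * μ' q) Qo := by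
      apply Integrable.bdd_mul (hμ'int.mono_set hQosub) hfm.aestronglyMeasurable
          (Filter.Eventually.of_forall fun q => (Real.norm_eq_abs _).le.trans (hC q))
    have hfG : IntegrableOn (fun q => f q * Gv ν' μ' q) Qo :=
      hfμ'int.congr_fun (fun q hq => (hGeq hq).symm) hQom
    rw [hL f, hR f, main_L ν' μ' hν'cont hν'nonneg hν'prob hμ'int f hfm C hC hfG]
    calc ∫ q in Ici (0:ℝ) ×ˢ Ici (0:ℝ), f q * Gv ν' μ' q
        = ∫ q in Qo, f q * Gv ν' μ' q := setIntegral_congr_set Q_ae_Qo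
      _ = ∫ q in Qo, f q * μ' q := setIntegral_congr_fun hQom hGeq
      _ = ∫ q in Ici (0:ℝ) ×ˢ Ici (0:ℝ), f q * μ' q := (setIntegral_congr_set Q_ae_Qo).symm
end

section
/- Let μ : (0,∞) → (0,∞) be twice continuously differentiable, let K : (0,1) → (0,∞) be continuously differentiable, and let ψ : (0,∞) → (0,∞) be such that μ(as)·μ((1-a)s) = K(a)·K(1-a)·ψ(s) for all s > 0 and all a ∈ (0,1). Then there exist constants C > 0 and c, c' ∈ ℝ such that μ(s) = C s^c e^{-c' s} for all s > 0. -/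
open Set

private lemma const_on_Ioi_aux {g : ℝ → ℝ}
    (h : ∀ x ∈ Ioi (0:ℝ), HasDerivAt g 0 x) :
    ∀ x ∈ Ioi (0:ℝ), g x = g 1 := by
  have key : ∀ a b : ℝ, 0 < a → a ≤ b → g b = g a := by
    intro a b ha hab
    have hsub : Icc a b ⊆ Ioi (0:ℝ) := fun y hy => lt_of_lt_of_le ha hy.1
    have hcont : ContinuousOn g (Icc a b) := fun y hy =>
      (h y (hsub hy)).continuousAt.continuousWithinAt
    have hderiv : ∀ y ∈ Ico a b, HasDerivWithinAt g 0 (Ici y) y := fun y hy =>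
      (h y (hsub ⟨hy.1, hy.2.le⟩)).hasDerivWithinAt
    exact constant_of_has_deriv_right_zero hcont hderiv b ⟨hab, le_refl b⟩
  intro x hx
  rcases le_total x 1 with hle | hle
  · exact (key x 1 hx hle).symm
  · exact key 1 x one_pos hle

/-- If a twice continuously differentiable positive function `μ` on `(0,∞)`
satisfies the factorization `μ(as)·μ((1-a)s) = K(a)·K(1-a)·ψ(s)` for all `s > 0` and
`a ∈ (0,1)` (with `K` continuously differentiable and positive on `(0,1)` and `ψ`
positive on `(0,∞)`), then `μ` is of Gamma type: `μ(s) = C s^c e^{-c' s}`. -/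
theorem factorization_implies_gamma_type
    (μ K ψ : ℝ → ℝ)
    (hμ : ContDiffOn ℝ 2 μ (Ioi 0))
    (hμpos : ∀ s ∈ Ioi (0:ℝ), 0 < μ s)
    (hK : ContDiffOn ℝ 1 K (Ioo 0 1))
    (hKpos : ∀ a ∈ Ioo (0:ℝ) 1, 0 < K a)
    (hψpos : ∀ s ∈ Ioi (0:ℝ), 0 < ψ s)
    (heq : ∀ s ∈ Ioi (0:ℝ), ∀ a ∈ Ioo (0:ℝ) 1,
      μ (a * s) * μ ((1 - a) * s) = K a * K (1 - a) * ψ s) :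
    ∃ C > (0:ℝ), ∃ c c' : ℝ, ∀ s ∈ Ioi (0:ℝ),
      μ s = C * s ^ c * Real.exp (-c' * s) := by
  have hOpen : IsOpen (Ioi (0:ℝ)) := isOpen_Ioi
  set F : ℝ → ℝ := fun x => Real.log (μ x) with hFdef
  have hFC2 : ContDiffOn ℝ 2 F (Ioi 0) :=
    hμ.log (fun x hx => (hμpos x hx).ne')
  set f : ℝ → ℝ := deriv F with hfdef
  set f2 : ℝ → ℝ := deriv f with hf2def
  have hfC1 : ContDiffOn ℝ 1 f (Ioi 0) :=
    hFC2.deriv_of_isOpen hOpen (by norm_num)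
  have hF' : ∀ x ∈ Ioi (0:ℝ), HasDerivAt F (f x) x := fun x hx =>
    ((hFC2.differentiableOn (by norm_num)).differentiableAt (hOpen.mem_nhds hx)).hasDerivAt
  have hf' : ∀ x ∈ Ioi (0:ℝ), HasDerivAt f (f2 x) x := fun x hx =>
    ((hfC1.differentiableOn one_ne_zero).differentiableAt (hOpen.mem_nhds hx)).hasDerivAt
  -- the functional equation for F
  have E : ∀ s ∈ Ioi (0:ℝ), ∀ a ∈ Ioo (0:ℝ) 1,
      F (a*s) + F ((1-a)*s) = F a + F (1-a) + 2*F (s/2) - 2*F (1/2) := by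
    intro s hs a ha
    have hs0 : (0:ℝ) < s := hs
    have ha0 : 0 < a := ha.1
    have ha1 : 0 < 1 - a := by linarith [ha.2]
    have hhalf : (1/2 : ℝ) ∈ Ioo (0:ℝ) 1 := by norm_num
    have log_eq : ∀ t ∈ Ioi (0:ℝ), ∀ b ∈ Ioo (0:ℝ) 1,
        F (b*t) + F ((1-b)*t)
          = Real.log (K b) + Real.log (K (1-b)) + Real.log (ψ t) := by
      intro t ht b hb
      have hb1 : (1 - b) ∈ Ioo (0:ℝ) 1 := ⟨by linarith [hb.2], by linarith [hb.1]⟩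
      have p1 : 0 < μ (b*t) := hμpos _ (mul_pos hb.1 ht)
      have p2 : 0 < μ ((1-b)*t) := hμpos _ (mul_pos hb1.1 ht)
      have k1 : 0 < K b := hKpos _ hb
      have k2 : 0 < K (1-b) := hKpos _ hb1
      have pψ : 0 < ψ t := hψpos _ ht
      have := congrArg Real.log (heq t ht b hb)
      rwa [Real.log_mul p1.ne' p2.ne', Real.log_mul (mul_pos k1 k2).ne' pψ.ne',
        Real.log_mul k1.ne' k2.ne'] at this
    have h1 := log_eq s hs a ha
    have h2 := log_eq 1 (by norm_num) a ha
    have h3 := log_eq s hs (1/2) hhalf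
    have h4 := log_eq 1 (by norm_num) (1/2) hhalf
    rw [mul_one, mul_one] at h2
    norm_num at h3 h4
    rw [show (1:ℝ)/2 * s = s/2 by ring] at h3
    linarith
  -- differentiate in a : s f(as) - s f((1-a)s) = f(a) - f(1-a)
  have step1 : ∀ s ∈ Ioi (0:ℝ), ∀ a ∈ Ioo (0:ℝ) 1,
      s * f (a*s) - s * f ((1-a)*s) = f a - f (1-a) := by
    intro s hs a ha
    have hs0 : (0:ℝ) < s := hs
    have pas : a*s ∈ Ioi (0:ℝ) := mul_pos ha.1 hs0
    have pbs : (1-a)*s ∈ Ioi (0:ℝ) := mul_pos (by linarith [ha.2]) hs0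
    have ha' : a ∈ Ioi (0:ℝ) := ha.1
    have hb' : (1-a) ∈ Ioi (0:ℝ) := by simp; linarith [ha.2]
    have hinner1 : HasDerivAt (fun b : ℝ => b * s) s a := hasDerivAt_mul_const s
    have hinner2 : HasDerivAt (fun b : ℝ => (1-b) * s) (-1 * s) a :=
      ((hasDerivAt_id a).const_sub 1).mul_const s
    have hL : HasDerivAt (fun b => F (b*s) + F ((1-b)*s))
        (f (a*s) * s + f ((1-a)*s) * (-1*s)) a := by
      have h := ((hF' _ pas).comp a hinner1).add ((hF' _ pbs).comp a hinner2); exact h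
    have hinner3 : HasDerivAt (fun b : ℝ => 1 - b) (-1) a := (hasDerivAt_id a).const_sub 1
    have hR : HasDerivAt (fun b => F b + F (1-b) + 2*F (s/2) - 2*F (1/2))
        (f a + f (1-a) * (-1)) a := by
      have := ((hF' a ha').add ((hF' _ hb').comp a hinner3)).add_const (2*F (s/2))
      simpa using this.sub_const (2*F (1/2))
    have hev : (fun b => F (b*s) + F ((1-b)*s))
        =ᶠ[nhds a] (fun b => F b + F (1-b) + 2*F (s/2) - 2*F (1/2)) := by
      filter_upwards [isOpen_Ioo.mem_nhds ha] with b hb using E s hs b hb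
    have huniq := hL.unique (hR.congr_of_eventuallyEq hev)
    linear_combination huniq
  -- differentiate step1 in s
  have step2 : ∀ s ∈ Ioi (0:ℝ), ∀ a ∈ Ioo (0:ℝ) 1,
      f2 (a*s) * a - f2 ((1-a)*s) * (1-a) = (f a - f (1-a)) * (-(s^2)⁻¹) := by
    intro s hs a ha
    have hs0 : (0:ℝ) < s := hs
    have pas : a*s ∈ Ioi (0:ℝ) := mul_pos ha.1 hs0
    have pbs : (1-a)*s ∈ Ioi (0:ℝ) := mul_pos (by linarith [ha.2]) hs0
    have hinner1 : HasDerivAt (fun t : ℝ => a * t) a s := by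
      simpa using (hasDerivAt_id s).const_mul a
    have hinner2 : HasDerivAt (fun t : ℝ => (1-a) * t) (1-a) s := by
      simpa using (hasDerivAt_id s).const_mul (1-a)
    have pas' : a*s ∈ Ioi (0:ℝ) := pas
    have hL : HasDerivAt (fun t => f (a*t) - f ((1-a)*t))
        (f2 (a*s) * a - f2 ((1-a)*s) * (1-a)) s := by
      have h1 : HasDerivAt (fun t => f (a*t)) (f2 (a*s) * a) s := by
        have := (hf' _ (by simpa [mul_comm] using pas)).comp s hinner1
        simpa [mul_comm, Function.comp_def] using this
      have h2 : HasDerivAt (fun t => f ((1-a)*t)) (f2 ((1-a)*s) * (1-a)) s := by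
        exact (hf' _ pbs).comp s hinner2
      exact h1.sub h2
    have hR : HasDerivAt (fun t : ℝ => (f a - f (1-a)) * t⁻¹)
        ((f a - f (1-a)) * (-(s^2)⁻¹)) s :=
      (hasDerivAt_inv hs0.ne').const_mul (f a - f (1-a))
    have hev : (fun t => f (a*t) - f ((1-a)*t))
        =ᶠ[nhds s] (fun t : ℝ => (f a - f (1-a)) * t⁻¹) := by
      filter_upwards [hOpen.mem_nhds hs] with t ht
      have hstep := step1 t ht a ha
      have ht0 : (t:ℝ) ≠ 0 := (show (0:ℝ) < t from ht).ne'
      rw [eq_mul_inv_iff_mul_eq₀ ht0]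
      first
        | linear_combination 2*hstep
        | linear_combination -2*hstep
        | linear_combination hstep
        | linear_combination -hstep
    exact (hL.unique (hR.congr_of_eventuallyEq hev))
  -- combine: x f2 x + f x is constant
  have key : ∀ x ∈ Ioi (0:ℝ), x * f2 x + f x = 1 * f2 1 + f 1 := by
    have main : ∀ x ∈ Ioi (0:ℝ), ∀ y ∈ Ioi (0:ℝ),
        x * f2 x + f x = y * f2 y + f y := by
      intro x hx y hy
      have hx0 : (0:ℝ) < x := hx
      have hy0 : (0:ℝ) < y := hy
      obtain ⟨s, hsdef⟩ : ∃ s : ℝ, s = x + y := ⟨_, rfl⟩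
      have hs0 : (0:ℝ) < s := by rw [hsdef]; positivity
      have hs : s ∈ Ioi (0:ℝ) := hs0
      obtain ⟨a, hadef⟩ : ∃ a : ℝ, a = x / s := ⟨_, rfl⟩
      have ha : a ∈ Ioo (0:ℝ) 1 := ⟨by rw [hadef]; positivity, by
        rw [hadef, div_lt_one hs0, hsdef]; linarith⟩
      have hax : a * s = x := by rw [hadef]; field_simp
      have hay : (1 - a) * s = y := by
        rw [hadef]; field_simp; rw [hsdef]; ring
      have h1 := step1 s hs a ha
      have h2 := step2 s hs a ha
      rw [hax, hay] at h1 h2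
      have h2' : (f2 x * a - f2 y * (1-a)) * s^2 = -(s * f x - s * f y) := by
        rw [h2, ← h1]
        field_simp
      have goal' : s * (x * f2 x + f x) = s * (y * f2 y + f y) := by
        linear_combination h2' - (f2 x * s) * hax + (f2 y * s) * hay
      exact mul_left_cancel₀ hs0.ne' goal'
    intro x hx
    exact main x hx 1 (by norm_num)
  set cc : ℝ := 1 * f2 1 + f 1 with hccdef
  -- x * f x - cc * x is constant on Ioi 0
  have hg : ∀ x ∈ Ioi (0:ℝ), HasDerivAt (fun x => x * f x - cc * x) 0 x := by
    intro x hx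
    have h1 : HasDerivAt (fun x => x * f x) (1 * f x + x * f2 x) x :=
      (hasDerivAt_id x).mul (hf' x hx)
    have h2 : HasDerivAt (fun x : ℝ => cc * x) cc x := by
      simpa using (hasDerivAt_id x).const_mul cc
    have := h1.sub h2
    have hval : 1 * f x + x * f2 x - cc = 0 := by
      have := key x hx
      linarith
    rwa [hval] at this
  have hconst := const_on_Ioi_aux hg
  set c : ℝ := 1 * f 1 - cc * 1 with hcdef
  have hfx : ∀ x ∈ Ioi (0:ℝ), f x = c / x + cc := by
    intro x hx
    have hx0 : (0:ℝ) < x := hx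
    have := hconst x hx
    field_simp
    linear_combination this
  -- F x - (c log x + cc x) is constant
  have hΦ : ∀ x ∈ Ioi (0:ℝ), HasDerivAt (fun x => F x - (c * Real.log x + cc * x)) 0 x := by
    intro x hx
    have hx0 : (0:ℝ) < x := hx
    have h1 : HasDerivAt (fun x : ℝ => c * Real.log x) (c * x⁻¹) x :=
      (Real.hasDerivAt_log hx0.ne').const_mul c
    have h2 : HasDerivAt (fun x : ℝ => cc * x) cc x := by
      simpa using (hasDerivAt_id x).const_mul cc
    have := (hF' x hx).sub (h1.add h2)
    have hval : f x - (c * x⁻¹ + cc) = 0 := by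
      rw [hfx x hx]; field_simp; ring
    rwa [hval] at this
  have hconst2 := const_on_Ioi_aux hΦ
  refine ⟨Real.exp (F 1 - (c * Real.log 1 + cc * 1)), Real.exp_pos _, c, -cc, ?_⟩
  intro s hs
  have hs0 : (0:ℝ) < s := hs
  have hFs : F s = c * Real.log s + cc * s + (F 1 - (c * Real.log 1 + cc * 1)) := by
    have := hconst2 s hs
    linarith
  have hμs : μ s = Real.exp (F s) := (Real.exp_log (hμpos s hs)).symm
  rw [hμs, hFs, Real.exp_add, Real.exp_add, Real.rpow_def_of_pos hs0]
  ring_nf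
end

section
/- Fix b > 0 and θ > 0. Let ν(ε) = ε^{b-1}(1-ε)^{b-1}/B(b,b) be the Beta(b,b) density on [0,1], and let μ(x) = θ^b x^{b-1} e^{-θx}/Γ(b) be the Gamma(b,θ) density on (0,∞). Then the product measure μ(x)μ(y)dxdy is reversible, and in particular invariant, for the one-step redistribution operator P with kernel ν(ε)dε: for all bounded measurable f, g : [0,∞)² → ℝ, ∫∫ Pf·g μ(x)μ(y) dx dy = ∫∫ f·Pg μ(x)μ(y) dx dy. -/
open MeasureTheory Set

/-- The real Beta function `B(a,b) = ∫₀¹ t^{a-1}(1-t)^{b-1} dt`. -/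
noncomputable def betaFun (a b : ℝ) : ℝ :=
  ∫ t in (0:ℝ)..1, t ^ (a - 1) * (1 - t) ^ (b - 1)

/-- The Beta(b,b) density on `[0,1]`. -/
noncomputable def betaDensity (b e : ℝ) : ℝ :=
  e ^ (b - 1) * (1 - e) ^ (b - 1) / betaFun b b

/-- The Gamma(b,θ) density on `(0,∞)`. -/
noncomputable def gammaDensity (b θ x : ℝ) : ℝ :=
  θ ^ b * x ^ (b - 1) * Real.exp (-θ * x) / Real.Gamma b

section Aux

variable {b θ : ℝ}

/-- The complex Beta integral of real arguments is the real Beta function. -/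
lemma betaIntegral_ofReal (b : ℝ) :
    Complex.betaIntegral b b = (betaFun b b : ℂ) := by
  rw [Complex.betaIntegral, betaFun, ← intervalIntegral.integral_ofReal]
  apply intervalIntegral.integral_congr
  intro t ht
  rw [uIcc_of_le (by norm_num : (0:ℝ) ≤ 1)] at ht
  push_cast
  rw [Complex.ofReal_cpow ht.1, Complex.ofReal_cpow (by linarith [ht.2] : (0:ℝ) ≤ 1 - t)]
  push_cast
  ring

lemma Gamma_sq_eq (hb : 0 < b) :
    Real.Gamma b * Real.Gamma b = Real.Gamma (2 * b) * betaFun b b := by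
  have h := Complex.Gamma_mul_Gamma_eq_betaIntegral
    (by simpa using hb : 0 < (b : ℂ).re) (by simpa using hb : 0 < (b : ℂ).re)
  rw [betaIntegral_ofReal] at h
  have h2 : ((b : ℂ) + b) = ((2 * b : ℝ) : ℂ) := by push_cast; ring
  rw [h2, Complex.Gamma_ofReal, Complex.Gamma_ofReal] at h
  exact_mod_cast h

/-- Integrability of the (unnormalized) Beta density on `(0,1]`. -/
lemma beta_integrand_integrableOn (hb : 0 < b) :
    IntegrableOn (fun e : ℝ => e ^ (b - 1) * (1 - e) ^ (b - 1)) (Ioc 0 1) := by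
  have h := Complex.betaIntegral_convergent
    (u := (b : ℂ)) (v := (b : ℂ)) (by simpa using hb) (by simpa using hb)
  have h1 : IntegrableOn
      (fun x : ℝ => (x : ℂ) ^ ((b : ℂ) - 1) * (1 - (x : ℂ)) ^ ((b : ℂ) - 1)) (Ioc 0 1) :=
    (intervalIntegrable_iff_integrableOn_Ioc_of_le (by norm_num : (0:ℝ) ≤ 1)).mp h
  have h2 := MeasureTheory.Integrable.re h1
  apply IntegrableOn.congr_fun h2 _ measurableSet_Ioc
  intro x hx
  have hx0 : (0:ℝ) ≤ x := hx.1.le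
  have hx1 : (0:ℝ) ≤ 1 - x := by linarith [hx.2]
  have e1 : ((b : ℂ) - 1) = ((b - 1 : ℝ) : ℂ) := by push_cast; ring
  simp only [e1, ← Complex.ofReal_cpow hx0, RCLike.re_to_complex]
  rw [show (1 - (x:ℂ)) = (((1 - x : ℝ)) : ℂ) by push_cast; ring,
    ← Complex.ofReal_cpow hx1, ← Complex.ofReal_mul, Complex.ofReal_re]

lemma betaFun_pos (hb : 0 < b) : 0 < betaFun b b := by
  rw [betaFun]
  apply intervalIntegral.intervalIntegral_pos_of_pos_on
  · rw [intervalIntegrable_iff_integrableOn_Ioc_of_le (by norm_num : (0:ℝ) ≤ 1)]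
    exact beta_integrand_integrableOn hb
  · intro x hx
    exact mul_pos (Real.rpow_pos_of_pos hx.1 _)
      (Real.rpow_pos_of_pos (by linarith [hx.2]) _)
  · norm_num

lemma betaDensity_nonneg (hb : 0 < b) {e : ℝ} (he0 : 0 ≤ e) (he1 : e ≤ 1) :
    0 ≤ betaDensity b e := by
  apply div_nonneg _ (betaFun_pos hb).le
  exact mul_nonneg (Real.rpow_nonneg he0 _) (Real.rpow_nonneg (by linarith) _)

lemma betaDensity_integrableOn (hb : 0 < b) :
    IntegrableOn (betaDensity b) (Ioc 0 1) := by
  unfold betaDensity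
  exact (beta_integrand_integrableOn hb).div_const _

lemma measurable_betaDensity : Measurable (betaDensity b) := by
  unfold betaDensity
  fun_prop

lemma measurable_gammaDensity (c : ℝ) : Measurable (gammaDensity c θ) := by
  unfold gammaDensity
  fun_prop

lemma gammaDensity_nonneg (hc : 0 < b) (hθ : 0 < θ) {x : ℝ} (hx : 0 ≤ x) :
    0 ≤ gammaDensity b θ x := by
  unfold gammaDensity
  have := Real.Gamma_pos_of_pos hc
  positivity

lemma gammaDensity_integrableOn (hc : 0 < b) (hθ : 0 < θ) :
    IntegrableOn (gammaDensity b θ) (Ioi 0) := by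
  have h := integrableOn_rpow_mul_exp_neg_mul_rpow (p := 1) (s := b - 1) (b := θ)
    (by linarith) (by norm_num) hθ
  have h2 : IntegrableOn (fun x : ℝ => x ^ (b - 1) * Real.exp (-θ * x)) (Ioi 0) := by
    apply IntegrableOn.congr_fun h _ measurableSet_Ioi
    intro x hx
    simp [Real.rpow_one]
  unfold gammaDensity
  have h3 := (h2.const_mul (θ ^ b)).div_const (Real.Gamma b)
  apply IntegrableOn.congr_fun h3 _ measurableSet_Ioi
  intro x hx
  simp only
  ring

/-- Key density identity: the pushforward density identity
`γ_b(es) γ_b((1-e)s) s = ν(e) γ_{2b}(s)`. -/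
lemma density_identity (hb : 0 < b) (hθ : 0 < θ) {e s : ℝ}
    (he0 : 0 < e) (he1 : e < 1) (hs : 0 < s) :
    gammaDensity b θ (e * s) * gammaDensity b θ ((1 - e) * s) * s
      = betaDensity b e * gammaDensity (2 * b) θ s := by
  have h1e : (0:ℝ) < 1 - e := by linarith
  have h1 : (e * s) ^ (b - 1) = e ^ (b - 1) * s ^ (b - 1) :=
    Real.mul_rpow he0.le hs.le
  have h2 : ((1 - e) * s) ^ (b - 1) = (1 - e) ^ (b - 1) * s ^ (b - 1) :=
    Real.mul_rpow h1e.le hs.le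
  have h3 : Real.exp (-θ * (e * s)) * Real.exp (-θ * ((1 - e) * s)) = Real.exp (-θ * s) := by
    rw [← Real.exp_add]; congr 1; ring
  have h4 : θ ^ (2 * b) = θ ^ b * θ ^ b := by
    rw [← Real.rpow_add hθ]; congr 1; ring
  have h5 : s ^ (2 * b - 1) = s ^ (b - 1) * s ^ (b - 1) * s := by
    nth_rewrite 4 [← Real.rpow_one s]
    rw [← Real.rpow_add hs, ← Real.rpow_add hs]; congr 1; ring
  have hΓ : Real.Gamma b ≠ 0 := (Real.Gamma_pos_of_pos hb).ne'
  have hΓ2 : Real.Gamma (2 * b) ≠ 0 := (Real.Gamma_pos_of_pos (by linarith)).ne'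
  have hB : betaFun b b ≠ 0 := (betaFun_pos hb).ne'
  have hG := Gamma_sq_eq hb
  unfold gammaDensity betaDensity
  rw [h1, h2, div_mul_div_comm, div_mul_eq_mul_div, div_mul_div_comm, hG,
    mul_comm (Real.Gamma (2 * b)) (betaFun b b)]
  congr 1
  rw [h4, h5, ← h3]
  ring

/-- Change of variables `(e, s) ↦ (e s, (1-e) s)` from `(0,1) × (0,∞)` onto `(0,∞)²`. -/
lemma change_of_variables (F : ℝ × ℝ → ℝ) :
    ∫ q in Ioi (0:ℝ) ×ˢ Ioi (0:ℝ), F q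
      = ∫ p in Ioo (0:ℝ) 1 ×ˢ Ioi (0:ℝ), p.2 * F (p.1 * p.2, (1 - p.1) * p.2) := by
  set ψ : ℝ × ℝ → ℝ × ℝ := fun p => (p.1 * p.2, (1 - p.1) * p.2) with hψ
  set T : Set (ℝ × ℝ) := Ioo (0:ℝ) 1 ×ˢ Ioi (0:ℝ) with hT
  set B : ℝ × ℝ → ℝ × ℝ →L[ℝ] ℝ × ℝ := fun p =>
    LinearMap.toContinuousLinearMap (Matrix.toLin (Module.Basis.finTwoProd ℝ) (Module.Basis.finTwoProd ℝ)
      !![p.2, p.1; -p.2, 1 - p.1]) with hB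
  have hd : ∀ p : ℝ × ℝ, HasFDerivAt ψ (B p) p := by
    intro p
    rw [hB]
    simp only
    rw [Matrix.toLin_finTwoProd_toContinuousLinearMap]
    have e1 : HasFDerivAt (fun p : ℝ × ℝ => p.1 * p.2)
        (p.2 • ContinuousLinearMap.fst ℝ ℝ ℝ + p.1 • ContinuousLinearMap.snd ℝ ℝ ℝ) p := by
      have h := (hasFDerivAt_fst (𝕜 := ℝ) (p := p) (F := ℝ)).mul
        (hasFDerivAt_snd (𝕜 := ℝ) (p := p) (E := ℝ))
      rw [add_comm]
      exact h
    have e2 : HasFDerivAt (fun p : ℝ × ℝ => (1 - p.1) * p.2)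
        ((-p.2) • ContinuousLinearMap.fst ℝ ℝ ℝ + (1 - p.1) • ContinuousLinearMap.snd ℝ ℝ ℝ)
        p := by
      have h := (hasFDerivAt_fst (𝕜 := ℝ) (p := p) (F := ℝ)).mul
        (hasFDerivAt_snd (𝕜 := ℝ) (p := p) (E := ℝ))
      have h2' := (hasFDerivAt_snd (𝕜 := ℝ) (p := p) (E := ℝ)).sub h
      have heq : (Prod.snd - Prod.fst * Prod.snd : ℝ × ℝ → ℝ) = fun y : ℝ × ℝ => (1 - y.1) * y.2 :=
        funext fun y => by simp only [Pi.sub_apply, Pi.mul_apply]; ring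
      rw [heq] at h2'
      refine h2'.congr_fderiv ?_
      refine ContinuousLinearMap.ext fun x => ?_
      simp only [ContinuousLinearMap.add_apply, ContinuousLinearMap.smul_apply,
        ContinuousLinearMap.sub_apply, ContinuousLinearMap.coe_fst', ContinuousLinearMap.coe_snd',
        smul_eq_mul]
      ring
    exact e1.prodMk e2
  have hdet : ∀ p : ℝ × ℝ, (B p).det = p.2 := by
    intro p
    rw [hB]
    simp only [LinearMap.det_toContinuousLinearMap, LinearMap.det_toLin,
      Matrix.det_fin_two_of]
    ring
  have himg : ψ '' T = Ioi (0:ℝ) ×ˢ Ioi (0:ℝ) := by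
    ext q
    constructor
    · rintro ⟨⟨e, s⟩, ⟨⟨he0, he1⟩, hs⟩, rfl⟩
      simp only [mem_Ioi] at hs
      exact ⟨mul_pos he0 hs, mul_pos (by linarith) hs⟩
    · intro hq
      obtain ⟨hx, hy⟩ := hq
      simp only [mem_Ioi] at hx hy
      have hxy : 0 < q.1 + q.2 := by linarith
      refine ⟨(q.1 / (q.1 + q.2), q.1 + q.2),
        ⟨⟨div_pos hx hxy, (div_lt_one hxy).mpr (by linarith)⟩, hxy⟩, ?_⟩
      have h1 : q.1 / (q.1 + q.2) * (q.1 + q.2) = q.1 := div_mul_cancel₀ _ hxy.ne'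
      have h2 : (1 - q.1 / (q.1 + q.2)) * (q.1 + q.2) = q.2 := by
        field_simp
        ring
      simp only [hψ]
      rw [h1, h2]
  have hinj : InjOn ψ T := by
    rintro ⟨e, s⟩ ⟨⟨he0, he1⟩, hs⟩ ⟨e', s'⟩ ⟨⟨he0', he1'⟩, hs'⟩ heq
    simp only [hψ, Prod.mk.injEq] at heq
    obtain ⟨h1, h2⟩ := heq
    have hss : s = s' := by linear_combination h1 + h2
    subst hss
    have hs0 : s ≠ 0 := (mem_Ioi.mp hs).ne'
    have he : e = e' := mul_right_cancel₀ hs0 h1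
    simp [he]
  have hmeas : MeasurableSet T := measurableSet_Ioo.prod measurableSet_Ioi
  calc ∫ q in Ioi (0:ℝ) ×ˢ Ioi (0:ℝ), F q = ∫ q in ψ '' T, F q := by rw [himg]
    _ = ∫ p in T, |(B p).det| • F (ψ p) :=
        integral_image_eq_integral_abs_det_fderiv_smul volume hmeas
          (fun p _ => (hd p).hasFDerivWithinAt) hinj F
    _ = ∫ p in T, p.2 * F (p.1 * p.2, (1 - p.1) * p.2) := by
        apply setIntegral_congr_fun hmeas
        intro p hp
        show |(B p).det| • F (ψ p) = p.2 * F (p.1 * p.2, (1 - p.1) * p.2)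
        rw [hdet p, abs_of_pos (mem_Ioi.mp hp.2)]
        rfl

end Aux

/-- For `b, θ > 0`, the product of two Gamma(b,θ) distributions is reversible
(and in particular invariant) for the one-step redistribution operator with Beta(b,b)
redistribution density. -/
theorem gamma_product_reversible_for_beta_redistribution
    (b θ : ℝ) (hb : 0 < b) (hθ : 0 < θ) :
    ∀ f g : ℝ × ℝ → ℝ, Measurable f → (∃ C, ∀ q, |f q| ≤ C) →
      Measurable g → (∃ C, ∀ q, |g q| ≤ C) →
      ∫ q in Ici (0:ℝ) ×ˢ Ici (0:ℝ),
          (∫ e in (0:ℝ)..1,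
            f (e * (q.1 + q.2), (1 - e) * (q.1 + q.2)) * betaDensity b e)
            * g q * (gammaDensity b θ q.1 * gammaDensity b θ q.2)
        = ∫ q in Ici (0:ℝ) ×ˢ Ici (0:ℝ),
            f q * (∫ e in (0:ℝ)..1,
              g (e * (q.1 + q.2), (1 - e) * (q.1 + q.2)) * betaDensity b e)
              * (gammaDensity b θ q.1 * gammaDensity b θ q.2) := by
  -- notation
  set ν : ℝ → ℝ := betaDensity b with hν
  set γ : ℝ → ℝ := gammaDensity b θ with hγ
  set γ₂ : ℝ → ℝ := gammaDensity (2 * b) θ with hγ₂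
  set A : (ℝ × ℝ → ℝ) → ℝ → ℝ :=
    fun f s => ∫ e in (0:ℝ)..1, f (e * s, (1 - e) * s) * betaDensity b e with hA
  -- auxiliary facts
  have νmeas : Measurable ν := measurable_betaDensity
  have νint : IntegrableOn ν (Ioc 0 1) := betaDensity_integrableOn hb
  have νint' : IntegrableOn ν (Ioo 0 1) :=
    νint.mono_set Ioo_subset_Ioc_self
  have γ₂int : IntegrableOn γ₂ (Ioi 0) := gammaDensity_integrableOn (by linarith) hθ
  set I : ℝ := ∫ e in Ioc (0:ℝ) 1, ν e with hI
  -- A f as a set integral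
  have hAset : ∀ (f : ℝ × ℝ → ℝ) (s : ℝ),
      A f s = ∫ e in Ioc (0:ℝ) 1, f (e * s, (1 - e) * s) * ν e := by
    intro f s
    rw [hA]
    exact intervalIntegral.integral_of_le (by norm_num)
  -- measurability of A f
  have hAmeas : ∀ f : ℝ × ℝ → ℝ, Measurable f → Measurable (A f) := by
    intro f hf
    have hm : Measurable fun p : ℝ × ℝ => f (p.2 * p.1, (1 - p.2) * p.1) * ν p.2 := by
      apply Measurable.mul
      · exact hf.comp (by fun_prop)
      · exact νmeas.comp measurable_snd
    have hsm := hm.stronglyMeasurable.integral_prod_right'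
      (ν := volume.restrict (Ioc (0:ℝ) 1))
    have heq : A f = fun x : ℝ =>
        ∫ y, (fun p : ℝ × ℝ => f (p.2 * p.1, (1 - p.2) * p.1) * ν p.2) (x, y)
          ∂(volume.restrict (Ioc (0:ℝ) 1)) := by
      funext s
      rw [hAset f s]
    rw [heq]
    exact hsm.measurable
  -- bound for A f
  have hAbound : ∀ (f : ℝ × ℝ → ℝ) (C : ℝ), Measurable f → (∀ q, |f q| ≤ C) →
      ∀ s, |A f s| ≤ C * I := by
    intro f C hf hC s
    have hC0 : 0 ≤ C := le_trans (abs_nonneg _) (hC (0, 0))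
    rw [hAset]
    have hb1 : ∀ᵐ e ∂(volume.restrict (Ioc (0:ℝ) 1)),
        ‖f (e * s, (1 - e) * s) * ν e‖ ≤ C * ν e := by
      rw [ae_restrict_iff' measurableSet_Ioc]
      filter_upwards with e he
      have hν0 : 0 ≤ ν e := betaDensity_nonneg hb he.1.le he.2
      rw [norm_mul, Real.norm_eq_abs, Real.norm_eq_abs, abs_of_nonneg hν0]
      exact mul_le_mul_of_nonneg_right (hC _) hν0
    have := norm_integral_le_of_norm_le (νint.const_mul C) hb1
    rw [integral_const_mul] at this
    simpa [Real.norm_eq_abs] using this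
  -- the key lemma
  have key : ∀ f g : ℝ × ℝ → ℝ, Measurable f → (∃ C, ∀ q, |f q| ≤ C) →
      Measurable g → (∃ C, ∀ q, |g q| ≤ C) →
      ∫ q in Ici (0:ℝ) ×ˢ Ici (0:ℝ), A f (q.1 + q.2) * g q * (γ q.1 * γ q.2)
        = ∫ s in Ioi (0:ℝ), A f s * A g s * γ₂ s := by
    rintro f g hf ⟨Cf, hCf⟩ hg ⟨Cg, hCg⟩
    have hCf0 : 0 ≤ Cf := le_trans (abs_nonneg _) (hCf (0, 0))
    have hCg0 : 0 ≤ Cg := le_trans (abs_nonneg _) (hCg (0, 0))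
    -- step 0: replace Ici by Ioi
    have step0 :
        ∫ q in Ici (0:ℝ) ×ˢ Ici (0:ℝ), A f (q.1 + q.2) * g q * (γ q.1 * γ q.2)
          = ∫ q in Ioi (0:ℝ) ×ˢ Ioi (0:ℝ), A f (q.1 + q.2) * g q * (γ q.1 * γ q.2) := by
      apply setIntegral_congr_set
      rw [Measure.volume_eq_prod]
      exact (Measure.set_prod_ae_eq Ioi_ae_eq_Ici Ioi_ae_eq_Ici).symm
    -- step 1: change of variables
    have step1 := change_of_variables (fun q => A f (q.1 + q.2) * g q * (γ q.1 * γ q.2))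
    -- step 2: pointwise simplification on the set
    have step2 :
        ∫ p in Ioo (0:ℝ) 1 ×ˢ Ioi (0:ℝ), p.2 *
            (fun q : ℝ × ℝ => A f (q.1 + q.2) * g q * (γ q.1 * γ q.2))
              (p.1 * p.2, (1 - p.1) * p.2)
          = ∫ p in Ioo (0:ℝ) 1 ×ˢ Ioi (0:ℝ),
              (g (p.1 * p.2, (1 - p.1) * p.2) * ν p.1) * (A f p.2 * γ₂ p.2) := by
      apply setIntegral_congr_fun (measurableSet_Ioo.prod measurableSet_Ioi)
      rintro ⟨e, s⟩ ⟨⟨he0, he1⟩, hs⟩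
      simp only [mem_Ioi] at hs
      have hsum : e * s + (1 - e) * s = s := by ring
      have hdens := density_identity hb hθ he0 he1 hs
      show s * (A f (e * s + (1 - e) * s) * g (e * s, (1 - e) * s)
          * (γ (e * s) * γ ((1 - e) * s))) = _
      rw [hsum]
      calc s * (A f s * g (e * s, (1 - e) * s) * (γ (e * s) * γ ((1 - e) * s)))
          = (A f s * g (e * s, (1 - e) * s)) * (γ (e * s) * γ ((1 - e) * s) * s) := by ring
        _ = (A f s * g (e * s, (1 - e) * s)) * (ν e * γ₂ s) := by rw [hγ, hγ₂, hν]; rw [hdens]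
        _ = (g (e * s, (1 - e) * s) * ν e) * (A f s * γ₂ s) := by ring
    -- step 3: Fubini
    set H : ℝ × ℝ → ℝ := fun p =>
      (g (p.1 * p.2, (1 - p.1) * p.2) * ν p.1) * (A f p.2 * γ₂ p.2) with hH
    have hHmeas : Measurable H := by
      apply Measurable.mul
      · exact (hg.comp (by fun_prop)).mul (νmeas.comp measurable_fst)
      · exact ((hAmeas f hf).comp measurable_snd).mul
          ((measurable_gammaDensity (2 * b)).comp measurable_snd)
    have hHint : Integrable H
        ((volume.restrict (Ioo (0:ℝ) 1)).prod (volume.restrict (Ioi (0:ℝ)))) := by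
      have hbd : Integrable (fun p : ℝ × ℝ => (Cg * (Cf * I)) * (ν p.1 * γ₂ p.2))
          ((volume.restrict (Ioo (0:ℝ) 1)).prod (volume.restrict (Ioi (0:ℝ)))) :=
        (νint'.mul_prod γ₂int).const_mul _
      apply hbd.mono' (hHmeas.aestronglyMeasurable)
      rw [Measure.prod_restrict]
      rw [ae_restrict_iff' (measurableSet_Ioo.prod measurableSet_Ioi)]
      filter_upwards with p hp
      obtain ⟨⟨he0, he1⟩, hs⟩ := hp
      simp only [mem_Ioi] at hs
      have hν0 : 0 ≤ ν p.1 := betaDensity_nonneg hb he0.le he1.le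
      have hγ₂0 : 0 ≤ γ₂ p.2 := gammaDensity_nonneg (by linarith) hθ hs.le
      rw [hH]
      simp only [Real.norm_eq_abs, abs_mul]
      rw [abs_of_nonneg hν0, abs_of_nonneg hγ₂0]
      have h1 : |g (p.1 * p.2, (1 - p.1) * p.2)| * ν p.1 ≤ Cg * ν p.1 :=
        mul_le_mul_of_nonneg_right (hCg _) hν0
      have h2 : |A f p.2| * γ₂ p.2 ≤ (Cf * I) * γ₂ p.2 :=
        mul_le_mul_of_nonneg_right (hAbound f Cf hf hCf p.2) hγ₂0
      calc |g (p.1 * p.2, (1 - p.1) * p.2)| * ν p.1 * (|A f p.2| * γ₂ p.2)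
          ≤ (Cg * ν p.1) * ((Cf * I) * γ₂ p.2) := by
            apply mul_le_mul h1 h2 (by positivity) (by positivity)
        _ = Cg * (Cf * I) * (ν p.1 * γ₂ p.2) := by ring
    have step3 :
        ∫ p in Ioo (0:ℝ) 1 ×ˢ Ioi (0:ℝ), H p
          = ∫ s in Ioi (0:ℝ), ∫ e in Ioo (0:ℝ) 1, H (e, s) := by
      rw [Measure.volume_eq_prod, ← Measure.prod_restrict]
      exact integral_prod_symm H hHint
    -- step 4: compute the inner integral
    have step4 : ∀ s ∈ Ioi (0:ℝ),
        (∫ e in Ioo (0:ℝ) 1, H (e, s)) = A f s * A g s * γ₂ s := by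
      intro s _
      have : (∫ e in Ioo (0:ℝ) 1, H (e, s))
          = ∫ e in Ioo (0:ℝ) 1, (g (e * s, (1 - e) * s) * ν e) * (A f s * γ₂ s) := rfl
      rw [this, integral_mul_const]
      have : (∫ e in Ioo (0:ℝ) 1, g (e * s, (1 - e) * s) * ν e)
          = ∫ e in Ioc (0:ℝ) 1, g (e * s, (1 - e) * s) * ν e :=
        setIntegral_congr_set Ioo_ae_eq_Ioc
      rw [this, ← hAset g s]
      ring
    rw [step0, step1, step2, step3]
    rw [setIntegral_congr_fun measurableSet_Ioi step4]
  -- assemble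
  intro f g hf hbf hg hbg
  have h1 := key f g hf hbf hg hbg
  have h2 := key g f hg hbg hf hbf
  have hrhs : ∫ q in Ici (0:ℝ) ×ˢ Ici (0:ℝ),
      f q * A g (q.1 + q.2) * (γ q.1 * γ q.2)
        = ∫ q in Ici (0:ℝ) ×ˢ Ici (0:ℝ), A g (q.1 + q.2) * f q * (γ q.1 * γ q.2) := by
    apply setIntegral_congr_fun (measurableSet_Ici.prod measurableSet_Ici)
    intro q _
    ring
  have hsym : ∫ s in Ioi (0:ℝ), A f s * A g s * γ₂ s
      = ∫ s in Ioi (0:ℝ), A g s * A f s * γ₂ s := by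
    apply setIntegral_congr_fun measurableSet_Ioi
    intro s _
    ring
  calc ∫ q in Ici (0:ℝ) ×ˢ Ici (0:ℝ), A f (q.1 + q.2) * g q * (γ q.1 * γ q.2)
      = ∫ s in Ioi (0:ℝ), A f s * A g s * γ₂ s := h1
    _ = ∫ s in Ioi (0:ℝ), A g s * A f s * γ₂ s := hsym
    _ = ∫ q in Ici (0:ℝ) ×ˢ Ici (0:ℝ), A g (q.1 + q.2) * f q * (γ q.1 * γ q.2) := h2.symm
    _ = ∫ q in Ici (0:ℝ) ×ˢ Ici (0:ℝ), f q * A g (q.1 + q.2) * (γ q.1 * γ q.2) := hrhs.symm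
end

section
/- Let ν(s,dε) be a probability kernel from [0,∞) to [0,1] and let γ be a probability measure on [0,∞). Let μ be the probability measure on [0,∞)² defined by μ(A) = ∫₀^∞ ∫₀¹ 1_A(εs, (1-ε)s) ν(s,dε) γ(ds), i.e. μ is the law of (εS, (1-ε)S) where S has law γ and, conditionally on S = s, ε has law ν(s,·). Then μ is invariant for the one-step redistribution operator P: for every bounded measurable f : [0,∞)² → ℝ, ∫ Pf dμ = ∫ f dμ, where Pf(x,y) = ∫₀¹ f(ε(x+y), (1-ε)(x+y)) ν(x+y,dε). -/
open MeasureTheory Set ProbabilityTheory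

/-- For a probability kernel `ν(s,dε)` from `[0,∞)` to `[0,1]` and a
probability measure `γ` on `[0,∞)`, the law `μ` of `(εS, (1-ε)S)` — where `S ~ γ` and,
conditionally on `S = s`, `ε ~ ν(s,·)` — is invariant for the one-step redistribution
operator `P` of the energy redistribution model. -/
theorem mixture_of_canonical_measures_is_invariant
    (ν : Kernel ℝ ℝ) [IsMarkovKernel ν] (hν : ∀ s, ν s (Icc 0 1) = 1)
    (γ : Measure ℝ) [IsProbabilityMeasure γ] (hγ : γ (Ici 0) = 1)
    (μ : Measure (ℝ × ℝ))
    (hμ : μ = γ.bind (fun s => (ν s).map (fun e => (e * s, (1 - e) * s))))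
    (f : ℝ × ℝ → ℝ) (hf : Measurable f) (hfb : ∃ C, ∀ q, |f q| ≤ C) :
    ∫ q, (∫ e, f (e * (q.1 + q.2), (1 - e) * (q.1 + q.2)) ∂(ν (q.1 + q.2))) ∂μ
      = ∫ q, f q ∂μ := by
  obtain ⟨C, hC⟩ := hfb
  -- the transport map
  set T : ℝ × ℝ → ℝ × ℝ := fun p => (p.2 * p.1, (1 - p.2) * p.1) with hT_def
  have hT : Measurable T := by
    apply Measurable.prod <;> simp only [hT_def] <;> fun_prop
  -- μ as a pushforward of a compProd
  have hμ' : μ = (γ ⊗ₘ ν).map T := by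
    rw [hμ]
    ext A hA
    have hmeas : Measurable fun s : ℝ => (ν s).map (fun e => (e * s, (1 - e) * s)) := by
      refine Measure.measurable_of_measurable_coe _ fun B hB => ?_
      have h1 : ∀ s : ℝ, ((ν s).map (fun e => (e * s, (1 - e) * s))) B
          = ν s (Prod.mk s ⁻¹' (T ⁻¹' B)) := by
        intro s
        rw [Measure.map_apply (by fun_prop) hB]
        rfl
      simp_rw [h1]
      exact Kernel.measurable_kernel_prodMk_left (hT hB)
    rw [Measure.bind_apply hA hmeas.aemeasurable, Measure.map_apply hT hA,
      Measure.compProd_apply (hT hA)]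
    refine lintegral_congr fun s => ?_
    rw [Measure.map_apply (by fun_prop) hA]
    rfl
  -- integration of a bounded measurable function against μ
  have key : ∀ g : ℝ × ℝ → ℝ, Measurable g → (∀ q, |g q| ≤ C) →
      ∫ q, g q ∂μ = ∫ s, ∫ e, g (T (s, e)) ∂ν s ∂γ := by
    intro g hg hgC
    rw [hμ', integral_map hT.aemeasurable hg.aestronglyMeasurable]
    have hint : Integrable (fun p => g (T p)) (γ ⊗ₘ ν) := by
      refine (integrable_const C).mono' ((hg.comp hT).aestronglyMeasurable) ?_
      filter_upwards with p using by simpa [Real.norm_eq_abs] using hgC (T p)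
    rw [Measure.integral_compProd hint]
  -- the operator Pf
  set g : ℝ × ℝ → ℝ :=
    fun q => ∫ e, f (e * (q.1 + q.2), (1 - e) * (q.1 + q.2)) ∂(ν (q.1 + q.2)) with hg_def
  have hgm : Measurable g := by
    have hF : StronglyMeasurable fun p : ℝ × ℝ => f (p.2 * p.1, (1 - p.2) * p.1) :=
      (hf.comp hT).stronglyMeasurable
    have h1 : StronglyMeasurable fun s : ℝ => ∫ e, f (e * s, (1 - e) * s) ∂ν s :=
      hF.integral_kernel_prod_right'
    exact h1.measurable.comp (by fun_prop)
  have hgC : ∀ q, |g q| ≤ C := by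
    intro q
    have := norm_integral_le_of_norm_le_const (μ := ν (q.1 + q.2))
      (f := fun e => f (e * (q.1 + q.2), (1 - e) * (q.1 + q.2))) (C := C)
      (Filter.Eventually.of_forall fun e => by simpa [Real.norm_eq_abs] using hC _)
    simpa [Real.norm_eq_abs, measure_univ] using this
  rw [key f hf hC, key g hgm hgC]
  refine integral_congr_ae (Filter.Eventually.of_forall fun s => ?_)
  have hsum : ∀ e : ℝ, e * s + (1 - e) * s = s := fun e => by ring
  have hinner : ∀ e : ℝ, g (T (s, e)) = ∫ e', f (e' * s, (1 - e') * s) ∂ν s := by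
    intro e
    simp only [hg_def, hT_def]
    rw [hsum e]
  simp_rw [hinner]
  rw [integral_const]
  simp [measure_univ, hT_def]
end

section
/- Fix α > 0 and let μ(x) = α x^{-α-1} 1_{x ≥ 1} be the Pareto(α) density. For s > 2 let c(s) = ∫_{1/s}^{1-1/s} a^{-α-1}(1-a)^{-α-1} da and define the redistribution kernel ν(s,da) = c(s)^{-1} a^{-α-1}(1-a)^{-α-1} 1_{[1/s, 1-1/s]}(a) da (and, say, ν(s,da) = da for s ≤ 2). Then the product measure μ(x)μ(y)dxdy is invariant for the one-step redistribution operator P with this kernel: ∫ Pf d(μ⊗μ) = ∫ f d(μ⊗μ) for all bounded measurable f : [0,∞)² → ℝ. -/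
open MeasureTheory Set

section aux
variable {α : ℝ}

noncomputable def pd (α : ℝ) : ℝ → ℝ := fun x => if 1 ≤ x then α * x ^ (-α - 1) else 0

lemma pd_meas (α : ℝ) : Measurable (pd α) := Measurable.ite measurableSet_Ici (by fun_prop) measurable_const

lemma pd_nonneg (hα : 0 < α) (x : ℝ) : 0 ≤ pd α x := by
  unfold pd; split
  · exact mul_nonneg hα.le (Real.rpow_nonneg (by linarith) _)
  · exact le_refl _

lemma pd_int (hα : 0 < α) : Integrable (pd α) := by
  have h1 : pd α = Set.indicator (Set.Ici (1:ℝ)) (fun x => α * x ^ (-α - 1)) := by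
    funext x; simp [pd, Set.indicator_apply, Set.mem_Ici]
  rw [h1, integrable_indicator_iff measurableSet_Ici]
  rw [integrableOn_Ici_iff_integrableOn_Ioi]
  exact ((integrableOn_Ioi_rpow_iff zero_lt_one).mpr (by linarith)).const_mul α

end aux

lemma key_pipeline {α : ℝ} (hα : 0 < α) {C : ℝ}
    (G : ℝ × ℝ → ℝ) (hG : Measurable G) (hGb : ∀ q, |G q| ≤ C) :
    ∫ q : ℝ × ℝ, G q * (pd α q.1 * pd α q.2)
      = ∫ s : ℝ, if 2 < s then
          (α ^ 2 * s ^ (-2*α - 1)) *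
            ∫ a in (1/s)..(1 - 1/s), G (a * s, (1 - a) * s) * (a ^ (-α - 1) * (1 - a) ^ (-α - 1))
        else 0 := by
  have h_meas := pd_meas α
  have h_nonneg := pd_nonneg hα
  have h_int := pd_int hα
  have hhh_int : Integrable (fun q : ℝ × ℝ => pd α q.1 * pd α q.2)
      ((volume : Measure ℝ).prod volume) := h_int.mul_prod h_int
  have hGq_meas : Measurable (fun q : ℝ × ℝ => G q * (pd α q.1 * pd α q.2)) :=
    hG.mul ((h_meas.comp measurable_fst).mul (h_meas.comp measurable_snd))
  have hGq_int : Integrable (fun q : ℝ × ℝ => G q * (pd α q.1 * pd α q.2))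
      ((volume : Measure ℝ).prod volume) := by
    refine (hhh_int.const_mul C).mono' hGq_meas.aestronglyMeasurable
      (Filter.Eventually.of_forall fun q => ?_)
    have h1 : 0 ≤ pd α q.1 * pd α q.2 := mul_nonneg (h_nonneg _) (h_nonneg _)
    rw [Real.norm_eq_abs, abs_mul, abs_of_nonneg h1]
    exact mul_le_mul_of_nonneg_right (hGb q) h1
  calc ∫ q : ℝ × ℝ, G q * (pd α q.1 * pd α q.2)
      = ∫ x : ℝ, ∫ y : ℝ, G (x, y) * (pd α x * pd α y) := by
        rw [Measure.volume_eq_prod]; exact integral_prod _ hGq_int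
    _ = ∫ x : ℝ, ∫ s : ℝ, G (x, s - x) * (pd α x * pd α (s - x)) := by
        refine integral_congr_ae (Filter.Eventually.of_forall fun x => ?_)
        exact (integral_sub_right_eq_self (fun y => G (x, y) * (pd α x * pd α y)) x).symm
    _ = ∫ s : ℝ, ∫ x : ℝ, G (x, s - x) * (pd α x * pd α (s - x)) := by
        have hψ : MeasurePreserving (fun p : ℝ × ℝ => (p.1, p.2 - p.1))
            ((volume : Measure ℝ).prod volume) ((volume : Measure ℝ).prod volume) :=
          measurePreserving_prod_sub volume volume
        have hswap : Integrable
            ((fun q : ℝ × ℝ => G q * (pd α q.1 * pd α q.2)) ∘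
              (fun p : ℝ × ℝ => (p.1, p.2 - p.1)))
            ((volume : Measure ℝ).prod volume) :=
          (hψ.integrable_comp hGq_int.aestronglyMeasurable).mpr hGq_int
        exact integral_integral_swap hswap
    _ = ∫ s : ℝ, if 2 < s then
          (α ^ 2 * s ^ (-2*α - 1)) *
            ∫ a in (1/s)..(1 - 1/s), G (a * s, (1 - a) * s) * (a ^ (-α - 1) * (1 - a) ^ (-α - 1))
        else 0 := by
        refine integral_congr_ae (Filter.Eventually.of_forall fun s => ?_)
        set φ : ℝ → ℝ :=
          fun x => G (x, s - x) * (α * x ^ (-α - 1) * (α * (s - x) ^ (-α - 1))) with hφ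
        have hind : ∀ x : ℝ, G (x, s - x) * (pd α x * pd α (s - x))
            = (Icc (1:ℝ) (s-1)).indicator φ x := by
          intro x
          rw [Set.indicator_apply]
          by_cases h1 : 1 ≤ x
          · by_cases h2 : 1 ≤ s - x
            · rw [if_pos (mem_Icc.mpr ⟨h1, by linarith⟩), hφ]
              simp only [pd, if_pos h1, if_pos h2]
            · rw [if_neg (fun hx => h2 (by have := (mem_Icc.mp hx).2; linarith))]
              simp only [pd, if_pos h1, if_neg h2]; ring
          · rw [if_neg (fun hx => h1 (mem_Icc.mp hx).1)]
            simp only [pd, if_neg h1]; ring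
        simp_rw [hind]
        rw [MeasureTheory.integral_indicator measurableSet_Icc]
        by_cases h2s : 2 < s
        · rw [if_pos h2s]
          have hs0 : (0:ℝ) < s := by linarith
          have hl : 0 < 1/s := by positivity
          have h12 : 1/s ≤ 1/2 := by
            apply one_div_le_one_div_of_le <;> linarith
          have hlr : 1/s ≤ 1 - 1/s := by linarith
          rw [MeasureTheory.integral_Icc_eq_integral_Ioc,
            ← intervalIntegral.integral_of_le (by linarith : (1:ℝ) ≤ s - 1)]
          have hstep : (∫ x in (1:ℝ)..(s-1), φ x)
              = s • ∫ a in (1/s)..(1 - 1/s), φ (a * s) := by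
            rw [intervalIntegral.smul_integral_comp_mul_right φ s,
              div_mul_cancel₀ 1 hs0.ne',
              show (1 - 1/s) * s = s - 1 by rw [sub_mul, one_mul, div_mul_cancel₀ 1 hs0.ne']]
          rw [hstep]
          have hcong : EqOn (fun a : ℝ => φ (a * s))
              (fun a : ℝ => (α ^ 2 * s ^ (-2*α - 2)) *
                (G (a * s, (1 - a) * s) * (a ^ (-α - 1) * (1 - a) ^ (-α - 1))))
              (Set.uIcc (1/s) (1 - 1/s)) := by
            intro a ha
            rw [uIcc_of_le hlr, mem_Icc] at ha
            have ha0 : 0 ≤ a := le_trans hl.le ha.1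
            have h1a : 0 ≤ 1 - a := by linarith [ha.2, hl.le]
            have e1 : s - a * s = (1 - a) * s := by ring
            have e2 : s ^ (-α - 1) * s ^ (-α - 1) = s ^ (-2*α - 2) := by
              rw [← Real.rpow_add hs0]; ring_nf
            simp only [hφ, e1, Real.mul_rpow ha0 hs0.le, Real.mul_rpow h1a hs0.le]
            rw [← e2]; ring
          rw [intervalIntegral.integral_congr hcong, intervalIntegral.integral_const_mul,
            smul_eq_mul, ← mul_assoc]
          congr 1
          rw [show s ^ (-2*α - 1) = s ^ (1 + (-2*α - 2)) by ring_nf,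
            Real.rpow_add hs0, Real.rpow_one]
          ring
        · rw [if_neg h2s]
          have hnull : volume (Icc (1:ℝ) (s-1)) = 0 := by
            rw [Real.volume_Icc, ENNReal.ofReal_eq_zero]; linarith
          rw [Measure.restrict_eq_zero.mpr hnull, integral_zero_measure]

lemma w_contOn {α l r : ℝ} (hl : 0 < l) (hr : r < 1) :
    ContinuousOn (fun a : ℝ => a ^ (-α - 1) * (1 - a) ^ (-α - 1)) (Icc l r) := by
  intro a ha
  have h1 : a ≠ 0 := by have := ha.1; intro h; rw [h] at this; exact absurd this (not_le.mpr hl)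
  have h2 : (1 : ℝ) - a ≠ 0 := by have := ha.2; intro h; nlinarith [ha.2]
  have c1 : ContinuousAt (fun a : ℝ => a ^ (-α - 1)) a :=
    Real.continuousAt_rpow_const a _ (Or.inl h1)
  have c2 : ContinuousAt (fun a : ℝ => (1 - a) ^ (-α - 1)) a :=
    (Real.continuousAt_rpow_const (1 - a) _ (Or.inl h2)).comp
      ((continuous_const.sub continuous_id).continuousAt)
  exact (c1.mul c2).continuousWithinAt

lemma w_intble {α s : ℝ} (h2s : 2 < s) :
    IntervalIntegrable (fun a : ℝ => a ^ (-α - 1) * (1 - a) ^ (-α - 1)) volume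
      (1/s) (1 - 1/s) := by
  have hs0 : (0:ℝ) < s := by linarith
  have hl : 0 < 1/s := by positivity
  have hr : 1 - 1/s < 1 := by linarith
  have h12 : 1/s ≤ 1/2 := by apply one_div_le_one_div_of_le <;> linarith
  have hlr : 1/s ≤ 1 - 1/s := by linarith
  refine ContinuousOn.intervalIntegrable ?_
  rw [uIcc_of_le hlr]
  exact w_contOn hl hr

lemma c_pos {α s : ℝ} (h2s : 2 < s) :
    0 < ∫ a in (1/s)..(1 - 1/s), a ^ (-α - 1) * (1 - a) ^ (-α - 1) := by
  have hs0 : (0:ℝ) < s := by linarith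
  have hl : 0 < 1/s := by positivity
  have h12 : 1/s < 1/2 := by apply one_div_lt_one_div_of_lt <;> linarith
  have hlr : 1/s < 1 - 1/s := by linarith
  refine intervalIntegral.intervalIntegral_pos_of_pos_on (w_intble h2s) (fun x hx => ?_) hlr
  have hx0 : 0 < x := lt_trans hl hx.1
  have hx1 : 0 < 1 - x := by have := hx.2; linarith [hl]
  exact mul_pos (Real.rpow_pos_of_pos hx0 _) (Real.rpow_pos_of_pos hx1 _)

/-- the product of two Pareto(α) distributions (density `α x^{-α-1}` on
`x ≥ 1`) is invariant for the one-step redistribution operator whose redistribution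
kernel, for total energy `s > 2`, has density proportional to `a^{-α-1}(1-a)^{-α-1}` on
`[1/s, 1-1/s]` (and is, say, uniform on `[0,1]` for `s ≤ 2`). -/
theorem pareto_product_invariant
    (α : ℝ) (hα : 0 < α)
    (μd : ℝ → ℝ)
    (hμd : ∀ x, μd x = if 1 ≤ x then α * x ^ (-α - 1) else 0)
    (c : ℝ → ℝ)
    (hc : ∀ s, c s = ∫ a in (1/s)..(1 - 1/s), a ^ (-α - 1) * (1 - a) ^ (-α - 1))
    (P : (ℝ × ℝ → ℝ) → ℝ × ℝ → ℝ)
    (hP : ∀ f q, P f q =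
      if 2 < q.1 + q.2 then
        ∫ a in (1/(q.1 + q.2))..(1 - 1/(q.1 + q.2)),
          f (a * (q.1 + q.2), (1 - a) * (q.1 + q.2))
            * (a ^ (-α - 1) * (1 - a) ^ (-α - 1) / c (q.1 + q.2))
      else
        ∫ a in (0:ℝ)..1, f (a * (q.1 + q.2), (1 - a) * (q.1 + q.2)))
    (f : ℝ × ℝ → ℝ) (hf : Measurable f) (hfb : ∃ C, ∀ q, |f q| ≤ C) :
    ∫ q : ℝ × ℝ, P f q * (μd q.1 * μd q.2) = ∫ q : ℝ × ℝ, f q * (μd q.1 * μd q.2) := by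

  obtain ⟨C, hC⟩ := hfb
  have hC0 : 0 ≤ C := (abs_nonneg _).trans (hC 0)
  have hμd' : μd = pd α := funext hμd
  -- boundedness of `P f`
  have hPfb : ∀ q : ℝ × ℝ, |P f q| ≤ C := by
    intro q
    rw [hP]
    by_cases h2 : 2 < q.1 + q.2
    · rw [if_pos h2]
      set s := q.1 + q.2 with hs
      have hs0 : (0:ℝ) < s := by linarith
      have hl : 0 < 1/s := by positivity
      have h12 : 1/s ≤ 1/2 := by apply one_div_le_one_div_of_le <;> linarith
      have hlr : 1/s ≤ 1 - 1/s := by linarith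
      have hcpos : 0 < c s := by rw [hc]; exact c_pos h2
      have hwint := w_intble (α := α) h2
      have hbint : IntervalIntegrable
          (fun a : ℝ => C * (a ^ (-α - 1) * (1 - a) ^ (-α - 1) / c s)) volume
          (1/s) (1 - 1/s) := (hwint.div_const _).const_mul _
      have hGmeas : Measurable
          (fun a : ℝ => f (a * s, (1 - a) * s) * (a ^ (-α - 1) * (1 - a) ^ (-α - 1) / c s)) := by
        apply Measurable.mul
        · exact hf.comp (by fun_prop)
        · fun_prop
      have hGint : IntervalIntegrable
          (fun a : ℝ => f (a * s, (1 - a) * s) * (a ^ (-α - 1) * (1 - a) ^ (-α - 1) / c s))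
          volume (1/s) (1 - 1/s) := by
        refine hbint.mono_fun hGmeas.aestronglyMeasurable.restrict
          (Filter.Eventually.of_forall fun x => ?_)
        simp only [Real.norm_eq_abs, abs_mul]
        rw [abs_of_nonneg hC0]
        exact mul_le_mul_of_nonneg_right (hC _) (abs_nonneg _)
      calc |∫ a in (1/s)..(1 - 1/s),
              f (a * s, (1 - a) * s) * (a ^ (-α - 1) * (1 - a) ^ (-α - 1) / c s)|
          ≤ ∫ a in (1/s)..(1 - 1/s),
              |f (a * s, (1 - a) * s) * (a ^ (-α - 1) * (1 - a) ^ (-α - 1) / c s)| :=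
            intervalIntegral.abs_integral_le_integral_abs hlr
        _ ≤ ∫ a in (1/s)..(1 - 1/s), C * (a ^ (-α - 1) * (1 - a) ^ (-α - 1) / c s) := by
            refine intervalIntegral.integral_mono_on hlr hGint.abs hbint (fun x hx => ?_)
            have hw0 : 0 ≤ x ^ (-α - 1) * (1 - x) ^ (-α - 1) / c s := by
              apply div_nonneg _ hcpos.le
              exact mul_nonneg (Real.rpow_nonneg (le_trans hl.le hx.1) _)
                (Real.rpow_nonneg (by have := hx.2; linarith [hl]) _)
            rw [abs_mul, abs_of_nonneg hw0]
            exact mul_le_mul_of_nonneg_right (hC _) hw0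
        _ = C := by
            rw [intervalIntegral.integral_const_mul, intervalIntegral.integral_div, ← hc,
              div_self hcpos.ne', mul_one]
    · rw [if_neg h2]
      have := intervalIntegral.norm_integral_le_of_norm_le_const
        (a := (0:ℝ)) (b := 1) (C := C)
        (f := fun a : ℝ => f (a * (q.1 + q.2), (1 - a) * (q.1 + q.2)))
        (fun x _ => by rw [Real.norm_eq_abs]; exact hC _)
      rw [Real.norm_eq_abs] at this
      simpa using this
  -- measurable representative of `P f`
  have hwmeas : Measurable (fun a : ℝ => a ^ (-α - 1) * (1 - a) ^ (-α - 1)) := by fun_prop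
  have hSmeas : MeasurableSet {p : ℝ × ℝ | 1/p.1 < p.2 ∧ p.2 ≤ 1 - 1/p.1} := by
    have h0 : {p : ℝ × ℝ | 1/p.1 < p.2 ∧ p.2 ≤ 1 - 1/p.1}
        = {p : ℝ × ℝ | 1/p.1 < p.2} ∩ {p : ℝ × ℝ | p.2 ≤ 1 - 1/p.1} := rfl
    rw [h0]
    exact (measurableSet_lt (by fun_prop) measurable_snd).inter
      (measurableSet_le measurable_snd (by fun_prop))
  have hmeas_aux : ∀ (u : ℝ → ℝ → ℝ), Measurable (fun p : ℝ × ℝ => u p.1 p.2) →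
      Measurable (fun s => ∫ a, (Ioc (1/s) (1 - 1/s)).indicator (u s) a) := by
    intro u hu
    have h1 : (fun p : ℝ × ℝ => (Ioc (1/p.1) (1 - 1/p.1)).indicator (u p.1) p.2)
        = {p : ℝ × ℝ | 1/p.1 < p.2 ∧ p.2 ≤ 1 - 1/p.1}.indicator (fun p => u p.1 p.2) := by
      funext p
      rw [Set.indicator_apply, Set.indicator_apply]
      simp only [mem_Ioc, mem_setOf_eq]
    have h2 : Measurable (fun p : ℝ × ℝ => (Ioc (1/p.1) (1 - 1/p.1)).indicator (u p.1) p.2) := by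
      rw [h1]; exact hu.indicator hSmeas
    exact (h2.stronglyMeasurable.integral_prod_right').measurable
  set cI : ℝ → ℝ := fun s => ∫ a, (Ioc (1/s) (1 - 1/s)).indicator
      (fun a => a ^ (-α - 1) * (1 - a) ^ (-α - 1)) a with hcI
  set num : ℝ → ℝ := fun s => ∫ a, (Ioc (1/s) (1 - 1/s)).indicator
      (fun a => f (a * s, (1 - a) * s) * (a ^ (-α - 1) * (1 - a) ^ (-α - 1))) a with hnum
  set g2 : ℝ → ℝ := fun s => ∫ a, (Ioc (0:ℝ) 1).indicator
      (fun a => f (a * s, (1 - a) * s)) a with hg2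
  have hcImeas : Measurable cI := hmeas_aux (fun _ a => a ^ (-α - 1) * (1 - a) ^ (-α - 1))
      (hwmeas.comp measurable_snd)
  have hnummeas : Measurable num := hmeas_aux
      (fun s a => f (a * s, (1 - a) * s) * (a ^ (-α - 1) * (1 - a) ^ (-α - 1)))
      ((hf.comp (by fun_prop)).mul (hwmeas.comp measurable_snd))
  have hg2meas : Measurable g2 := by
    have h1 : (fun p : ℝ × ℝ => (Ioc (0:ℝ) 1).indicator (fun a => f (a * p.1, (1 - a) * p.1)) p.2)
        = {p : ℝ × ℝ | 0 < p.2 ∧ p.2 ≤ 1}.indicator (fun p => f (p.2 * p.1, (1 - p.2) * p.1)) := by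
      funext p; rw [Set.indicator_apply, Set.indicator_apply]
      simp only [mem_Ioc, mem_setOf_eq]
    have hS2 : MeasurableSet {p : ℝ × ℝ | 0 < p.2 ∧ p.2 ≤ 1} := by
      have h0 : {p : ℝ × ℝ | 0 < p.2 ∧ p.2 ≤ 1}
          = {p : ℝ × ℝ | 0 < p.2} ∩ {p : ℝ × ℝ | p.2 ≤ 1} := rfl
      rw [h0]
      exact (measurableSet_lt measurable_const measurable_snd).inter
        (measurableSet_le measurable_snd measurable_const)
    have h2 : Measurable (fun p : ℝ × ℝ =>
        (Ioc (0:ℝ) 1).indicator (fun a => f (a * p.1, (1 - a) * p.1)) p.2) := by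
      rw [h1]; exact ((hf.comp (by fun_prop)).indicator hS2)
    exact (h2.stronglyMeasurable.integral_prod_right').measurable
  set g : ℝ → ℝ := fun s => if 2 < s then num s / cI s else g2 s with hgdef
  have hgmeas : Measurable g :=
    Measurable.ite (measurableSet_lt measurable_const measurable_id)
      (hnummeas.div hcImeas) hg2meas
  have hPfg : ∀ q : ℝ × ℝ, P f q = g (q.1 + q.2) := by
    intro q
    rw [hP]
    simp only [hgdef]
    by_cases h2 : 2 < q.1 + q.2
    · rw [if_pos h2, if_pos h2]
      set s := q.1 + q.2 with hs
      have hs0 : (0:ℝ) < s := by linarith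
      have h12 : 1/s ≤ 1/2 := by apply one_div_le_one_div_of_le <;> linarith
      have hlr : 1/s ≤ 1 - 1/s := by linarith
      have hcc : c s = cI s := by
        rw [hc, hcI, intervalIntegral.integral_of_le hlr,
          ← MeasureTheory.integral_indicator measurableSet_Ioc]
      simp_rw [← mul_div_assoc]
      rw [intervalIntegral.integral_div, hcc, intervalIntegral.integral_of_le hlr,
        ← MeasureTheory.integral_indicator measurableSet_Ioc]
    · rw [if_neg h2, if_neg h2,
        intervalIntegral.integral_of_le (zero_le_one),
        ← MeasureTheory.integral_indicator measurableSet_Ioc]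
  have hPfmeas : Measurable (P f) := by
    have he : P f = fun q : ℝ × ℝ => g (q.1 + q.2) := funext hPfg
    rw [he]
    exact hgmeas.comp (measurable_fst.add measurable_snd)
  -- main computation
  rw [hμd']
  rw [key_pipeline hα (P f) hPfmeas hPfb, key_pipeline hα f hf hC]
  refine integral_congr_ae (Filter.Eventually.of_forall fun s => ?_)
  dsimp only
  by_cases h2s : 2 < s
  · rw [if_pos h2s, if_pos h2s]
    congr 1
    have hs0 : (0:ℝ) < s := by linarith
    have hcpos : 0 < c s := by rw [hc]; exact c_pos h2s
    have hPv : ∀ a : ℝ, P f (a * s, (1 - a) * s)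
        = (∫ b in (1/s)..(1 - 1/s), f (b * s, (1 - b) * s)
            * (b ^ (-α - 1) * (1 - b) ^ (-α - 1))) / c s := by
      intro a
      rw [hP]
      dsimp only
      rw [show a * s + (1 - a) * s = s by ring]
      rw [if_pos h2s]
      simp_rw [← mul_div_assoc]
      rw [intervalIntegral.integral_div]
    simp_rw [hPv]
    rw [intervalIntegral.integral_const_mul, ← hc, div_mul_cancel₀ _ hcpos.ne']
  · rw [if_neg h2s, if_neg h2s]
end

section
/- Let λ ∈ (0,1), let ν be a probability measure on [0,1], and let ρ_∞ denote the law of ε^λ_∞ := (1-λ) ∑_{n=0}^∞ λ^n ε_n, where (ε_n) are i.i.d. with law ν. If ρ is any probability measure on [0,1] such that the pushforward of ρ ⊗ ν under the map (r,ε) ↦ λ r + (1-λ) ε equals ρ, then ρ = ρ_∞. In other words, ρ_∞ is the unique stationary distribution of the recursion r_{n+1} = λ r_n + (1-λ) ε_n. -/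
open MeasureTheory Set ProbabilityTheory Filter

open scoped Topology ENNReal NNReal

/-- For `λ ∈ (0,1)` and `ν` a probability measure on `[0,1]`, the law
`ρ_∞` of `ε^λ_∞ = (1-λ) ∑ λ^n ε_n` (with `(ε_n)` i.i.d. of law `ν`) is the unique
probability measure `ρ` on `[0,1]` that is stationary for the recursion
`r ↦ λ r + (1-λ) ε`, i.e. such that the pushforward of `ρ ⊗ ν` under
`(r,ε) ↦ λ r + (1-λ) ε` equals `ρ`. -/
theorem stationary_law_is_unique
    {Ω : Type*} [MeasurableSpace Ω] (Pr : Measure Ω) [IsProbabilityMeasure Pr]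
    (lam : ℝ) (hlam : lam ∈ Ioo (0:ℝ) 1)
    (ν : Measure ℝ) [IsProbabilityMeasure ν] (hν : ν (Icc 0 1) = 1)
    (ε : ℕ → Ω → ℝ)
    (hmeas : ∀ n, Measurable (ε n))
    (hlaw : ∀ n, Measure.map (ε n) Pr = ν)
    (hindep : iIndepFun ε Pr)
    (ρ : Measure ℝ) [IsProbabilityMeasure ρ] (hρsupp : ρ (Icc 0 1) = 1)
    (hstat : Measure.map (fun q : ℝ × ℝ => lam * q.1 + (1 - lam) * q.2) (ρ.prod ν) = ρ) :
    ρ = Measure.map (fun ω => (1 - lam) * ∑' n, lam ^ n * ε n ω) Pr := by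
  obtain ⟨hlam0, hlam1⟩ := hlam
  set g : Ω → ℝ := fun ω => (1 - lam) * ∑' n, lam ^ n * ε n ω with hg_def
  set μ : Measure (ℝ × Ω) := ρ.prod Pr with hμ_def
  -- finite tuples of the ε's
  set vec : ∀ N : ℕ, Ω → (Fin N → ℝ) := fun N ω i => ε i ω with hvec_def
  have hvec : ∀ N, Measurable (vec N) := fun N =>
    measurable_pi_lambda _ fun i => hmeas i
  set m : (N : ℕ) → Measure (Fin N → ℝ) := fun N => Measure.map (vec N) Pr with hm_def
  haveI : ∀ N, IsProbabilityMeasure (m N) := fun N =>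
    Measure.isProbabilityMeasure_map (hvec N).aemeasurable
  -- independence of ε N from the tuple (ε 0, ..., ε (N-1))
  have hindepN : ∀ N : ℕ, IndepFun (ε N) (vec N) Pr := by
    intro N
    have h := hindep.indepFun_finset {N} (Finset.range N)
      (by simp [Finset.disjoint_left]) hmeas
    have hφ : Measurable fun u : (↥({N} : Finset ℕ) → ℝ) =>
        u ⟨N, Finset.mem_singleton_self N⟩ := measurable_pi_apply _
    have hψ : Measurable fun u : (↥(Finset.range N) → ℝ) =>
        (fun i : Fin N => u ⟨i.1, Finset.mem_range.2 i.2⟩) :=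
      measurable_pi_lambda _ fun i => measurable_pi_apply _
    exact h.comp hφ hψ
  -- joint law of (ε N, vec N)
  have hW : ∀ N : ℕ,
      Measure.map (fun ω => (ε N ω, vec N ω)) Pr = ν.prod (m N) := by
    intro N
    have := (indepFun_iff_map_prod_eq_prod_map_map
      (hmeas N).aemeasurable (hvec N).aemeasurable).mp (hindepN N)
    rw [this, hlaw N]
  -- law of ((r, ε N ω), vec N ω)
  have hK : ∀ N : ℕ,
      Measure.map (fun p : ℝ × Ω => ((p.1, ε N p.2), vec N p.2)) μ
        = (ρ.prod ν).prod (m N) := by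
    intro N
    have hWm : Measurable fun ω => (ε N ω, vec N ω) := (hmeas N).prodMk (hvec N)
    have h1 : Measure.map (Prod.map id fun ω => (ε N ω, vec N ω)) μ
        = ρ.prod (ν.prod (m N)) := by
      rw [hμ_def, ← Measure.map_prod_map _ _ measurable_id hWm, Measure.map_id, hW]
    have h2 : (ρ.prod ν).prod (m N)
        = Measure.map (MeasurableEquiv.prodAssoc.symm) (ρ.prod (ν.prod (m N))) := by
      rw [← Measure.prodAssoc_prod (μ := ρ) (ν := ν) (τ := m N),
        MeasurableEquiv.map_symm_map]
    rw [h2, ← h1,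
      Measure.map_map MeasurableEquiv.prodAssoc.symm.measurable
        (measurable_id.prodMap hWm)]
    rfl
  -- the iterated maps
  set S : ℕ → ℝ × Ω → ℝ := fun N p =>
    lam ^ N * p.1 + (1 - lam) * ∑ n ∈ Finset.range N, lam ^ n * ε n p.2 with hS_def
  have hSmeas : ∀ N, Measurable (S N) := by
    intro N
    apply Measurable.add
    · exact (measurable_fst.const_mul _)
    · exact (Finset.measurable_sum _ fun n _ =>
        ((hmeas n).comp measurable_snd).const_mul _).const_mul _
  set F : ∀ N : ℕ, ℝ × (Fin N → ℝ) → ℝ := fun N q =>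
    lam ^ N * q.1 + (1 - lam) * ∑ i : Fin N, lam ^ (i : ℕ) * q.2 i with hF_def
  have hFmeas : ∀ N, Measurable (F N) := by
    intro N
    apply Measurable.add
    · exact measurable_fst.const_mul _
    · exact (Finset.measurable_sum _ fun i _ =>
        ((measurable_pi_apply i).comp measurable_snd).const_mul _).const_mul _
  have comp_eq : ∀ N, Measure.map (S N) μ = Measure.map (F N) (ρ.prod (m N)) := by
    intro N
    have h1 : Measure.map (Prod.map id (vec N)) μ = ρ.prod (m N) := by
      rw [hμ_def, ← Measure.map_prod_map _ _ measurable_id (hvec N), Measure.map_id]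
    rw [← h1, Measure.map_map (hFmeas N) (measurable_id.prodMap (hvec N))]
    congr 1
    funext p
    have hp : Prod.map (@id ℝ) (vec N) p = (p.1, vec N p.2) := rfl
    simp only [Function.comp_apply, hp, hS_def, hF_def, hvec_def]
    rw [Finset.sum_range fun n => lam ^ n * ε n p.2]
    rfl
  -- the key induction: ρ is the law of S N for every N
  have key : ∀ N, Measure.map (S N) μ = ρ := by
    intro N
    induction N with
    | zero =>
      have hS0 : S 0 = Prod.fst := by
        funext p; simp [hS_def]
      rw [hS0, hμ_def, Measure.map_fst_prod, measure_univ, one_smul]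
    | succ N ih =>
      have hGm : Measure.map
          (fun p : ℝ × Ω => (lam * p.1 + (1 - lam) * ε N p.2, vec N p.2)) μ
          = ρ.prod (m N) := by
        have hh : Measurable fun q : ℝ × ℝ => lam * q.1 + (1 - lam) * q.2 :=
          (measurable_fst.const_mul _).add (measurable_snd.const_mul _)
        have h1 : (fun p : ℝ × Ω => (lam * p.1 + (1 - lam) * ε N p.2, vec N p.2))
            = (Prod.map (fun q : ℝ × ℝ => lam * q.1 + (1 - lam) * q.2) id) ∘
              (fun p : ℝ × Ω => ((p.1, ε N p.2), vec N p.2)) := rfl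
        have hKmeas : Measurable fun p : ℝ × Ω => ((p.1, ε N p.2), vec N p.2) :=
          (measurable_fst.prodMk ((hmeas N).comp measurable_snd)).prodMk
            ((hvec N).comp measurable_snd)
        rw [h1, ← Measure.map_map (hh.prodMap measurable_id) hKmeas, hK N,
          ← Measure.map_prod_map _ _ hh measurable_id, hstat, Measure.map_id]
      have h2 : S (N + 1) = F N ∘
          (fun p : ℝ × Ω => (lam * p.1 + (1 - lam) * ε N p.2, vec N p.2)) := by
        funext p
        simp only [hS_def, hF_def, Function.comp_apply]
        rw [Finset.sum_range_succ, Finset.sum_range fun n => lam ^ n * ε n p.2]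
        ring
      have hGmmeas : Measurable
          (fun p : ℝ × Ω => (lam * p.1 + (1 - lam) * ε N p.2, vec N p.2)) :=
        ((measurable_fst.const_mul _).add
          (((hmeas N).comp measurable_snd).const_mul _)).prodMk
          ((hvec N).comp measurable_snd)
      rw [h2, ← Measure.map_map (hFmeas N) hGmmeas, hGm, ← comp_eq N, ih]
  -- almost sure good set
  have hGood : ∀ᵐ ω ∂Pr, ∀ n, ε n ω ∈ Icc (0:ℝ) 1 := by
    rw [ae_all_iff]
    intro n
    have hc : Pr (ε n ⁻¹' (Icc (0:ℝ) 1)ᶜ) = 0 := by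
      rw [← Measure.map_apply (hmeas n) (measurableSet_Icc.compl), hlaw n,
        measure_compl measurableSet_Icc (measure_ne_top _ _), hν, measure_univ,
        tsub_self]
    exact hc
  -- summability on the good set
  have hsum : ∀ ω, (∀ n, ε n ω ∈ Icc (0:ℝ) 1) →
      Summable (fun n => lam ^ n * ε n ω) := by
    intro ω hω
    refine Summable.of_nonneg_of_le
      (fun n => mul_nonneg (pow_nonneg hlam0.le n) (hω n).1)
      (fun n => ?_) (summable_geometric_of_lt_one hlam0.le hlam1)
    calc lam ^ n * ε n ω ≤ lam ^ n * 1 :=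
          mul_le_mul_of_nonneg_left (hω n).2 (pow_nonneg hlam0.le n)
      _ = lam ^ n := mul_one _
  -- pointwise convergence on the good set
  have htend : ∀ (r : ℝ) (ω : Ω), (∀ n, ε n ω ∈ Icc (0:ℝ) 1) →
      Tendsto (fun N => S N (r, ω)) atTop (𝓝 (g ω)) := by
    intro r ω hω
    have h1 : Tendsto (fun N : ℕ => lam ^ N * r) atTop (𝓝 0) := by
      simpa using (tendsto_pow_atTop_nhds_zero_of_lt_one hlam0.le hlam1).mul_const r
    have h2 : Tendsto (fun N : ℕ => (1 - lam) * ∑ n ∈ Finset.range N, lam ^ n * ε n ω)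
        atTop (𝓝 ((1 - lam) * ∑' n, lam ^ n * ε n ω)) :=
      ((hsum ω hω).hasSum.tendsto_sum_nat).const_mul _
    have := h1.add h2
    rw [zero_add] at this
    exact this
  -- AEMeasurability of g
  have hgae : AEMeasurable g Pr := by
    set gtr : Ω → ℝ := fun ω => (1 - lam) * ∑' n, lam ^ n * max 0 (min (ε n ω) 1)
      with hgtr_def
    have htrsum : ∀ ω, Summable fun n => lam ^ n * max 0 (min (ε n ω) 1) := by
      intro ω
      refine Summable.of_nonneg_of_le
        (fun n => mul_nonneg (pow_nonneg hlam0.le n) (le_max_left _ _))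
        (fun n => ?_) (summable_geometric_of_lt_one hlam0.le hlam1)
      have : max 0 (min (ε n ω) 1) ≤ 1 :=
        max_le zero_le_one (min_le_right _ _)
      calc lam ^ n * max 0 (min (ε n ω) 1) ≤ lam ^ n * 1 :=
            mul_le_mul_of_nonneg_left this (pow_nonneg hlam0.le n)
        _ = lam ^ n := mul_one _
    have hgtrm : Measurable gtr := by
      have hpart : ∀ N : ℕ, Measurable fun ω =>
          (1 - lam) * ∑ n ∈ Finset.range N, lam ^ n * max 0 (min (ε n ω) 1) := by
        intro N
        exact (Finset.measurable_sum _ fun n _ =>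
          ((measurable_const.max ((hmeas n).min measurable_const)).const_mul
            _)).const_mul _
      refine measurable_of_tendsto_metrizable hpart (tendsto_pi_nhds.2 fun ω => ?_)
      exact ((htrsum ω).hasSum.tendsto_sum_nat).const_mul _
    refine hgtrm.aemeasurable.congr ?_
    refine hGood.mono fun ω hω => ?_
    have : ∀ n, max 0 (min (ε n ω) 1) = ε n ω := fun n => by
      rw [min_eq_left (hω n).2, max_eq_right (hω n).1]
    simp only [hgtr_def, hg_def, this]
  haveI : IsProbabilityMeasure (Measure.map g Pr) := Measure.isProbabilityMeasure_map hgae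
  -- conclude via test against bounded continuous functions
  refine MeasureTheory.ext_of_forall_lintegral_eq_of_IsFiniteMeasure fun f => ?_
  have hfm : Measurable fun x : ℝ => (f x : ℝ≥0∞) :=
    measurable_coe_nnreal_ennreal.comp f.continuous.measurable
  have h1 : ∀ N, ∫⁻ p, (f (S N p) : ℝ≥0∞) ∂μ = ∫⁻ x, (f x : ℝ≥0∞) ∂ρ := by
    intro N
    rw [← key N, lintegral_map hfm (hSmeas N)]
  -- a.e. convergence over μ
  have hGoodμ : ∀ᵐ p ∂μ, ∀ n, ε n p.2 ∈ Icc (0:ℝ) 1 := by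
    have h0 : Pr {ω : Ω | ¬ ∀ n, ε n ω ∈ Icc (0:ℝ) 1} = 0 := ae_iff.mp hGood
    have hpre : {p : ℝ × Ω | ¬ ∀ n, ε n p.2 ∈ Icc (0:ℝ) 1}
        = (univ : Set ℝ) ×ˢ {ω : Ω | ¬ ∀ n, ε n ω ∈ Icc (0:ℝ) 1} := by
      ext p; simp [Set.mem_prod]
    exact ae_iff.mpr (by rw [hpre, hμ_def, Measure.prod_prod, h0, mul_zero])
  have h2 : Tendsto (fun N => ∫⁻ p, (f (S N p) : ℝ≥0∞) ∂μ) atTop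
      (𝓝 (∫⁻ p, (f (g p.2) : ℝ≥0∞) ∂μ)) := by
    refine tendsto_lintegral_of_dominated_convergence (fun _ => ((nndist f 0 : ℝ≥0) : ℝ≥0∞))
      (fun N => hfm.comp (hSmeas N)) (fun N => ?_) ?_ ?_
    · refine Eventually.of_forall fun p => ?_
      simp only [edist_nndist]
      exact_mod_cast BoundedContinuousFunction.NNReal.upper_bound f (S N p)
    · rw [lintegral_const, measure_univ, mul_one]
      exact ENNReal.coe_ne_top
    · refine hGoodμ.mono fun p hp => ?_
      have := htend p.1 p.2 hp
      exact (ENNReal.continuous_coe.tendsto _).comp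
        ((f.continuous.tendsto _).comp (by simpa using this))
  have h3 : ∫⁻ p, (f (g p.2) : ℝ≥0∞) ∂μ = ∫⁻ x, (f x : ℝ≥0∞) ∂(Measure.map g Pr) := by
    have hsnd : Measure.map Prod.snd μ = Pr := by
      rw [hμ_def, Measure.map_snd_prod, measure_univ, one_smul]
    have hfg : AEMeasurable (fun ω => (f (g ω) : ℝ≥0∞)) (Measure.map Prod.snd μ) := by
      rw [hsnd]; exact hfm.comp_aemeasurable hgae
    have e1 : ∫⁻ p, (f (g p.2) : ℝ≥0∞) ∂μ = ∫⁻ ω, (f (g ω) : ℝ≥0∞) ∂Pr := by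
      rw [← hsnd, lintegral_map' hfg measurable_snd.aemeasurable]
    rw [e1, lintegral_map' hfm.aemeasurable hgae]
  have hconst : Tendsto (fun _ : ℕ => ∫⁻ x, (f x : ℝ≥0∞) ∂ρ) atTop
      (𝓝 (∫⁻ x, (f x : ℝ≥0∞) ∂ρ)) := tendsto_const_nhds
  have h2' : Tendsto (fun _ : ℕ => ∫⁻ x, (f x : ℝ≥0∞) ∂ρ) atTop
      (𝓝 (∫⁻ p, (f (g p.2) : ℝ≥0∞) ∂μ)) := by
    have := h2
    simp_rw [h1] at this
    exact this
  rw [← h3]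
  exact tendsto_nhds_unique hconst h2'
end

section
/- Let λ₁, λ₂ ∈ (0,1), let ν be a probability measure on [0,1], and let (ε_n)_{n≥0} be i.i.d. with law ν. Then the series r_∞ := ∑_{k=0}^∞ (1-λ₂) ε_k ∏_{i=0}^{k-1} (λ₁ + (λ₂-λ₁)ε_i) (empty product equal to 1) converges almost surely to a [0,1]-valued random variable, and its law ρ is stationary for the two-propensity recursion: the pushforward of ρ ⊗ ν under the map (r,ε) ↦ r(λ₁ + (λ₂-λ₁)ε) + (1-λ₂)ε equals ρ. -/
open MeasureTheory Set ProbabilityTheory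

section AuxDeterministic

variable {lam₁ lam₂ : ℝ}

private lemma fac_bounds (hlam₁ : lam₁ ∈ Ioo (0:ℝ) 1) (hlam₂ : lam₂ ∈ Ioo (0:ℝ) 1)
    {e : ℝ} (he : e ∈ Icc (0:ℝ) 1) :
    0 ≤ lam₁ + (lam₂ - lam₁) * e ∧ lam₁ + (lam₂ - lam₁) * e ≤ max lam₁ lam₂ := by
  obtain ⟨h0, h1⟩ := he
  constructor
  · rcases le_total lam₁ lam₂ with h | h
    · nlinarith [hlam₁.1]
    · nlinarith [hlam₂.1]
  · rcases le_total lam₁ lam₂ with h | h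
    · rw [max_eq_right h]; nlinarith
    · rw [max_eq_left h]; nlinarith

private lemma prod_bounds (hlam₁ : lam₁ ∈ Ioo (0:ℝ) 1) (hlam₂ : lam₂ ∈ Ioo (0:ℝ) 1)
    {x : ℕ → ℝ} (hx : ∀ n, x n ∈ Icc (0:ℝ) 1) (k : ℕ) :
    0 ≤ ∏ i ∈ Finset.range k, (lam₁ + (lam₂ - lam₁) * x i) ∧
      ∏ i ∈ Finset.range k, (lam₁ + (lam₂ - lam₁) * x i) ≤ (max lam₁ lam₂) ^ k := by
  constructor
  · exact Finset.prod_nonneg fun i _ => (fac_bounds hlam₁ hlam₂ (hx i)).1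
  · calc ∏ i ∈ Finset.range k, (lam₁ + (lam₂ - lam₁) * x i)
        ≤ ∏ _i ∈ Finset.range k, max lam₁ lam₂ :=
          Finset.prod_le_prod (fun i _ => (fac_bounds hlam₁ hlam₂ (hx i)).1)
            (fun i _ => (fac_bounds hlam₁ hlam₂ (hx i)).2)
      _ = (max lam₁ lam₂) ^ k := by rw [Finset.prod_const, Finset.card_range]

private lemma term_bounds (hlam₁ : lam₁ ∈ Ioo (0:ℝ) 1) (hlam₂ : lam₂ ∈ Ioo (0:ℝ) 1)
    {x : ℕ → ℝ} (hx : ∀ n, x n ∈ Icc (0:ℝ) 1) (k : ℕ) :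
    0 ≤ (1 - lam₂) * x k * ∏ i ∈ Finset.range k, (lam₁ + (lam₂ - lam₁) * x i) ∧
      (1 - lam₂) * x k * ∏ i ∈ Finset.range k, (lam₁ + (lam₂ - lam₁) * x i)
        ≤ (max lam₁ lam₂) ^ k := by
  obtain ⟨hP0, hPc⟩ := prod_bounds hlam₁ hlam₂ hx k
  constructor
  · exact mul_nonneg (mul_nonneg (by linarith [hlam₂.2]) (hx k).1) hP0
  · have h1 : (1 - lam₂) * x k ≤ 1 := by nlinarith [hlam₂.1, (hx k).1, (hx k).2]
    calc (1 - lam₂) * x k * ∏ i ∈ Finset.range k, (lam₁ + (lam₂ - lam₁) * x i)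
        ≤ 1 * (max lam₁ lam₂) ^ k := mul_le_mul h1 hPc hP0 zero_le_one
      _ = (max lam₁ lam₂) ^ k := one_mul _

private lemma aux_summable (hlam₁ : lam₁ ∈ Ioo (0:ℝ) 1) (hlam₂ : lam₂ ∈ Ioo (0:ℝ) 1)
    {x : ℕ → ℝ} (hx : ∀ n, x n ∈ Icc (0:ℝ) 1) :
    Summable (fun k => (1 - lam₂) * x k * ∏ i ∈ Finset.range k,
      (lam₁ + (lam₂ - lam₁) * x i)) := by
  refine Summable.of_nonneg_of_le (fun k => (term_bounds hlam₁ hlam₂ hx k).1)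
    (fun k => (term_bounds hlam₁ hlam₂ hx k).2) ?_
  exact summable_geometric_of_lt_one (le_trans hlam₁.1.le (le_max_left _ _))
    (max_lt hlam₁.2 hlam₂.2)

private lemma aux_partial (hlam₁ : lam₁ ∈ Ioo (0:ℝ) 1) (hlam₂ : lam₂ ∈ Ioo (0:ℝ) 1)
    {x : ℕ → ℝ} (hx : ∀ n, x n ∈ Icc (0:ℝ) 1) (n : ℕ) :
    (∑ k ∈ Finset.range n, (1 - lam₂) * x k * ∏ i ∈ Finset.range k,
        (lam₁ + (lam₂ - lam₁) * x i))
      + ∏ i ∈ Finset.range n, (lam₁ + (lam₂ - lam₁) * x i) ≤ 1 := by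
  induction n with
  | zero => simp
  | succ n ih =>
    rw [Finset.sum_range_succ, Finset.prod_range_succ]
    have hP0 := (prod_bounds hlam₁ hlam₂ hx n).1
    have hle : (1 - lam₂) * x n + (lam₁ + (lam₂ - lam₁) * x n) ≤ 1 := by
      nlinarith [(hx n).2, hlam₁.2]
    have h2 := mul_le_mul_of_nonneg_left hle hP0
    nlinarith [h2]

private lemma aux_mem (hlam₁ : lam₁ ∈ Ioo (0:ℝ) 1) (hlam₂ : lam₂ ∈ Ioo (0:ℝ) 1)
    {x : ℕ → ℝ} (hx : ∀ n, x n ∈ Icc (0:ℝ) 1) :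
    (∑' k, (1 - lam₂) * x k * ∏ i ∈ Finset.range k, (lam₁ + (lam₂ - lam₁) * x i))
      ∈ Icc (0:ℝ) 1 := by
  constructor
  · exact tsum_nonneg fun k => (term_bounds hlam₁ hlam₂ hx k).1
  · refine Real.tsum_le_of_sum_range_le (fun k => (term_bounds hlam₁ hlam₂ hx k).1) fun n => ?_
    have h1 := aux_partial hlam₁ hlam₂ hx n
    have h2 := (prod_bounds hlam₁ hlam₂ hx n).1
    linarith

private lemma aux_shift (hlam₁ : lam₁ ∈ Ioo (0:ℝ) 1) (hlam₂ : lam₂ ∈ Ioo (0:ℝ) 1)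
    {x : ℕ → ℝ} (hx : ∀ n, x n ∈ Icc (0:ℝ) 1) :
    (∑' k, (1 - lam₂) * x k * ∏ i ∈ Finset.range k, (lam₁ + (lam₂ - lam₁) * x i))
      = (∑' k, (1 - lam₂) * x (k + 1) * ∏ i ∈ Finset.range k,
          (lam₁ + (lam₂ - lam₁) * x (i + 1))) * (lam₁ + (lam₂ - lam₁) * x 0)
        + (1 - lam₂) * x 0 := by
  rw [Summable.tsum_eq_zero_add (aux_summable hlam₁ hlam₂ hx)]
  have hterm : ∀ k : ℕ, (1 - lam₂) * x (k + 1) * ∏ i ∈ Finset.range (k + 1),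
      (lam₁ + (lam₂ - lam₁) * x i)
      = ((1 - lam₂) * x (k + 1) * ∏ i ∈ Finset.range k,
          (lam₁ + (lam₂ - lam₁) * x (i + 1))) * (lam₁ + (lam₂ - lam₁) * x 0) := by
    intro k
    rw [Finset.prod_range_succ']
    ring
  simp only [hterm]
  rw [tsum_mul_right]
  simp [mul_comm]
  ring

end AuxDeterministic

private lemma indep_mono' {Ω : Type*} {_mΩ : MeasurableSpace Ω} {μ : Measure Ω}
    {m1 m2 m1' m2' : MeasurableSpace Ω} (h : Indep m1 m2 μ) (h1 : m1' ≤ m1) (h2 : m2' ≤ m2) :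
    Indep m1' m2' μ := by
  rw [Indep_iff] at h ⊢
  exact fun t1 t2 ht1 ht2 => h t1 t2 (h1 _ ht1) (h2 _ ht2)

/-- For agent-dependent saving propensities `λ₁, λ₂ ∈ (0,1)` and an i.i.d.
sequence `(ε_n)` with law `ν` on `[0,1]`, the series
`r_∞ = ∑_k (1-λ₂) ε_k ∏_{i<k} (λ₁ + (λ₂-λ₁)ε_i)` converges almost surely to a
`[0,1]`-valued random variable, and its law is stationary for the two-propensity
recursion `(r,ε) ↦ r(λ₁ + (λ₂-λ₁)ε) + (1-λ₂)ε`. -/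
theorem two_propensity_series_converges_and_law_is_stationary
    {Ω : Type*} [MeasurableSpace Ω] (Pr : Measure Ω) [IsProbabilityMeasure Pr]
    (lam₁ lam₂ : ℝ) (hlam₁ : lam₁ ∈ Ioo (0:ℝ) 1) (hlam₂ : lam₂ ∈ Ioo (0:ℝ) 1)
    (ν : Measure ℝ) [IsProbabilityMeasure ν] (hν : ν (Icc 0 1) = 1)
    (ε : ℕ → Ω → ℝ)
    (hmeas : ∀ n, Measurable (ε n))
    (hlaw : ∀ n, Measure.map (ε n) Pr = ν)
    (hindep : iIndepFun ε Pr) :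
    (∀ᵐ ω ∂Pr,
      Summable (fun k => (1 - lam₂) * ε k ω
        * ∏ i ∈ Finset.range k, (lam₁ + (lam₂ - lam₁) * ε i ω)) ∧
      (∑' k, (1 - lam₂) * ε k ω
        * ∏ i ∈ Finset.range k, (lam₁ + (lam₂ - lam₁) * ε i ω)) ∈ Icc (0:ℝ) 1) ∧
    Measure.map (fun q : ℝ × ℝ => q.1 * (lam₁ + (lam₂ - lam₁) * q.2) + (1 - lam₂) * q.2)
        ((Measure.map (fun ω => ∑' k, (1 - lam₂) * ε k ω
          * ∏ i ∈ Finset.range k, (lam₁ + (lam₂ - lam₁) * ε i ω)) Pr).prod ν)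
      = Measure.map (fun ω => ∑' k, (1 - lam₂) * ε k ω
          * ∏ i ∈ Finset.range k, (lam₁ + (lam₂ - lam₁) * ε i ω)) Pr := by
  classical
  -- almost sure event that all ε's are in [0,1]
  have hE : ∀ᵐ ω ∂Pr, ∀ n, ε n ω ∈ Icc (0:ℝ) 1 := by
    rw [ae_all_iff]
    intro n
    rw [ae_iff]
    have hpre : {ω | ¬ ε n ω ∈ Icc (0:ℝ) 1} = ε n ⁻¹' (Icc (0:ℝ) 1)ᶜ := rfl
    rw [hpre, ← Measure.map_apply (hmeas n) measurableSet_Icc.compl, hlaw n,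
      measure_compl measurableSet_Icc (measure_ne_top _ _), hν, measure_univ]
    simp
  -- first conjunct
  refine ⟨?_, ?_⟩
  · filter_upwards [hE] with ω hω
    exact ⟨aux_summable hlam₁ hlam₂ hω, aux_mem hlam₁ hlam₂ hω⟩
  -- notation
  set G : (ℕ → ℝ) → ℝ := fun x => ∑' k, (1 - lam₂) * x k
    * ∏ i ∈ Finset.range k, (lam₁ + (lam₂ - lam₁) * x i) with hGdef
  set seq : Ω → ℕ → ℝ := fun ω n => ε n ω with hseqdef
  set shift : Ω → ℕ → ℝ := fun ω n => ε (n + 1) ω with hshiftdef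
  have hseqm : Measurable seq := measurable_pi_lambda _ fun n => hmeas n
  have hshiftm : Measurable shift := measurable_pi_lambda _ fun n => hmeas (n + 1)
  -- the two sequence laws agree
  have hμeq : Measure.map seq Pr = Measure.map shift Pr := by
    have hpi : IsPiSystem (squareCylinders (fun _ : ℕ => {s : Set ℝ | MeasurableSet s})) :=
      isPiSystem_squareCylinders (fun i => MeasurableSpace.isPiSystem_measurableSet)
        (fun i => (MeasurableSet.univ : MeasurableSet (Set.univ : Set ℝ)))
    refine ext_of_generate_finite _ generateFrom_squareCylinders.symm hpi ?_ ?_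
    · rintro A ⟨s, t, ht, rfl⟩
      have htm : ∀ i ∈ s, MeasurableSet (t i) := fun i _ => ht i (mem_univ i)
      have hA : MeasurableSet ((s : Set ℕ).pi t) := MeasurableSet.pi s.countable_toSet htm
      rw [Measure.map_apply hseqm hA, Measure.map_apply hshiftm hA]
      have hpre1 : seq ⁻¹' ((s : Set ℕ).pi t) = ⋂ i ∈ s, ε i ⁻¹' t i := by
        ext ω; simp [Set.mem_pi, hseqdef]
      have hpre2 : shift ⁻¹' ((s : Set ℕ).pi t) = ⋂ i ∈ s, ε (i + 1) ⁻¹' t i := by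
        ext ω; simp [Set.mem_pi, hshiftdef]
      rw [hpre1, hpre2]
      have h1 : Pr (⋂ i ∈ s, ε i ⁻¹' t i) = ∏ i ∈ s, Pr (ε i ⁻¹' t i) :=
        (iIndepFun_iff_measure_inter_preimage_eq_mul.1 hindep) s htm
      -- shifted version
      have h2 : Pr (⋂ i ∈ s, ε (i + 1) ⁻¹' t i)
          = ∏ i ∈ s, Pr (ε (i + 1) ⁻¹' t i) := by
        have hinj : Function.Injective (fun i : ℕ => i + 1) := fun a b h => by simpa using h
        have h3 := (iIndepFun_iff_measure_inter_preimage_eq_mul.1 hindep)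
          (s.image (fun i => i + 1)) (sets := fun j => t (j - 1)) ?_
        · have hset : (⋂ j ∈ s.image (fun i => i + 1), ε j ⁻¹' t (j - 1))
              = ⋂ i ∈ s, ε (i + 1) ⁻¹' t i := by
            ext ω
            simp only [Set.mem_iInter, Finset.mem_image]
            constructor
            · rintro h i hi
              have := h (i + 1) ⟨i, hi, rfl⟩
              simpa using this
            · rintro h j ⟨i, hi, rfl⟩
              simpa using h i hi
          have hprod : (∏ j ∈ s.image (fun i => i + 1), Pr (ε j ⁻¹' t (j - 1)))
              = ∏ i ∈ s, Pr (ε (i + 1) ⁻¹' t i) := by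
            rw [Finset.prod_image (fun a _ b _ h => hinj h)]
            simp
          rw [hset, hprod] at h3
          exact h3
        · rintro j hj
          obtain ⟨i, hi, rfl⟩ := Finset.mem_image.1 hj
          simpa using htm i hi
      rw [h1, h2]
      refine Finset.prod_congr rfl fun i _ => ?_
      rw [← Measure.map_apply (hmeas i) (htm i ‹i ∈ s›),
        ← Measure.map_apply (hmeas (i + 1)) (htm i ‹i ∈ s›), hlaw, hlaw]
    · simp [Measure.map_apply hseqm MeasurableSet.univ,
        Measure.map_apply hshiftm MeasurableSet.univ]
  -- a.e. measurability of G
  have hXmeas : MeasurableSet {x : ℕ → ℝ | ∀ n, x n ∈ Icc (0:ℝ) 1} := by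
    have : {x : ℕ → ℝ | ∀ n, x n ∈ Icc (0:ℝ) 1}
        = ⋂ n, (fun x : ℕ → ℝ => x n) ⁻¹' Icc (0:ℝ) 1 := by
      ext x; simp
    rw [this]
    exact MeasurableSet.iInter fun n => (measurable_pi_apply n) measurableSet_Icc
  have hX1 : ∀ᵐ x ∂Measure.map seq Pr, ∀ n, x n ∈ Icc (0:ℝ) 1 :=
    (ae_map_iff hseqm.aemeasurable hXmeas).2 hE
  have hFm : ∀ N, Measurable (fun x : ℕ → ℝ => ∑ k ∈ Finset.range N,
      (1 - lam₂) * x k * ∏ i ∈ Finset.range k, (lam₁ + (lam₂ - lam₁) * x i)) := by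
    intro N
    refine Finset.measurable_sum _ fun k _ => ?_
    exact (measurable_const.mul (measurable_pi_apply k)).mul
      (Finset.measurable_prod _ fun i _ =>
        measurable_const.add (measurable_const.mul (measurable_pi_apply i)))
  have hGae : AEMeasurable G (Measure.map seq Pr) := by
    refine aemeasurable_of_tendsto_metrizable_ae Filter.atTop
      (fun N => (hFm N).aemeasurable) ?_
    filter_upwards [hX1] with x hx
    exact (aux_summable hlam₁ hlam₂ hx).hasSum.tendsto_sum_nat
  set G' : (ℕ → ℝ) → ℝ := hGae.mk G with hG'def
  have hG'm : Measurable G' := hGae.measurable_mk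
  have hGG' : G =ᵐ[Measure.map seq Pr] G' := hGae.ae_eq_mk
  have hGG'2 : G =ᵐ[Measure.map shift Pr] G' := hμeq ▸ hGG'
  have hSae : (fun ω => G (seq ω)) =ᵐ[Pr] fun ω => G' (seq ω) :=
    ae_of_ae_map hseqm.aemeasurable hGG'
  have hTae : (fun ω => G (shift ω)) =ᵐ[Pr] fun ω => G' (shift ω) :=
    ae_of_ae_map hshiftm.aemeasurable hGG'2
  -- independence of the shifted tail and ε 0
  have hIndep0 : Indep (⨆ i ∈ ({0} : Set ℕ), MeasurableSpace.comap (ε i) inferInstance)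
      (⨆ i ∈ {i : ℕ | i ≠ 0}, MeasurableSpace.comap (ε i) inferInstance) Pr := by
    refine indep_iSup_of_disjoint (fun i => (hmeas i).comap_le) hindep.iIndep ?_
    simp [Set.disjoint_left]
  have hIndepFun_shift : IndepFun (ε 0) shift Pr := by
    rw [IndepFun_iff_Indep]
    refine indep_mono' hIndep0 ?_ ?_
    · exact le_biSup (fun i => MeasurableSpace.comap (ε i) inferInstance) (Set.mem_singleton 0)
    · have hpi : (MeasurableSpace.pi : MeasurableSpace (ℕ → ℝ))
          = ⨆ n, MeasurableSpace.comap (fun x : ℕ → ℝ => x n) inferInstance := rfl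
      rw [hpi, MeasurableSpace.comap_iSup]
      refine iSup_le fun n => ?_
      rw [MeasurableSpace.comap_comp]
      have hcomp : ((fun x : ℕ → ℝ => x n) ∘ shift) = ε (n + 1) := rfl
      rw [hcomp]
      exact le_biSup (fun i => MeasurableSpace.comap (ε i) inferInstance)
        (show (n + 1) ∈ {i : ℕ | i ≠ 0} from Nat.succ_ne_zero n)
  have hIndepT' : IndepFun (G' ∘ shift) (ε 0) Pr := by
    have := (hIndepFun_shift.symm).comp hG'm measurable_id
    simpa [Function.id_comp] using this
  have hT'm : Measurable (G' ∘ shift) := hG'm.comp hshiftm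
  have hprodlaw : Measure.map (fun ω => ((G' ∘ shift) ω, ε 0 ω)) Pr
      = (Measure.map (G' ∘ shift) Pr).prod (Measure.map (ε 0) Pr) :=
    (indepFun_iff_map_prod_eq_prod_map_map hT'm.aemeasurable (hmeas 0).aemeasurable).1 hIndepT'
  -- laws of the two tsum random variables agree
  have hmapS : Measure.map (fun ω => ∑' k, (1 - lam₂) * ε k ω
      * ∏ i ∈ Finset.range k, (lam₁ + (lam₂ - lam₁) * ε i ω)) Pr
      = Measure.map G' (Measure.map seq Pr) := by
    rw [Measure.map_map hG'm hseqm]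
    exact Measure.map_congr hSae
  have hmapT : Measure.map (G' ∘ shift) Pr = Measure.map G' (Measure.map seq Pr) := by
    rw [← Measure.map_map hG'm hshiftm, hμeq]
  -- measurability of the recursion map
  have hFmeas : Measurable (fun q : ℝ × ℝ =>
      q.1 * (lam₁ + (lam₂ - lam₁) * q.2) + (1 - lam₂) * q.2) := by
    fun_prop
  -- final chain
  calc Measure.map (fun q : ℝ × ℝ => q.1 * (lam₁ + (lam₂ - lam₁) * q.2) + (1 - lam₂) * q.2)
        ((Measure.map (fun ω => ∑' k, (1 - lam₂) * ε k ω
          * ∏ i ∈ Finset.range k, (lam₁ + (lam₂ - lam₁) * ε i ω)) Pr).prod ν)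
      = Measure.map (fun q : ℝ × ℝ => q.1 * (lam₁ + (lam₂ - lam₁) * q.2) + (1 - lam₂) * q.2)
        ((Measure.map (G' ∘ shift) Pr).prod (Measure.map (ε 0) Pr)) := by
        rw [hmapS, ← hmapT, hlaw 0]
    _ = Measure.map (fun q : ℝ × ℝ => q.1 * (lam₁ + (lam₂ - lam₁) * q.2) + (1 - lam₂) * q.2)
        (Measure.map (fun ω => ((G' ∘ shift) ω, ε 0 ω)) Pr) := by rw [hprodlaw]
    _ = Measure.map (fun ω => (G' ∘ shift) ω * (lam₁ + (lam₂ - lam₁) * ε 0 ω)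
          + (1 - lam₂) * ε 0 ω) Pr := by
        rw [Measure.map_map hFmeas (hT'm.prodMk (hmeas 0))]
        rfl
    _ = Measure.map (fun ω => ∑' k, (1 - lam₂) * ε k ω
          * ∏ i ∈ Finset.range k, (lam₁ + (lam₂ - lam₁) * ε i ω)) Pr := by
        refine Measure.map_congr ?_
        filter_upwards [hE, hTae] with ω hω hT
        have hshift := aux_shift hlam₁ hlam₂ hω
        have hTval : (G' ∘ shift) ω = ∑' k, (1 - lam₂) * ε (k + 1) ω
            * ∏ i ∈ Finset.range k, (lam₁ + (lam₂ - lam₁) * ε (i + 1) ω) := by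
          have h1 : (G' ∘ shift) ω = G' (shift ω) := rfl
          rw [h1, ← hT]
        rw [hTval]
        exact hshift.symm
end

section
/- Let ν be a probability density on [0,1] and set ν_{nm} = ∫₀¹ ε^n (1-ε)^m ν(ε) dε. Let μ be a probability measure on [0,∞)² all of whose joint moments c_{nm} := ∫ x^n y^m μ(dx dy) are finite and strictly positive, and assume that the invariance identity ∫ P f dμ = ∫ f dμ holds for every monomial f(x,y) = x^n y^m. Then: (i) for all x, y ≥ 0 and n, m ∈ ℕ, P(x^n y^m) = ν_{nm} ∑_{r=0}^{n+m} C(n+m, r) x^r y^{n+m-r}; (ii) the numbers q_{nm;r} := C(n+m, r) ν_{nm} c_{r, n+m-r} / c_{nm} are nonnegative and satisfy ∑_{r=0}^{n+m} q_{nm;r} = 1; (iii) the duality functions D(n,m;x,y) = x^n y^m / c_{nm} satisfy P D(n,m; x,y) = ∑_{r=0}^{n+m} q_{nm;r} D(r, n+m-r; x,y) for all x, y ≥ 0. In particular, the energy redistribution model with s-independent redistribution measure admits a discrete dual Markov jump process on {(n,m) ∈ ℕ² } conserving n+m, with redistribution probabilities q_{nm;r}. -/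
open MeasureTheory Set

/-- duality for the energy redistribution model with `s`-independent
redistribution density `ν`. With `ν_{nm} = ∫₀¹ ε^n(1-ε)^m ν(ε)dε` and
`c_{nm} = ∫ x^n y^m dμ` the joint moments of an invariant measure `μ`:
(i) `P` maps the monomial `x^n y^m` to `ν_{nm} ∑_r C(n+m,r) x^r y^{n+m-r}`;
(ii) `q_{nm;r} = C(n+m,r) ν_{nm} c_{r,n+m-r}/c_{nm}` are nonnegative and sum to one
(transition probabilities of a discrete dual chain conserving `n+m`);
(iii) the duality functions `D(n,m;x,y) = x^n y^m / c_{nm}` satisfy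
`P D(n,m) = ∑_r q_{nm;r} D(r, n+m-r)`. -/
theorem discrete_dual_process_exists
    (ν : ℝ → ℝ) (hνm : Measurable ν)
    (hνnn : ∀ e ∈ Icc (0:ℝ) 1, 0 ≤ ν e)
    (hνprob : ∫ e in (0:ℝ)..1, ν e = 1)
    (νc : ℕ → ℕ → ℝ)
    (hνc : ∀ n m, νc n m = ∫ e in (0:ℝ)..1, e ^ n * (1 - e) ^ m * ν e)
    (μ : Measure (ℝ × ℝ)) [IsProbabilityMeasure μ]
    (hquad : μ (Ici 0 ×ˢ Ici 0) = 1)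
    (c : ℕ → ℕ → ℝ)
    (hc : ∀ n m, c n m = ∫ q, q.1 ^ n * q.2 ^ m ∂μ)
    (hint : ∀ n m, Integrable (fun q : ℝ × ℝ => q.1 ^ n * q.2 ^ m) μ)
    (hcpos : ∀ n m, 0 < c n m)
    (hinv : ∀ n m : ℕ,
      ∫ q, (∫ e in (0:ℝ)..1,
        (e * (q.1 + q.2)) ^ n * ((1 - e) * (q.1 + q.2)) ^ m * ν e) ∂μ = c n m) :
    (∀ x y : ℝ, 0 ≤ x → 0 ≤ y → ∀ n m : ℕ,
      ∫ e in (0:ℝ)..1, (e * (x + y)) ^ n * ((1 - e) * (x + y)) ^ m * ν e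
        = νc n m * ∑ r ∈ Finset.range (n + m + 1),
            ((n + m).choose r : ℝ) * x ^ r * y ^ (n + m - r)) ∧
    (∀ n m : ℕ,
      (∀ r ∈ Finset.range (n + m + 1),
        0 ≤ ((n + m).choose r : ℝ) * νc n m * c r (n + m - r) / c n m) ∧
      ∑ r ∈ Finset.range (n + m + 1),
        ((n + m).choose r : ℝ) * νc n m * c r (n + m - r) / c n m = 1) ∧
    (∀ x y : ℝ, 0 ≤ x → 0 ≤ y → ∀ n m : ℕ,
      ∫ e in (0:ℝ)..1,
          ((e * (x + y)) ^ n * ((1 - e) * (x + y)) ^ m / c n m) * ν e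
        = ∑ r ∈ Finset.range (n + m + 1),
            (((n + m).choose r : ℝ) * νc n m * c r (n + m - r) / c n m)
              * (x ^ r * y ^ (n + m - r) / c r (n + m - r))) := by
  have key : ∀ (n m : ℕ) (x y : ℝ),
      ∫ e in (0:ℝ)..1, (e * (x + y)) ^ n * ((1 - e) * (x + y)) ^ m * ν e
        = νc n m * (x + y) ^ (n + m) := by
    intro n m x y
    have h : ∀ e : ℝ, (e * (x + y)) ^ n * ((1 - e) * (x + y)) ^ m * ν e
        = (e ^ n * (1 - e) ^ m * ν e) * (x + y) ^ (n + m) := by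
      intro e; rw [mul_pow, mul_pow, pow_add]; ring
    simp_rw [h]
    rw [intervalIntegral.integral_mul_const, hνc, mul_comm]
  have hbin : ∀ (k : ℕ) (x y : ℝ),
      ∑ r ∈ Finset.range (k + 1), (k.choose r : ℝ) * x ^ r * y ^ (k - r)
        = (x + y) ^ k := by
    intro k x y
    rw [add_pow]
    exact Finset.sum_congr rfl fun r _ => by ring
  have hνcnn : ∀ n m, 0 ≤ νc n m := by
    intro n m
    rw [hνc]
    apply intervalIntegral.integral_nonneg (by norm_num)
    intro e he
    exact mul_nonneg (mul_nonneg (pow_nonneg he.1 _)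
      (pow_nonneg (by linarith [he.2]) _)) (hνnn e he)
  have hsum : ∀ n m : ℕ, νc n m *
      ∑ r ∈ Finset.range (n + m + 1),
        ((n + m).choose r : ℝ) * c r (n + m - r) = c n m := by
    intro n m
    have h1 := hinv n m
    have h2 : ∀ q : ℝ × ℝ,
        (∫ e in (0:ℝ)..1, (e*(q.1+q.2))^n*((1-e)*(q.1+q.2))^m*ν e)
        = ∑ r ∈ Finset.range (n+m+1),
            νc n m * ((n+m).choose r : ℝ) * (q.1^r * q.2^(n+m-r)) := by
      intro q
      rw [key n m q.1 q.2, ← hbin (n+m) q.1 q.2, Finset.mul_sum]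
      exact Finset.sum_congr rfl fun r _ => by ring
    simp_rw [h2] at h1
    rw [integral_finset_sum _ (fun r _ => ((hint r (n+m-r)).const_mul _))] at h1
    simp_rw [integral_const_mul, ← hc] at h1
    rw [Finset.mul_sum]
    simp_rw [← mul_assoc]
    exact h1
  refine ⟨?_, ?_, ?_⟩
  · intro x y hx hy n m
    rw [key n m x y, hbin (n+m) x y]
  · intro n m
    constructor
    · intro r _
      exact div_nonneg (mul_nonneg (mul_nonneg (by positivity) (hνcnn n m))
        (hcpos r (n+m-r)).le) (hcpos n m).le
    · rw [← Finset.sum_div, div_eq_one_iff_eq (hcpos n m).ne']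
      rw [← hsum n m, Finset.mul_sum]
      exact Finset.sum_congr rfl fun r _ => by ring
  · intro x y hx hy n m
    have h : ∀ e : ℝ, ((e*(x+y))^n * ((1-e)*(x+y))^m / c n m) * ν e
        = ((e*(x+y))^n * ((1-e)*(x+y))^m * ν e) * (c n m)⁻¹ := by
      intro e; ring
    simp_rw [h]
    rw [intervalIntegral.integral_mul_const, key n m x y,
      ← hbin (n+m) x y, Finset.mul_sum, Finset.sum_mul]
    exact Finset.sum_congr rfl fun r _ => by
      have h1 := (hcpos r (n+m-r)).ne'
      have h2 := (hcpos n m).ne'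
      field_simp
end

section
/- For all n, m ∈ ℕ and all x, y ≥ 0, ∫₀¹ (ε(x+y))^n ((1-ε)(x+y))^m dε = (n! m!/(n+m+1)!) (x+y)^{n+m}, and consequently, with the duality functions D(n,m;x,y) = x^n y^m/(n! m!), the one-step operator of the KMP model (uniform redistribution measure) satisfies P D(n,m; x,y) = (1/(n+m+1)) ∑_{r=0}^{n+m} D(r, n+m-r; x,y): the dual particles are redistributed uniformly over the n+m+1 possible splittings. -/
open MeasureTheory

lemma kmp_prod_fact (n m : ℕ) :
    n.factorial * ∏ j ∈ Finset.range (m + 1), (n + 1 + j) = (n + m + 1).factorial := by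
  induction m with
  | zero => simp [Nat.factorial_succ, Nat.mul_comm]
  | succ m ih =>
      rw [Finset.prod_range_succ, ← Nat.mul_assoc, ih]
      have h' : n + 1 + (m + 1) = n + m + 1 + 1 := by ring
      have h'' : n + (m + 1) + 1 = n + m + 1 + 1 := by ring
      rw [h', h'']
      simp [Nat.factorial_succ, Nat.mul_comm]

lemma kmp_beta_nat (n m : ℕ) :
    ∫ e in (0:ℝ)..1, e ^ n * (1 - e) ^ m
      = (n.factorial * m.factorial : ℝ) / ((n + m + 1).factorial : ℝ) := by
  have hu : 0 < Complex.re ((n : ℂ) + 1) := by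
    simp only [Complex.add_re, Complex.natCast_re, Complex.one_re]
    positivity
  have h := Complex.betaIntegral_eval_nat_add_one_right hu m
  rw [Complex.betaIntegral] at h
  have heq : ∀ e : ℝ, ((e : ℂ)) ^ ((n : ℂ) + 1 - 1) * (1 - (e : ℂ)) ^ ((m : ℂ) + 1 - 1)
      = ((e ^ n * (1 - e) ^ m : ℝ) : ℂ) := by
    intro e
    rw [add_sub_cancel_right, add_sub_cancel_right, Complex.cpow_natCast,
      Complex.cpow_natCast]
    push_cast
    ring
  rw [intervalIntegral.integral_congr (fun e _ => heq e)] at h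
  rw [intervalIntegral.integral_ofReal] at h
  have hprod : ∏ j ∈ Finset.range (m + 1), ((n : ℂ) + 1 + (j : ℂ))
      = ((∏ j ∈ Finset.range (m + 1), (n + 1 + j) : ℕ) : ℂ) := by
    push_cast
    rfl
  rw [hprod] at h
  have key : ((∫ e in (0:ℝ)..1, e ^ n * (1 - e) ^ m : ℝ) : ℂ)
      = ((m.factorial : ℝ) : ℂ) / (((∏ j ∈ Finset.range (m + 1), (n + 1 + j) : ℕ) : ℝ) : ℂ) := by
    rw [h]; push_cast; ring
  have key2 : (∫ e in (0:ℝ)..1, e ^ n * (1 - e) ^ m)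
      = (m.factorial : ℝ) / ((∏ j ∈ Finset.range (m + 1), (n + 1 + j) : ℕ) : ℝ) := by
    exact_mod_cast key
  rw [key2]
  have hf : ((n + m + 1).factorial : ℝ)
      = (n.factorial : ℝ) * ((∏ j ∈ Finset.range (m + 1), (n + 1 + j) : ℕ) : ℝ) := by
    rw [← kmp_prod_fact n m]; push_cast; ring
  rw [hf]
  have h1 : (n.factorial : ℝ) ≠ 0 := Nat.cast_ne_zero.mpr n.factorial_ne_zero
  have h2 : ((∏ j ∈ Finset.range (m + 1), (n + 1 + j) : ℕ) : ℝ) ≠ 0 := by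
    have : 0 < ∏ j ∈ Finset.range (m + 1), (n + 1 + j) :=
      Finset.prod_pos fun j _ => by omega
    exact_mod_cast this.ne'
  field_simp

/-- for the KMP model (uniform redistribution measure),
`∫₀¹ (ε(x+y))^n ((1-ε)(x+y))^m dε = (n!m!/(n+m+1)!)(x+y)^{n+m}`, and with duality
functions `D(n,m;x,y) = x^n y^m/(n!m!)` the one-step operator satisfies
`P D(n,m;x,y) = (1/(n+m+1)) ∑_{r=0}^{n+m} D(r,n+m-r;x,y)`: the dual particles are
redistributed uniformly over the `n+m+1` possible splittings. -/
theorem kmp_duality (n m : ℕ) (x y : ℝ) (hx : 0 ≤ x) (hy : 0 ≤ y) :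
    (∫ e in (0:ℝ)..1, (e * (x + y)) ^ n * ((1 - e) * (x + y)) ^ m
      = ((n.factorial * m.factorial : ℝ) / ((n + m + 1).factorial : ℝ))
          * (x + y) ^ (n + m)) ∧
    (∫ e in (0:ℝ)..1,
        (e * (x + y)) ^ n * ((1 - e) * (x + y)) ^ m
          / ((n.factorial : ℝ) * (m.factorial : ℝ))
      = (1 / ((n : ℝ) + (m : ℝ) + 1))
          * ∑ r ∈ Finset.range (n + m + 1),
              x ^ r * y ^ (n + m - r)
                / ((r.factorial : ℝ) * ((n + m - r).factorial : ℝ))) := by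
  have h1 : ∫ e in (0:ℝ)..1, (e * (x + y)) ^ n * ((1 - e) * (x + y)) ^ m
      = ((n.factorial * m.factorial : ℝ) / ((n + m + 1).factorial : ℝ)) * (x + y) ^ (n + m) := by
    have : ∀ e : ℝ, (e * (x + y)) ^ n * ((1 - e) * (x + y)) ^ m
        = (e ^ n * (1 - e) ^ m) * (x + y) ^ (n + m) := by
      intro e; rw [mul_pow, mul_pow, pow_add]; ring
    rw [intervalIntegral.integral_congr (fun e _ => this e),
      intervalIntegral.integral_mul_const, kmp_beta_nat]
  refine ⟨h1, ?_⟩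
  have hfn : (n.factorial : ℝ) ≠ 0 := Nat.cast_ne_zero.mpr n.factorial_ne_zero
  have hfm : (m.factorial : ℝ) ≠ 0 := Nat.cast_ne_zero.mpr m.factorial_ne_zero
  have hfnm : ((n + m).factorial : ℝ) ≠ 0 := Nat.cast_ne_zero.mpr (n + m).factorial_ne_zero
  have h2 : ∫ e in (0:ℝ)..1,
      (e * (x + y)) ^ n * ((1 - e) * (x + y)) ^ m / ((n.factorial : ℝ) * (m.factorial : ℝ))
      = (∫ e in (0:ℝ)..1, (e * (x + y)) ^ n * ((1 - e) * (x + y)) ^ m)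
        / ((n.factorial : ℝ) * (m.factorial : ℝ)) := by
    rw [intervalIntegral.integral_div]
  rw [h2, h1]
  have hsum : ∑ r ∈ Finset.range (n + m + 1),
      x ^ r * y ^ (n + m - r) / ((r.factorial : ℝ) * ((n + m - r).factorial : ℝ))
      = (x + y) ^ (n + m) / ((n + m).factorial : ℝ) := by
    rw [add_pow, Finset.sum_div]
    refine Finset.sum_congr rfl fun r hr => ?_
    have hrle : r ≤ n + m := Nat.lt_succ_iff.mp (Finset.mem_range.mp hr)
    rw [Nat.cast_choose ℝ hrle]
    have h3 : (r.factorial : ℝ) ≠ 0 := Nat.cast_ne_zero.mpr r.factorial_ne_zero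
    have h4 : ((n + m - r).factorial : ℝ) ≠ 0 := Nat.cast_ne_zero.mpr (n + m - r).factorial_ne_zero
    field_simp
  rw [hsum]
  have hstep : ((n + m + 1).factorial : ℝ) = ((n : ℝ) + m + 1) * ((n + m).factorial : ℝ) := by
    rw [Nat.factorial_succ]; push_cast; ring
  rw [hstep]
  have h5 : (n : ℝ) + m + 1 ≠ 0 := by positivity
  field_simp
end
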